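/- arXiv:1112.2638 — 4 statements merged into one kernel-verified Lean document; each statement's English description precedes it below -/
import Mathlib

section
/- Reduction principle for general multiple stopping: for every 1 ≤ k ≤ L, every chain 0 ≤ j_1 ≤ … ≤ j_{k−1} ≤ ∂ and every r ≥ j_{k−1}, the Snell envelope satisfies Y*_r^{L−k+1, j_1,…,j_{k−1}} = ess sup over stopping times τ with r ≤ τ ≤ ∂ of E[ Y*_τ^{L−k, j_1,…,j_{k−1},τ} | F_r ] almost surely. -/
open MeasureTheory

noncomputable section

variable {Ω : Type*} [m0 : MeasurableSpace Ω]

/-- `Y` is an essential supremum of the family `S` of random variables w.r.t. `μ`: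
it is an a.e. upper bound of `S` which lies a.e. below any other a.e. upper bound. -/
def IsEssSupFamily (μ : Measure Ω) (S : Set (Ω → ℝ)) (Y : Ω → ℝ) : Prop :=
  (∀ f ∈ S, f ≤ᵐ[μ] Y) ∧ ∀ Z : Ω → ℝ, (∀ f ∈ S, f ≤ᵐ[μ] Z) → Y ≤ᵐ[μ] Z

/-- The non-decreasing chain `j 1 ≤ j 2 ≤ ... ≤ j m ≤ d`. -/
def DetChain (m d : ℕ) (j : ℕ → ℕ) : Prop :=
  (∀ p, 1 ≤ p → p < m → j p ≤ j (p + 1)) ∧ ∀ p, 1 ≤ p → p ≤ m → j p ≤ d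

/-- The family of conditional payoffs whose essential supremum is the Snell envelope
`Y*_r^{L-k+1, j 1, ..., j (k-1)}` of the general multiple stopping problem: one
conditional expectation `E[X_{j 1, ..., j (k-1), τ k, ..., τ L} | ℱ r]` for every chain of
stopping times `r ≤ τ k ≤ ... ≤ τ L ≤ T + 1`, where the first `k - 1` exercise dates are
frozen at `j 1 ≤ ... ≤ j (k-1)`. -/
def snellFamily (T L : ℕ) (μ : Measure Ω) (ℱ : Filtration ℕ m0)
    (X : (ℕ → ℕ) → Ω → ℝ) (k r : ℕ) (j : ℕ → ℕ) : Set (Ω → ℝ) :=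
  { g | ∃ τ : ℕ → Ω → ℕ,
      (∀ p, IsStoppingTime ℱ (fun ω => ((τ p ω : ℕ) : WithTop ℕ))) ∧
      (∀ ω, r ≤ τ k ω) ∧
      (∀ p, k ≤ p → p < L → ∀ ω, τ p ω ≤ τ (p + 1) ω) ∧
      (∀ ω, τ L ω ≤ T + 1) ∧
      g = μ[(fun ω => X (fun p => if p < k then j p else τ p ω) ω)|ℱ r] }


section Helpers

open Filter Set

variable {μ : Measure Ω}

namespace RedAuxB

lemma abs_condexp_le_of_abs_le {m : MeasurableSpace Ω} {f M : Ω → ℝ}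
    (hf : Integrable f μ) (hM : Integrable M μ) (h : ∀ ω, |f ω| ≤ M ω) :
    ∀ᵐ ω ∂μ, |(μ[f|m]) ω| ≤ (μ[M|m]) ω := by
  have h1 : μ[f|m] ≤ᵐ[μ] μ[M|m] :=
    condExp_mono hf hM (ae_of_all _ fun ω => (le_abs_self _).trans (h ω))
  have h2 : μ[-M|m] ≤ᵐ[μ] μ[f|m] :=
    condExp_mono hM.neg hf (ae_of_all _ fun ω => neg_le.mp ((neg_le_abs _).trans (h ω)))
  filter_upwards [h1, h2, condExp_neg (μ := μ) (m := m) M] with ω hω1 hω2 hω3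
  rw [abs_le]
  refine ⟨?_, hω1⟩
  have := hω2
  rw [hω3] at this
  simpa using this

lemma condexp_restrict_congr {m : MeasurableSpace Ω} (hm : m ≤ m0)
    {s : Set Ω} (hs : MeasurableSet[m] s) {f g : Ω → ℝ}
    (hfi : Integrable f μ) (hgi : Integrable g μ) (hfg : ∀ ω ∈ s, f ω = g ω) :
    μ[f|m] =ᵐ[μ.restrict s] μ[g|m] := by
  by_cases hσ : SigmaFinite (μ.trim hm)
  swap
  · rw [condExp_of_not_sigmaFinite hm hσ, condExp_of_not_sigmaFinite hm hσ]
  have h1 : μ[s.indicator f|m] =ᵐ[μ] s.indicator (μ[f|m]) := condExp_indicator hfi hs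
  have h2 : μ[s.indicator g|m] =ᵐ[μ] s.indicator (μ[g|m]) := condExp_indicator hgi hs
  have h3 : s.indicator f = s.indicator g := by
    funext ω
    by_cases hω : ω ∈ s
    · rw [Set.indicator_of_mem hω, Set.indicator_of_mem hω, hfg ω hω]
    · rw [Set.indicator_of_notMem hω, Set.indicator_of_notMem hω]
  have h4 : s.indicator (μ[f|m]) =ᵐ[μ] s.indicator (μ[g|m]) :=
    h1.symm.trans (h3 ▸ h2)
  rw [Filter.EventuallyEq, ae_restrict_iff' (hm s hs)]
  filter_upwards [h4] with ω hω hωs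
  rwa [Set.indicator_of_mem hωs, Set.indicator_of_mem hωs] at hω

lemma ae_of_ae_restrict_finset (t : Finset ℕ) {A : ℕ → Set Ω}
    (hA : ∀ i ∈ t, MeasurableSet (A i))
    (hcov : ∀ ω, ∃ i ∈ t, ω ∈ A i) {P : Ω → Prop}
    (h : ∀ i ∈ t, ∀ᵐ ω ∂μ.restrict (A i), P ω) : ∀ᵐ ω ∂μ, P ω := by
  rw [ae_iff]
  have h0 : {ω | ¬ P ω} ⊆ ⋃ i ∈ t, A i ∩ {ω | ¬ P ω} := by
    intro ω hω
    obtain ⟨i, hi, hAi⟩ := hcov ω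
    exact Set.mem_biUnion hi ⟨hAi, hω⟩
  refine le_antisymm ?_ (by simp)
  refine le_trans (measure_mono h0) ?_
  refine le_trans (measure_biUnion_finset_le t _) ?_
  have hz : ∀ i ∈ t, μ (A i ∩ {ω | ¬ P ω}) = 0 := by
    intro i hi
    have := ae_iff.mp (h i hi)
    rwa [Measure.restrict_apply' (hA i hi), Set.inter_comm] at this
  rw [Finset.sum_congr rfl hz]
  simp

lemma nst_meas_eq {ℱ : Filtration ℕ m0} {τ : Ω → ℕ}
    (hτ : IsStoppingTime ℱ (fun ω => ((τ ω : ℕ) : WithTop ℕ))) (t : ℕ) :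
    MeasurableSet[ℱ t] {ω | τ ω = t} := by
  have h := hτ.measurableSet_eq_of_countable t
  simpa using h

lemma nst_meas_le {ℱ : Filtration ℕ m0} {τ : Ω → ℕ}
    (hτ : IsStoppingTime ℱ (fun ω => ((τ ω : ℕ) : WithTop ℕ))) (t : ℕ) :
    MeasurableSet[ℱ t] {ω | τ ω ≤ t} := by
  have h := hτ t
  simpa using h

lemma nst_condexp [IsFiniteMeasure μ] {ℱ : Filtration ℕ m0} {τ : Ω → ℕ} {f : Ω → ℝ}
    (hτ : IsStoppingTime ℱ (fun ω => ((τ ω : ℕ) : WithTop ℕ))) (t : ℕ) :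
    μ[f|hτ.measurableSpace] =ᵐ[μ.restrict {ω | τ ω = t}] μ[f|ℱ t] := by
  have h := condExp_stopping_time_ae_eq_restrict_eq_of_countable (μ := μ) (f := f) hτ t
  have hs : {ω | τ ω = t} = {ω | ((τ ω : ℕ) : WithTop ℕ) = ((t : ℕ) : WithTop ℕ)} := by
    ext ω; simp
  rw [hs]
  exact h

lemma pasted_isStoppingTime {ℱ : Filtration ℕ m0} {τ : Ω → ℕ} (hτ : IsStoppingTime ℱ (fun ω => ((τ ω : ℕ) : WithTop ℕ)))
    {r d : ℕ} (hτmem : ∀ ω, r ≤ τ ω ∧ τ ω ≤ d) {σ : ℕ → Ω → ℕ}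
    (hσ : ∀ t, r ≤ t → t ≤ d → IsStoppingTime ℱ (fun ω => ((σ t ω : ℕ) : WithTop ℕ)))
    (hge : ∀ t, r ≤ t → t ≤ d → ∀ ω, t ≤ σ t ω) :
    IsStoppingTime ℱ (fun ω => ((σ (τ ω) ω : ℕ) : WithTop ℕ)) := by
  intro s
  suffices hs : MeasurableSet[ℱ s] {ω | σ (τ ω) ω ≤ s} by simpa using hs
  have hset : {ω | σ (τ ω) ω ≤ s} =
      ⋃ t ∈ Finset.Icc r (min s d), ({ω | τ ω = t} ∩ {ω | σ t ω ≤ s}) := by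
    ext ω
    simp only [Set.mem_setOf_eq, Set.mem_iUnion, Finset.mem_Icc, Set.mem_inter_iff,
      exists_prop]
    constructor
    · intro hle
      have h1 := (hτmem ω).1
      have h2 := (hτmem ω).2
      have h3 := hge (τ ω) h1 h2 ω
      exact ⟨τ ω, ⟨h1, by omega⟩, rfl, hle⟩
    · rintro ⟨t, _, rfl, hle⟩
      exact hle
  rw [hset]
  refine Finset.measurableSet_biUnion _ fun t ht => ?_
  rw [Finset.mem_Icc] at ht
  exact MeasurableSet.inter
    (ℱ.mono (show t ≤ s by omega) _ (nst_meas_eq hτ t)) (nst_meas_le (hσ t ht.1 (by omega)) s)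

lemma paste_eq {β : Type*} [AddCommMonoid β] (u : ℕ → Ω → β) (τ : Ω → ℕ) (r d : ℕ)
    (hτ : ∀ ω, r ≤ τ ω ∧ τ ω ≤ d) :
    (fun ω => u (τ ω) ω) =
      fun ω => ∑ t ∈ Finset.Icc r d, Set.indicator {ω' | τ ω' = t} (u t) ω := by
  funext ω
  rw [Finset.sum_eq_single_of_mem (τ ω) (Finset.mem_Icc.2 ⟨(hτ ω).1, (hτ ω).2⟩)]
  · rw [Set.indicator_of_mem (show ω ∈ {ω' | τ ω' = τ ω} from rfl)]
  · intro t _ hne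
    have hnm : ω ∉ {ω' | τ ω' = t} := fun h => hne (Eq.symm h)
    exact Set.indicator_of_notMem hnm _

end RedAuxB

namespace RedAux

open RedAuxB

lemma bddA (g : ℕ → Ω → ℝ) (ω : Ω) :
    BddAbove (Set.range fun n => Real.arctan (g n ω)) := by
  refine ⟨Real.pi / 2, ?_⟩
  rintro x ⟨n, rfl⟩
  exact (Real.arctan_lt_pi_div_two _).le

lemma absT_le (g : ℕ → Ω → ℝ) (ω : Ω) :
    |⨆ n, Real.arctan (g n ω)| ≤ Real.pi / 2 := by
  rw [abs_le]
  constructor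
  · refine le_trans (Real.neg_pi_div_two_lt_arctan (g 0 ω)).le ?_
    exact le_ciSup (bddA g ω) 0
  · exact ciSup_le fun n => (Real.arctan_lt_pi_div_two _).le

lemma measT {g : ℕ → Ω → ℝ} (hg : ∀ n, StronglyMeasurable (g n)) :
    Measurable fun ω => ⨆ n, Real.arctan (g n ω) :=
  Measurable.iSup fun n => Real.measurable_arctan.comp (hg n).measurable

lemma intT [IsFiniteMeasure μ] {g : ℕ → Ω → ℝ} (hg : ∀ n, StronglyMeasurable (g n)) :
    Integrable (fun ω => ⨆ n, Real.arctan (g n ω)) μ := by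
  refine Integrable.mono' (integrable_const (Real.pi / 2)) (measT hg).aestronglyMeasurable ?_
  exact ae_of_all _ fun ω => by simpa [Real.norm_eq_abs] using absT_le g ω

/-- Core lemma: a directed family of measurable functions admitting an essential supremum `Y`
contains a sequence converging a.e. to `Y`. -/
lemma exists_seq_tendsto_of_isEssSupFamily [IsFiniteMeasure μ] {S : Set (Ω → ℝ)} {Y : Ω → ℝ}
    (hne : S.Nonempty) (hmeas : ∀ f ∈ S, StronglyMeasurable f)
    (hdir : ∀ f ∈ S, ∀ g ∈ S, ∃ h ∈ S, f ≤ᵐ[μ] h ∧ g ≤ᵐ[μ] h)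
    (hY : IsEssSupFamily μ S Y) :
    ∃ e : ℕ → Ω → ℝ, (∀ n, e n ∈ S) ∧
      ∀ᵐ ω ∂μ, Tendsto (fun n => e n ω) atTop (nhds (Y ω)) := by
  classical
  set T : (ℕ → Ω → ℝ) → Ω → ℝ := fun g ω => ⨆ n, Real.arctan (g n ω) with hT
  set R : Set ℝ := {x : ℝ | ∃ g : ℕ → Ω → ℝ, (∀ n, g n ∈ S) ∧ x = ∫ ω, T g ω ∂μ} with hR
  obtain ⟨f₀, hf₀⟩ := hne
  have hRne : R.Nonempty := ⟨_, fun _ => f₀, fun _ => hf₀, rfl⟩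
  have hRbdd : BddAbove R := by
    refine ⟨Real.pi / 2 * (μ Set.univ).toReal, ?_⟩
    rintro x ⟨g, hg, rfl⟩
    calc ∫ ω, T g ω ∂μ ≤ ∫ _ω, Real.pi / 2 ∂μ := by
          refine integral_mono (intT fun n => hmeas _ (hg n)) (integrable_const _) ?_
          intro ω
          exact ciSup_le fun n => (Real.arctan_lt_pi_div_two _).le
      _ = Real.pi / 2 * (μ Set.univ).toReal := by simp [mul_comm, measureReal_def]
  set c : ℝ := sSup R with hc
  have hsel : ∀ m : ℕ, ∃ g : ℕ → Ω → ℝ, (∀ n, g n ∈ S) ∧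
      c - 1 / (m + 1) < ∫ ω, T g ω ∂μ := by
    intro m
    have hlt : c - 1 / (m + 1) < c := by
      have : (0:ℝ) < 1 / (m + 1) := by positivity
      linarith
    obtain ⟨x, hxR, hx⟩ := exists_lt_of_lt_csSup hRne hlt
    obtain ⟨g, hg, rfl⟩ := hxR
    exact ⟨g, hg, hx⟩
  choose gs hgsS hgslt using hsel
  set G : ℕ → Ω → ℝ := fun n => gs (Nat.unpair n).1 (Nat.unpair n).2 with hG
  have hGS : ∀ n, G n ∈ S := fun n => hgsS _ _
  set A : Ω → ℝ := T G with hA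
  have hAint : Integrable A μ := intT fun n => hmeas _ (hGS n)
  have hAle : ∀ m : ℕ, ∫ ω, T (gs m) ω ∂μ ≤ ∫ ω, A ω ∂μ := by
    intro m
    refine integral_mono (intT fun n => hmeas _ (hgsS m n)) hAint fun ω => ?_
    refine ciSup_le fun n => ?_
    have : Real.arctan (gs m n ω) = Real.arctan (G (Nat.pair m n) ω) := by
      simp [hG, Nat.unpair_pair]
    rw [this]
    exact le_ciSup (bddA G ω) (Nat.pair m n)
  have hcA : ∫ ω, A ω ∂μ = c := by
    have h1 : ∫ ω, A ω ∂μ ≤ c := le_csSup hRbdd ⟨G, hGS, rfl⟩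
    have h2 : c ≤ ∫ ω, A ω ∂μ := by
      by_contra h
      push_neg at h
      obtain ⟨m, hm⟩ := exists_nat_one_div_lt (show (0:ℝ) < c - ∫ ω, A ω ∂μ by linarith)
      have := (hgslt m).trans_le (hAle m)
      have : (1:ℝ) / (m + 1) > c - ∫ ω, A ω ∂μ := by linarith
      linarith
    linarith
  -- `A` a.e. dominates `arctan ∘ f` for every `f ∈ S`
  have hub : ∀ f ∈ S, ∀ᵐ ω ∂μ, Real.arctan (f ω) ≤ A ω := by
    intro f hf
    set g' : ℕ → Ω → ℝ := fun n => Nat.rec f (fun m _ => G m) n with hg'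
    have hg'S : ∀ n, g' n ∈ S := by
      intro n; cases n with
      | zero => exact hf
      | succ m => exact hGS m
    have hAA' : ∀ ω, A ω ≤ T g' ω := by
      intro ω
      refine ciSup_le fun n => ?_
      exact le_ciSup (bddA g' ω) (n + 1)
    have hint' : Integrable (T g') μ := intT fun n => hmeas _ (hg'S n)
    have hA'le : ∫ ω, T g' ω ∂μ ≤ c := le_csSup hRbdd ⟨g', hg'S, rfl⟩
    have hzero : (fun ω => T g' ω - A ω) =ᵐ[μ] 0 := by
      refine (integral_eq_zero_iff_of_nonneg (fun ω => sub_nonneg.2 (hAA' ω))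
        (hint'.sub hAint)).mp ?_
      have := integral_sub hint' hAint
      have h1 : ∫ ω, (T g' ω - A ω) ∂μ = ∫ ω, T g' ω ∂μ - ∫ ω, A ω ∂μ := this
      rw [h1, hcA]
      have h2 : (0:ℝ) ≤ ∫ ω, T g' ω ∂μ - c := by
        have := integral_mono hAint hint' hAA'
        rw [hcA] at this; linarith
      linarith
    filter_upwards [hzero] with ω hω
    have h0 : Real.arctan (f ω) ≤ T g' ω := le_ciSup (bddA g' ω) 0
    have : T g' ω = A ω := by
      have := hω
      simp only [Pi.zero_apply] at this
      linarith
    linarith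
  have hYA : ∀ᵐ ω ∂μ, A ω ≤ Real.arctan (Y ω) := by
    filter_upwards [ae_all_iff.2 fun n => hY.1 (G n) (hGS n)] with ω hω
    exact ciSup_le fun n => Real.arctan_strictMono.monotone (hω n)
  have hAlb : ∀ ω, -(Real.pi / 2) < A ω :=
    fun ω => lt_of_lt_of_le (Real.neg_pi_div_two_lt_arctan _) (le_ciSup (bddA G ω) 0)
  set Y₀ : Ω → ℝ := fun ω => Real.tan (A ω) with hY₀
  have hmtan := Real.strictMonoOn_tan.monotoneOn
  have hfY₀ : ∀ f ∈ S, f ≤ᵐ[μ] Y₀ := by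
    intro f hf
    filter_upwards [hub f hf, hYA] with ω h1 h2
    have hmem1 : Real.arctan (f ω) ∈ Set.Ioo (-(Real.pi / 2)) (Real.pi / 2) :=
      Real.arctan_mem_Ioo _
    have hmem2 : A ω ∈ Set.Ioo (-(Real.pi / 2)) (Real.pi / 2) :=
      ⟨hAlb ω, h2.trans_lt (Real.arctan_lt_pi_div_two _)⟩
    have := hmtan hmem1 hmem2 h1
    rwa [Real.tan_arctan] at this
  have hYY₀ : Y ≤ᵐ[μ] Y₀ := hY.2 Y₀ hfY₀
  have hY₀Y : Y₀ ≤ᵐ[μ] Y := by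
    filter_upwards [hYA] with ω h2
    have hmem2 : A ω ∈ Set.Ioo (-(Real.pi / 2)) (Real.pi / 2) :=
      ⟨hAlb ω, h2.trans_lt (Real.arctan_lt_pi_div_two _)⟩
    have := hmtan hmem2 (Real.arctan_mem_Ioo _) h2
    rwa [Real.tan_arctan] at this
  have hYeq : Y =ᵐ[μ] Y₀ := hYY₀.antisymm hY₀Y
  -- monotone sequence
  choose! D hD using hdir
  set e : ℕ → Ω → ℝ := fun n => Nat.rec (G 0) (fun m em => D em (G (m + 1))) n with he
  have heS : ∀ n, e n ∈ S := by
    intro n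
    induction n with
    | zero => exact hGS 0
    | succ m ih => exact (hD _ ih _ (hGS (m + 1))).1
  have hmono : ∀ n, e n ≤ᵐ[μ] e (n + 1) := fun n => (hD _ (heS n) _ (hGS (n + 1))).2.1
  have hdom : ∀ n, G n ≤ᵐ[μ] e n := by
    intro n
    cases n with
    | zero => exact Filter.EventuallyLE.refl _ _
    | succ m => exact (hD _ (heS m) _ (hGS (m + 1))).2.2
  have heY : ∀ n, e n ≤ᵐ[μ] Y := fun n => hY.1 _ (heS n)
  refine ⟨e, heS, ?_⟩
  filter_upwards [ae_all_iff.2 hmono, ae_all_iff.2 hdom, ae_all_iff.2 heY, hYeq, hYA]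
    with ω h1 h2 h3 h4 h5
  have hmem : A ω ∈ Set.Ioo (-(Real.pi / 2)) (Real.pi / 2) :=
    ⟨hAlb ω, h5.trans_lt (Real.arctan_lt_pi_div_two _)⟩
  set a : ℕ → ℝ := fun n => Real.arctan (e n ω) with ha
  have hamono : Monotone a :=
    fun _ _ h => Real.arctan_strictMono.monotone (monotone_nat_of_le_succ h1 h)
  have habdd : BddAbove (Set.range a) := by
    refine ⟨Real.pi / 2, ?_⟩
    rintro x ⟨n, rfl⟩
    exact (Real.arctan_lt_pi_div_two _).le
  have haleA : ∀ n, a n ≤ A ω := by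
    intro n
    have h6 : e n ω ≤ Real.tan (A ω) := by
      have h7 := h3 n
      rw [h4] at h7
      exact h7
    have := Real.arctan_strictMono.monotone h6
    rwa [Real.arctan_tan hmem.1 hmem.2] at this
  have hAlea : A ω ≤ ⨆ n, a n := by
    refine ciSup_le fun n => ?_
    exact (Real.arctan_strictMono.monotone (h2 n)).trans (le_ciSup habdd n)
  have hsup : (⨆ n, a n) = A ω := le_antisymm (ciSup_le haleA) hAlea
  have htendsto : Tendsto a atTop (nhds (A ω)) := by
    rw [← hsup]
    exact tendsto_atTop_ciSup hamono habdd
  have hcont : ContinuousAt Real.tan (A ω) :=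
    Real.continuousAt_tan.2 (Real.cos_pos_of_mem_Ioo hmem).ne'
  have := (hcont.tendsto.comp htendsto)
  have heq : (fun n => Real.tan (a n)) = fun n => e n ω := by
    funext n; exact Real.tan_arctan _
  rw [show Function.comp Real.tan a = fun n => Real.tan (a n) from rfl, heq] at this
  rw [h4]
  exact this


lemma chain_mono {i : ℕ → ℕ} {m L : ℕ} (h : ∀ p, m ≤ p → p < L → i p ≤ i (p + 1)) :
    ∀ a b, m ≤ a → a ≤ b → b ≤ L → i a ≤ i b := by
  intro a b ha hab hbL
  induction b with
  | zero =>
    have : a = 0 := by omega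
    rw [this]
  | succ n ih =>
    rcases Nat.eq_or_lt_of_le hab with h1 | h1
    · rw [h1]
    · exact (ih (by omega) (by omega)).trans (h n (by omega) (by omega))

def extChain (T L : ℕ) (c : Fin L → Fin (T + 2)) : ℕ → ℕ := fun p =>
  if hp : 1 ≤ p ∧ p ≤ L then (c ⟨p - 1, by omega⟩ : ℕ) else 0

lemma extChain_detChain {T L : ℕ} {c : Fin L → Fin (T + 2)} (hc : Monotone c) :
    DetChain L (T + 1) (extChain T L c) := by
  constructor
  · intro p hp1 hp2
    rw [extChain, extChain, dif_pos ⟨hp1, by omega⟩, dif_pos ⟨by omega, by omega⟩]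
    have hle : (⟨p - 1, by omega⟩ : Fin L) ≤ ⟨p + 1 - 1, by omega⟩ := by
      rw [Fin.mk_le_mk]; omega
    exact_mod_cast hc hle
  · intro p hp1 hp2
    rw [extChain, dif_pos ⟨hp1, hp2⟩]
    have := (c ⟨p - 1, by omega⟩).isLt
    omega

lemma exists_rep {T L : ℕ} {i : ℕ → ℕ} (h1 : ∀ p, 1 ≤ p → p < L → i p ≤ i (p + 1))
    (h2 : ∀ p, 1 ≤ p → p ≤ L → i p ≤ T + 1) :
    ∃ c : Fin L → Fin (T + 2), Monotone c ∧ ∀ p, 1 ≤ p → p ≤ L → extChain T L c p = i p := by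
  refine ⟨fun q => ⟨i (q.1 + 1), by have := h2 (q.1 + 1) (by omega) (by omega); omega⟩, ?_, ?_⟩
  · intro q q' hq
    show i (q.1 + 1) ≤ i (q'.1 + 1)
    exact chain_mono h1 (q.1 + 1) (q'.1 + 1) (by omega) (by omega) (by omega)
  · intro p hp1 hp2
    rw [extChain, dif_pos ⟨hp1, hp2⟩]
    show i (p - 1 + 1) = i p
    congr 1
    omega

variable (T L : ℕ) (X : (ℕ → ℕ) → Ω → ℝ)

open Classical in
def payoffBound : Ω → ℝ := fun ω =>
  ∑ c ∈ Finset.univ.filter (fun c : Fin L → Fin (T + 2) => Monotone c),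
    |X (extChain T L c) ω|

variable {T L X} {ℱ : Filtration ℕ m0}

section WithHX

variable (hX : ∀ j : ℕ → ℕ, DetChain L (T + 1) j →
      StronglyMeasurable[ℱ (j L)] (X j) ∧ Integrable (X j) μ)
include hX

lemma payoffBound_sm : StronglyMeasurable (payoffBound T L X (Ω := Ω)) := by
  classical
  refine Finset.stronglyMeasurable_fun_sum _ fun c hc => ?_
  rw [Finset.mem_filter] at hc
  exact continuous_abs.comp_stronglyMeasurable ((hX _ (extChain_detChain hc.2)).1.mono (ℱ.le _))

lemma payoffBound_int : Integrable (payoffBound T L X) μ := by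
  classical
  refine integrable_finset_sum _ fun c hc => ?_
  rw [Finset.mem_filter] at hc
  exact (hX _ (extChain_detChain hc.2)).2.abs

end WithHX

section WithHXdep

variable (hXdep : ∀ j j' : ℕ → ℕ, (∀ p, 1 ≤ p → p ≤ L → j p = j' p) → X j = X j')
include hXdep

lemma abs_le_payoffBound {i : ℕ → ℕ} (h1 : ∀ p, 1 ≤ p → p < L → i p ≤ i (p + 1))
    (h2 : ∀ p, 1 ≤ p → p ≤ L → i p ≤ T + 1) (ω : Ω) :
    |X i ω| ≤ payoffBound T L X ω := by
  classical
  obtain ⟨c, hc, hrep⟩ := exists_rep h1 h2 (T := T)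
  have hXi : X i = X (extChain T L c) :=
    hXdep i _ (fun p hp1 hp2 => (hrep p hp1 hp2).symm)
  rw [hXi, payoffBound]
  refine Finset.single_le_sum (f := fun c => |X (extChain T L c) ω|)
    (fun c _ => abs_nonneg _) ?_
  exact Finset.mem_filter.2 ⟨Finset.mem_univ _, hc⟩

variable (hX : ∀ j : ℕ → ℕ, DetChain L (T + 1) j →
      StronglyMeasurable[ℱ (j L)] (X j) ∧ Integrable (X j) μ)
include hX

/-- The payoff along a random chain of exercise dates is strongly measurable and dominated. -/
lemma payoff_sm (k : ℕ) (j : ℕ → ℕ) (τ : ℕ → Ω → ℕ) (hτ : ∀ p, Measurable (τ p))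
    (hchain : ∀ ω, ∀ p, 1 ≤ p → p < L →
      (if p < k then j p else τ p ω) ≤ (if p + 1 < k then j (p + 1) else τ (p + 1) ω))
    (hbd : ∀ ω, ∀ p, 1 ≤ p → p ≤ L → (if p < k then j p else τ p ω) ≤ T + 1) :
    StronglyMeasurable (fun ω => X (fun p => if p < k then j p else τ p ω) ω) ∧
      ∀ ω, |X (fun p => if p < k then j p else τ p ω) ω| ≤ payoffBound T L X ω := by
  classical
  constructor
  · have heq : (fun ω => X (fun p => if p < k then j p else τ p ω) ω) =
        fun ω => ∑ c ∈ Finset.univ.filter (fun c : Fin L → Fin (T + 2) => Monotone c),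
          Set.indicator {ω' | ∀ p, 1 ≤ p → p ≤ L →
            (if p < k then j p else τ p ω') = extChain T L c p} (X (extChain T L c)) ω := by
      funext ω
      obtain ⟨c₀, hc₀, hrep⟩ := exists_rep (hchain ω) (hbd ω) (T := T)
      rw [Finset.sum_eq_single_of_mem c₀ (Finset.mem_filter.2 ⟨Finset.mem_univ _, hc₀⟩)]
      · have hmem : ω ∈ {ω' | ∀ p, 1 ≤ p → p ≤ L →
            (if p < k then j p else τ p ω') = extChain T L c₀ p} :=
          fun p hp1 hp2 => (hrep p hp1 hp2).symm
        rw [Set.indicator_of_mem hmem]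
        exact congrFun (hXdep _ _ (fun p hp1 hp2 => (hrep p hp1 hp2).symm)) ω
      · intro c hc hne
        refine Set.indicator_of_notMem (fun hmem => hne ?_) _
        funext q
        refine Fin.val_injective ?_
        have e1 := hmem (q.1 + 1) (by omega) (by omega)
        have e2 := hrep (q.1 + 1) (by omega) (by omega)
        have e3 : extChain T L c (q.1 + 1) = (c q : ℕ) := by
          rw [extChain, dif_pos ⟨by omega, by omega⟩]
          congr 1
        have e4 : extChain T L c₀ (q.1 + 1) = (c₀ q : ℕ) := by
          rw [extChain, dif_pos ⟨by omega, by omega⟩]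
          congr 1
        rw [← e3, ← e1, ← e2, e4]
    rw [heq]
    refine Finset.stronglyMeasurable_fun_sum _ fun c hc => ?_
    rw [Finset.mem_filter] at hc
    refine StronglyMeasurable.indicator ((hX _ (extChain_detChain hc.2)).1.mono (ℱ.le _)) ?_
    have : {ω' | ∀ p, 1 ≤ p → p ≤ L → (if p < k then j p else τ p ω') = extChain T L c p} =
        ⋂ p ∈ Finset.Icc 1 L, {ω' | (if p < k then j p else τ p ω') = extChain T L c p} := by
      ext ω'
      simp only [Set.mem_setOf_eq, Set.mem_iInter, Finset.mem_Icc]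
      exact ⟨fun h p hp => h p hp.1 hp.2, fun h p h1 h2 => h p ⟨h1, h2⟩⟩
    rw [this]
    refine MeasurableSet.biInter (Finset.Icc 1 L).countable_toSet fun p _ => ?_
    have hm : Measurable (fun ω' => if p < k then j p else τ p ω') := by
      split_ifs
      · exact measurable_const
      · exact hτ p
    exact hm (measurableSet_singleton _)
  · exact fun ω => abs_le_payoffBound hXdep (hchain ω) (hbd ω) ω

lemma payoff_int (k : ℕ) (j : ℕ → ℕ) (τ : ℕ → Ω → ℕ) (hτ : ∀ p, Measurable (τ p))
    (hchain : ∀ ω, ∀ p, 1 ≤ p → p < L →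
      (if p < k then j p else τ p ω) ≤ (if p + 1 < k then j (p + 1) else τ (p + 1) ω))
    (hbd : ∀ ω, ∀ p, 1 ≤ p → p ≤ L → (if p < k then j p else τ p ω) ≤ T + 1) :
    Integrable (fun ω => X (fun p => if p < k then j p else τ p ω) ω) μ := by
  obtain ⟨hsm, hb⟩ := payoff_sm hXdep hX k j τ hτ hchain hbd
  refine Integrable.mono' (payoffBound_int hX) hsm.aestronglyMeasurable ?_
  exact ae_of_all _ fun ω => by simpa [Real.norm_eq_abs] using hb ω

end WithHXdep


lemma stoppingTime_measurable {ℱ : Filtration ℕ m0} {τ : Ω → ℕ} (hτ : IsStoppingTime ℱ (fun ω => ((τ ω : ℕ) : WithTop ℕ))) :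
    Measurable τ :=
  measurable_to_countable' fun n => ℱ.le n _ (RedAuxB.nst_meas_eq hτ n)

section Snell

variable {T L : ℕ} {μ : Measure Ω} {ℱ : Filtration ℕ m0} {X : (ℕ → ℕ) → Ω → ℝ}
variable {k' r' : ℕ} {j' : ℕ → ℕ}

/-- chain/bound conditions for the payoff along a member witness. -/
lemma witness_chain (hj' : DetChain (k' - 1) (T + 1) j')
    (hjr' : ∀ p, 1 ≤ p → p ≤ k' - 1 → j' p ≤ r') (hk'L : k' ≤ L)
    {τ : ℕ → Ω → ℕ} (hge : ∀ ω, r' ≤ τ k' ω)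
    (hch : ∀ p, k' ≤ p → p < L → ∀ ω, τ p ω ≤ τ (p + 1) ω) (hle : ∀ ω, τ L ω ≤ T + 1) :
    (∀ ω, ∀ p, 1 ≤ p → p < L →
      (if p < k' then j' p else τ p ω) ≤ (if p + 1 < k' then j' (p + 1) else τ (p + 1) ω)) ∧
    (∀ ω, ∀ p, 1 ≤ p → p ≤ L → (if p < k' then j' p else τ p ω) ≤ T + 1) := by
  have hτm : ∀ ω p, k' ≤ p → p ≤ L → τ p ω ≤ τ L ω := fun ω p hp1 hp2 =>
    chain_mono (i := fun q => τ q ω) (fun q hq1 hq2 => hch q hq1 hq2 ω) p L hp1 hp2 le_rfl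
  constructor
  · intro ω p hp1 hp2
    by_cases hpk : p + 1 < k'
    · rw [if_pos (by omega), if_pos hpk]
      exact hj'.1 p hp1 (by omega)
    · by_cases hpk2 : p < k'
      · rw [if_pos hpk2, if_neg hpk]
        have h1 : j' p ≤ r' := hjr' p hp1 (by omega)
        have h2 : p + 1 = k' := by omega
        rw [h2]
        exact h1.trans (hge ω)
      · rw [if_neg hpk2, if_neg hpk]
        exact hch p (by omega) hp2 ω
  · intro ω p hp1 hp2
    by_cases hpk : p < k'
    · rw [if_pos hpk]
      exact hj'.2 p hp1 (by omega)
    · rw [if_neg hpk]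
      exact (hτm ω p (by omega) hp2).trans (hle ω)

variable (hXdep : ∀ j j' : ℕ → ℕ, (∀ p, 1 ≤ p → p ≤ L → j p = j' p) → X j = X j')
variable (hX : ∀ j : ℕ → ℕ, DetChain L (T + 1) j →
      StronglyMeasurable[ℱ (j L)] (X j) ∧ Integrable (X j) μ)
include hXdep hX

lemma member_integrable (hj' : DetChain (k' - 1) (T + 1) j')
    (hjr' : ∀ p, 1 ≤ p → p ≤ k' - 1 → j' p ≤ r') (hk'L : k' ≤ L)
    {τ : ℕ → Ω → ℕ} (hst : ∀ p, IsStoppingTime ℱ (fun ω => ((τ p ω : ℕ) : WithTop ℕ))) (hge : ∀ ω, r' ≤ τ k' ω)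
    (hch : ∀ p, k' ≤ p → p < L → ∀ ω, τ p ω ≤ τ (p + 1) ω) (hle : ∀ ω, τ L ω ≤ T + 1) :
    Integrable (fun ω => X (fun p => if p < k' then j' p else τ p ω) ω) μ := by
  obtain ⟨h1, h2⟩ := witness_chain hj' hjr' hk'L hge hch hle
  exact payoff_int hXdep hX k' j' τ (fun p => stoppingTime_measurable (hst p)) h1 h2

lemma member_abs_le (hj' : DetChain (k' - 1) (T + 1) j')
    (hjr' : ∀ p, 1 ≤ p → p ≤ k' - 1 → j' p ≤ r') (hk'L : k' ≤ L)
    {τ : ℕ → Ω → ℕ} (hge : ∀ ω, r' ≤ τ k' ω)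
    (hch : ∀ p, k' ≤ p → p < L → ∀ ω, τ p ω ≤ τ (p + 1) ω) (hle : ∀ ω, τ L ω ≤ T + 1) :
    ∀ ω, |X (fun p => if p < k' then j' p else τ p ω) ω| ≤ payoffBound T L X ω := by
  obtain ⟨h1, h2⟩ := witness_chain hj' hjr' hk'L hge hch hle
  exact fun ω => abs_le_payoffBound hXdep (h1 ω) (h2 ω) ω

omit hXdep hX in
lemma snell_nonempty (hr' : r' ≤ T + 1) : (snellFamily T L μ ℱ X k' r' j').Nonempty :=
  ⟨_, fun _ => fun _ => T + 1, fun _ => isStoppingTime_const ℱ (T + 1), fun _ => hr',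
    fun _ _ _ _ => le_rfl, fun _ => le_rfl, rfl⟩

omit hXdep hX in
lemma snell_sm : ∀ f ∈ snellFamily T L μ ℱ X k' r' j', StronglyMeasurable f := by
  rintro f ⟨τ, -, -, -, -, rfl⟩
  exact stronglyMeasurable_condExp.mono (ℱ.le r')

lemma snell_abs_le (hj' : DetChain (k' - 1) (T + 1) j')
    (hjr' : ∀ p, 1 ≤ p → p ≤ k' - 1 → j' p ≤ r') (hk'L : k' ≤ L) :
    ∀ f ∈ snellFamily T L μ ℱ X k' r' j',
      ∀ᵐ ω ∂μ, |f ω| ≤ (μ[payoffBound T L X|ℱ r']) ω := by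
  rintro f ⟨τ, hst, hge, hch, hle, rfl⟩
  exact abs_condexp_le_of_abs_le (member_integrable hXdep hX hj' hjr' hk'L hst hge hch hle)
    (payoffBound_int hX) (member_abs_le hXdep hX hj' hjr' hk'L hge hch hle)

lemma snell_directed [IsProbabilityMeasure μ] (hj' : DetChain (k' - 1) (T + 1) j')
    (hjr' : ∀ p, 1 ≤ p → p ≤ k' - 1 → j' p ≤ r') (hk'L : k' ≤ L) (hr' : r' ≤ T + 1) :
    ∀ f ∈ snellFamily T L μ ℱ X k' r' j', ∀ g ∈ snellFamily T L μ ℱ X k' r' j',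
      ∃ h ∈ snellFamily T L μ ℱ X k' r' j', f ≤ᵐ[μ] h ∧ g ≤ᵐ[μ] h := by
  classical
  have norm : ∀ τ : ℕ → Ω → ℕ, (∀ p, IsStoppingTime ℱ (fun ω => ((τ p ω : ℕ) : WithTop ℕ))) → (∀ ω, r' ≤ τ k' ω) →
      (∀ p, k' ≤ p → p < L → ∀ ω, τ p ω ≤ τ (p + 1) ω) → (∀ ω, τ L ω ≤ T + 1) →
      ∃ τ' : ℕ → Ω → ℕ, (∀ p, IsStoppingTime ℱ (fun ω => ((τ' p ω : ℕ) : WithTop ℕ))) ∧ (∀ ω, r' ≤ τ' k' ω) ∧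
        (∀ p, k' ≤ p → p < L → ∀ ω, τ' p ω ≤ τ' (p + 1) ω) ∧ (∀ ω, τ' L ω ≤ T + 1) ∧
        (∀ p ω, r' ≤ τ' p ω) ∧
        (fun ω => X (fun p => if p < k' then j' p else τ' p ω) ω) =
          (fun ω => X (fun p => if p < k' then j' p else τ p ω) ω) := by
    intro τ h1 h2 h3 h4
    refine ⟨fun p => if k' ≤ p ∧ p ≤ L then τ p else fun _ => T + 1,
      ?_, ?_, ?_, ?_, ?_, ?_⟩
    · intro p
      show IsStoppingTime ℱ (fun ω => (((if k' ≤ p ∧ p ≤ L then τ p else fun _ => T + 1) ω : ℕ) : WithTop ℕ))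
      by_cases hp : k' ≤ p ∧ p ≤ L
      · rw [if_pos hp]; exact h1 p
      · rw [if_neg hp]; exact isStoppingTime_const ℱ (T + 1)
    · intro ω
      show r' ≤ (if k' ≤ k' ∧ k' ≤ L then τ k' else fun _ => T + 1) ω
      rw [if_pos ⟨le_rfl, hk'L⟩]; exact h2 ω
    · intro p hp1 hp2 ω
      show (if k' ≤ p ∧ p ≤ L then τ p else fun _ => T + 1) ω ≤
        (if k' ≤ p + 1 ∧ p + 1 ≤ L then τ (p + 1) else fun _ => T + 1) ω
      rw [if_pos ⟨hp1, by omega⟩, if_pos ⟨by omega, by omega⟩]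
      exact h3 p hp1 hp2 ω
    · intro ω
      show (if k' ≤ L ∧ L ≤ L then τ L else fun _ => T + 1) ω ≤ T + 1
      rw [if_pos ⟨hk'L, le_rfl⟩]; exact h4 ω
    · intro p ω
      show r' ≤ (if k' ≤ p ∧ p ≤ L then τ p else fun _ => T + 1) ω
      by_cases hp : k' ≤ p ∧ p ≤ L
      · rw [if_pos hp]
        exact (h2 ω).trans (chain_mono (i := fun q => τ q ω)
          (fun q hq1 hq2 => h3 q hq1 hq2 ω) k' p le_rfl hp.1 hp.2)
      · rw [if_neg hp]
        exact hr'
    · funext ω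
      refine congrFun (hXdep _ _ fun p hp1 hp2 => ?_) ω
      show (if p < k' then j' p else (if k' ≤ p ∧ p ≤ L then τ p else fun _ => T + 1) ω) =
        (if p < k' then j' p else τ p ω)
      by_cases hpk : p < k'
      · rw [if_pos hpk, if_pos hpk]
      · rw [if_neg hpk, if_neg hpk, if_pos ⟨by omega, hp2⟩]
  rintro f ⟨τ₀, hτ1, hτ2, hτ3, hτ4, rfl⟩ g ⟨υ₀, hυ1, hυ2, hυ3, hυ4, rfl⟩
  obtain ⟨τ, ht1, ht2, ht3, ht4, ht5, ht6⟩ := norm τ₀ hτ1 hτ2 hτ3 hτ4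
  obtain ⟨υ, hu1, hu2, hu3, hu4, hu5, hu6⟩ := norm υ₀ hυ1 hυ2 hυ3 hυ4
  set F : Ω → ℝ := fun ω => X (fun p => if p < k' then j' p else τ p ω) ω with hF
  set G : Ω → ℝ := fun ω => X (fun p => if p < k' then j' p else υ p ω) ω with hG
  have hFint : Integrable F μ := member_integrable hXdep hX hj' hjr' hk'L ht1 ht2 ht3 ht4
  have hGint : Integrable G μ := member_integrable hXdep hX hj' hjr' hk'L hu1 hu2 hu3 hu4
  set A : Set Ω := {ω | (μ[F|ℱ r']) ω ≤ (μ[G|ℱ r']) ω} with hAdef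
  have hA : MeasurableSet[ℱ r'] A :=
    measurableSet_le stronglyMeasurable_condExp.measurable stronglyMeasurable_condExp.measurable
  set σ : ℕ → Ω → ℕ := fun p => A.piecewise (υ p) (τ p) with hσdef
  have hσ1 : ∀ p, IsStoppingTime ℱ (fun ω => ((σ p ω : ℕ) : WithTop ℕ)) := fun p => by
    have heq : (fun ω => ((σ p ω : ℕ) : WithTop ℕ)) =
        A.piecewise (fun ω => ((υ p ω : ℕ) : WithTop ℕ)) (fun ω => ((τ p ω : ℕ) : WithTop ℕ)) := by
      funext ω
      by_cases hω : ω ∈ A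
      · simp [σ, hω]
      · simp [σ, hω]
    rw [heq]
    exact IsStoppingTime.piecewise_of_le (hu1 p) (ht1 p) (fun ω => by simpa using hu5 p ω)
      (fun ω => by simpa using ht5 p ω) hA
  have hσpw : ∀ p ω, σ p ω = if ω ∈ A then υ p ω else τ p ω := by
    intro p ω
    show A.piecewise (υ p) (τ p) ω = _
    by_cases hω : ω ∈ A
    · rw [Set.piecewise_eq_of_mem _ _ _ hω, if_pos hω]
    · rw [Set.piecewise_eq_of_notMem _ _ _ hω, if_neg hω]
  have hσ2 : ∀ ω, r' ≤ σ k' ω := by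
    intro ω; rw [hσpw]
    by_cases hω : ω ∈ A
    · rw [if_pos hω]; exact hu2 ω
    · rw [if_neg hω]; exact ht2 ω
  have hσ3 : ∀ p, k' ≤ p → p < L → ∀ ω, σ p ω ≤ σ (p + 1) ω := by
    intro p hp1 hp2 ω; rw [hσpw, hσpw]
    by_cases hω : ω ∈ A
    · rw [if_pos hω, if_pos hω]; exact hu3 p hp1 hp2 ω
    · rw [if_neg hω, if_neg hω]; exact ht3 p hp1 hp2 ω
  have hσ4 : ∀ ω, σ L ω ≤ T + 1 := by
    intro ω; rw [hσpw]
    by_cases hω : ω ∈ A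
    · rw [if_pos hω]; exact hu4 ω
    · rw [if_neg hω]; exact ht4 ω
  set Fσ : Ω → ℝ := fun ω => X (fun p => if p < k' then j' p else σ p ω) ω with hFσdef
  have hFσ : Fσ = fun ω => A.indicator G ω + Aᶜ.indicator F ω := by
    funext ω
    by_cases hω : ω ∈ A
    · rw [Set.indicator_of_mem hω, Set.indicator_of_notMem (by simp [hω]), add_zero]
      refine congrFun (hXdep _ _ fun p hp1 hp2 => ?_) ω
      by_cases hpk : p < k'
      · rw [if_pos hpk, if_pos hpk]
      · rw [if_neg hpk, if_neg hpk, hσpw, if_pos hω]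
    · rw [Set.indicator_of_notMem hω, Set.indicator_of_mem (by simp [hω]), zero_add]
      refine congrFun (hXdep _ _ fun p hp1 hp2 => ?_) ω
      by_cases hpk : p < k'
      · rw [if_pos hpk, if_pos hpk]
      · rw [if_neg hpk, if_neg hpk, hσpw, if_neg hω]
  have hkey : μ[Fσ|ℱ r'] =ᵐ[μ]
      fun ω => A.indicator (μ[G|ℱ r']) ω + Aᶜ.indicator (μ[F|ℱ r']) ω := by
    rw [hFσ]
    have e1 : μ[(A.indicator G + Aᶜ.indicator F : Ω → ℝ)|ℱ r'] =ᵐ[μ]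
        μ[A.indicator G|ℱ r'] + μ[Aᶜ.indicator F|ℱ r'] :=
      condExp_add (hGint.indicator (ℱ.le r' _ hA)) (hFint.indicator (ℱ.le r' _ hA.compl)) _
    have e2 := condExp_indicator (μ := μ) hGint hA
    have e3 := condExp_indicator (μ := μ) hFint hA.compl
    filter_upwards [e1, e2, e3] with ω h1 h2 h3
    rw [show (fun ω => A.indicator G ω + Aᶜ.indicator F ω) =
      (A.indicator G + Aᶜ.indicator F : Ω → ℝ) from rfl, h1]
    simp only [Pi.add_apply]
    rw [h2, h3]
  refine ⟨μ[Fσ|ℱ r'], ⟨σ, hσ1, hσ2, hσ3, hσ4, rfl⟩, ?_, ?_⟩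
  · rw [← ht6]
    filter_upwards [hkey] with ω hω
    rw [hω]
    by_cases hA' : ω ∈ A
    · rw [Set.indicator_of_mem hA', Set.indicator_of_notMem (by simp [hA']), add_zero]
      exact hA'
    · rw [Set.indicator_of_notMem hA', Set.indicator_of_mem (by simp [hA']), zero_add]
  · rw [← hu6]
    filter_upwards [hkey] with ω hω
    rw [hω]
    by_cases hA' : ω ∈ A
    · rw [Set.indicator_of_mem hA', Set.indicator_of_notMem (by simp [hA']), add_zero]
    · rw [Set.indicator_of_notMem hA', Set.indicator_of_mem (by simp [hA']), zero_add]
      exact not_le.mp hA' |>.le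
end Snell

end RedAux

end Helpers

/-- **Reduction principle for general multiple stopping.**
For every `1 ≤ k ≤ L`, every chain `j 1 ≤ ... ≤ j (k-1) ≤ T + 1` and every time
`r ≥ j (k-1)`, the Snell envelope `Y*_r^{L-k+1, j 1, ..., j (k-1)}` is (a.s.) the essential
supremum, over all stopping times `τ` with `r ≤ τ ≤ T + 1`, of
`E[ Y*_τ^{L-k, j 1, ..., j (k-1), τ} | ℱ r ]`. -/
theorem reduction_principle_general_multiple_stopping
    (T L : ℕ) (μ : Measure Ω) [IsProbabilityMeasure μ] (ℱ : Filtration ℕ m0)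
    (X : (ℕ → ℕ) → Ω → ℝ)
    -- the cashflow depends only on the exercise dates with indices `1, ..., L`
    (hXdep : ∀ j j' : ℕ → ℕ, (∀ p, 1 ≤ p → p ≤ L → j p = j' p) → X j = X j')
    -- measurability and integrability of the cashflow
    (hX : ∀ j : ℕ → ℕ, DetChain L (T + 1) j →
      StronglyMeasurable[ℱ (j L)] (X j) ∧ Integrable (X j) μ)
    -- `Ystar k r j` is the Snell envelope `Y*_r^{L-k+1, j 1, ..., j (k-1)}`
    (Ystar : ℕ → ℕ → (ℕ → ℕ) → Ω → ℝ)
    (hY : ∀ k r (j : ℕ → ℕ), 1 ≤ k → k ≤ L → DetChain (k - 1) (T + 1) j →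
      (∀ p, 1 ≤ p → p ≤ k - 1 → j p ≤ r) → r ≤ T + 1 →
      IsEssSupFamily μ (snellFamily T L μ ℱ X k r j) (Ystar k r j))
    -- the convention `Y*_r^{0, j 1, ..., j L} = X_{j 1, ..., j L}`
    (hY0 : ∀ r (j : ℕ → ℕ), Ystar (L + 1) r j = X j)
    (k r : ℕ) (j : ℕ → ℕ) (hk1 : 1 ≤ k) (hkL : k ≤ L)
    (hj : DetChain (k - 1) (T + 1) j)
    (hjr : ∀ p, 1 ≤ p → p ≤ k - 1 → j p ≤ r) (hr : r ≤ T + 1) :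
    IsEssSupFamily μ
      { g | ∃ τ : Ω → ℕ, IsStoppingTime ℱ (fun ω => ((τ ω : ℕ) : WithTop ℕ)) ∧ (∀ ω, r ≤ τ ω ∧ τ ω ≤ T + 1) ∧
          g = μ[(fun ω => Ystar (k + 1) (τ ω) (fun p => if p = k then τ ω else j p) ω)|ℱ r] }
      (Ystar k r j) := by
  classical
  have hYkr := hY k r j hk1 hkL hj hjr hr
  set M : Ω → ℝ := RedAux.payoffBound T L X with hMdef
  have hMint : Integrable M μ := RedAux.payoffBound_int hX
  set jT : ℕ → ℕ → ℕ := fun t p => if p = k then t else j p with hjTdef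
  have hjTdet : ∀ t, r ≤ t → t ≤ T + 1 → DetChain (k + 1 - 1) (T + 1) (jT t) := by
    intro t h1 h2
    constructor
    · intro p hp1 hp2
      show (if p = k then t else j p) ≤ (if p + 1 = k then t else j (p + 1))
      rw [if_neg (show p ≠ k by omega)]
      by_cases hp1k : p + 1 = k
      · rw [if_pos hp1k]
        exact (hjr p hp1 (by omega)).trans h1
      · rw [if_neg hp1k]
        exact hj.1 p hp1 (by omega)
    · intro p hp1 hp2
      show (if p = k then t else j p) ≤ T + 1
      by_cases hpk : p = k
      · rw [if_pos hpk]; exact h2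
      · rw [if_neg hpk]; exact hj.2 p hp1 (by omega)
  have hjTle : ∀ t, r ≤ t → ∀ p, 1 ≤ p → p ≤ k + 1 - 1 → jT t p ≤ t := by
    intro t h1 p hp1 hp2
    show (if p = k then t else j p) ≤ t
    by_cases hpk : p = k
    · rw [if_pos hpk]
    · rw [if_neg hpk]; exact (hjr p hp1 (by omega)).trans h1
  by_cases hkL' : k = L
  · subst hkL'
    constructor
    · rintro g ⟨τ, hτst, hτmem, rfl⟩
      have hWeq : (fun ω => Ystar (k + 1) (τ ω) (fun p => if p = k then τ ω else j p) ω)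
          = fun ω => X (fun p => if p < k then j p else τ ω) ω := by
        funext ω
        rw [hY0]
        refine congrFun (hXdep _ _ fun p hp1 hp2 => ?_) ω
        by_cases hpL : p < k
        · rw [if_neg (show p ≠ k by omega), if_pos hpL]
        · have hpe : p = k := by omega
          rw [hpe, if_pos rfl, if_neg (lt_irrefl k)]
      rw [hWeq]
      exact hYkr.1 _ ⟨fun _ => τ, fun _ => hτst, fun ω => (hτmem ω).1,
        fun _ _ _ ω => le_rfl, fun ω => (hτmem ω).2, rfl⟩
    · intro Z hZ
      refine hYkr.2 Z ?_
      rintro f ⟨τ, hτ1, hτ2, hτ3, hτ4, rfl⟩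
      set σ : Ω → ℕ := τ k with hσdef
      have hσst : IsStoppingTime ℱ (fun ω => ((σ ω : ℕ) : WithTop ℕ)) := hτ1 k
      have hσmem : ∀ ω, r ≤ σ ω ∧ σ ω ≤ T + 1 := fun ω => ⟨hτ2 ω, hτ4 ω⟩
      set W : Ω → ℝ := fun ω => Ystar (k + 1) (σ ω) (fun p => if p = k then σ ω else j p) ω
        with hWdef
      have hWX : W = fun ω => X (jT (σ ω)) ω := by
        funext ω
        show Ystar (k + 1) (σ ω) (fun p => if p = k then σ ω else j p) ω = _
        rw [hY0]
      have hZW : μ[W|ℱ r] ≤ᵐ[μ] Z := hZ _ ⟨σ, hσst, hσmem, rfl⟩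
      set F : Ω → ℝ := fun ω => X (fun p => if p < k then j p else τ p ω) ω with hFdef
      have hFint : Integrable F μ :=
        RedAux.member_integrable hXdep hX hj hjr le_rfl hτ1 hτ2 hτ3 hτ4
      have hWint : Integrable W μ := by
        rw [hWX]
        have heq2 : (fun ω => X (jT (σ ω)) ω) =
            fun ω => X (fun p => if p < k then j p else σ ω) ω := by
          funext ω
          refine congrFun (hXdep _ _ fun p hp1 hp2 => ?_) ω
          show (if p = k then σ ω else j p) = (if p < k then j p else σ ω)
          by_cases hpL : p < k
          · rw [if_neg (show p ≠ k by omega), if_pos hpL]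
          · have hpe : p = k := by omega
            rw [hpe, if_pos rfl, if_neg (lt_irrefl k)]
        rw [heq2]
        exact RedAux.member_integrable hXdep hX hj hjr le_rfl (fun _ => hσst)
          (fun ω => hτ2 ω) (fun _ _ _ _ => le_rfl) (fun ω => hτ4 ω)
      have hler : ℱ r ≤ hσst.measurableSpace := by
        rw [← IsStoppingTime.measurableSpace_const ℱ r]
        exact IsStoppingTime.measurableSpace_mono _ hσst fun ω => by simpa using hτ2 ω
      have htower := condExp_condExp_of_le (μ := μ) (f := F) hler
        hσst.measurableSpace_le
      have hcl : μ[F|hσst.measurableSpace] ≤ᵐ[μ] W := by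
        refine RedAuxB.ae_of_ae_restrict_finset (Finset.Icc r (T + 1))
          (fun t _ => ℱ.le t _ (RedAuxB.nst_meas_eq hσst t))
          (fun ω => ⟨σ ω, Finset.mem_Icc.2 ⟨hτ2 ω, hτ4 ω⟩, rfl⟩) ?_
        intro t ht
        obtain ⟨ht1, ht2⟩ := Finset.mem_Icc.mp ht
        have hdet : DetChain k (T + 1) (jT t) := hjTdet t ht1 ht2
        have hGint : Integrable (X (jT t)) μ := (hX (jT t) hdet).2
        have q1 := RedAuxB.nst_condexp
          (μ := μ) (f := F) hσst t
        have q2 : μ[F|ℱ t] =ᵐ[μ.restrict {ω | σ ω = t}] μ[X (jT t)|ℱ t] := by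
          refine RedAuxB.condexp_restrict_congr (ℱ.le t)
            (RedAuxB.nst_meas_eq hσst t) hFint hGint ?_
          intro ω hω
          have hωt : σ ω = t := hω
          refine congrFun (hXdep _ _ fun p hp1 hp2 => ?_) ω
          show (if p < k then j p else τ p ω) = (if p = k then t else j p)
          by_cases hpL : p < k
          · rw [if_pos hpL, if_neg (show p ≠ k by omega)]
          · have hpe : p = k := by omega
            rw [hpe, if_neg (lt_irrefl k), if_pos rfl]
            exact hωt
        have q3 : μ[X (jT t)|ℱ t] =ᵐ[μ] X (jT t) := by
          have hsm' : StronglyMeasurable[ℱ t] (X (jT t)) := by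
            have h5 := (hX (jT t) hdet).1
            have hjtL : jT t k = t := if_pos rfl
            rwa [hjtL] at h5
          exact Filter.EventuallyEq.of_eq (condExp_of_stronglyMeasurable (ℱ.le t) hsm' hGint)
        filter_upwards [q1, q2, ae_restrict_of_ae q3,
          ae_restrict_mem (ℱ.le t _ (RedAuxB.nst_meas_eq hσst t))]
          with ω e1 e2 e3 e4
        show (μ[F|hσst.measurableSpace]) ω ≤ W ω
        have hωt : σ ω = t := e4
        have h5 : W ω = X (jT t) ω := by
          have h6 : W ω = X (jT (σ ω)) ω := congrFun hWX ω
          rwa [hωt] at h6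
        rw [e1, e2, e3, ← h5]
      have hmono := condExp_mono (μ := μ) (m := ℱ r) integrable_condExp hWint hcl
      refine Filter.EventuallyLE.trans ?_ hZW
      filter_upwards [hmono, htower] with ω h1 h2
      rw [← h2]
      exact h1
  · have hkL2 : k + 1 ≤ L := by omega
    have hSfam : ∀ t, r ≤ t → t ≤ T + 1 →
        IsEssSupFamily μ (snellFamily T L μ ℱ X (k + 1) t (jT t)) (Ystar (k + 1) t (jT t)) :=
      fun t h1 h2 => hY (k + 1) t (jT t) (by omega) hkL2 (hjTdet t h1 h2)
        (fun p hp1 hp2 => hjTle t h1 p hp1 hp2) h2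
    have hseq : ∀ t, r ≤ t → t ≤ T + 1 → ∃ e : ℕ → Ω → ℝ,
        (∀ n, e n ∈ snellFamily T L μ ℱ X (k + 1) t (jT t)) ∧
        ∀ᵐ ω ∂μ, Filter.Tendsto (fun n => e n ω) Filter.atTop
          (nhds (Ystar (k + 1) t (jT t) ω)) :=
      fun t h1 h2 => RedAux.exists_seq_tendsto_of_isEssSupFamily
        (RedAux.snell_nonempty h2) RedAux.snell_sm
        (RedAux.snell_directed hXdep hX (hjTdet t h1 h2)
          (fun p hp1 hp2 => hjTle t h1 p hp1 hp2) hkL2 h2)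
        (hSfam t h1 h2)
    choose! e he1 he2 using hseq
    have hesm : ∀ t n, r ≤ t → t ≤ T + 1 → StronglyMeasurable (e t n) :=
      fun t n h1 h2 => RedAux.snell_sm _ (he1 t h1 h2 n)
    have heb : ∀ n, ∀ᵐ ω ∂μ, ∀ t, r ≤ t → t ≤ T + 1 → |e t n ω| ≤ (μ[M|ℱ t]) ω := by
      intro n
      rw [ae_all_iff]
      intro t
      by_cases hrt : r ≤ t
      · by_cases htT : t ≤ T + 1
        · filter_upwards [RedAux.snell_abs_le hXdep hX (hjTdet t hrt htT)
            (fun p hp1 hp2 => hjTle t hrt p hp1 hp2) hkL2 _ (he1 t hrt htT n)] with ω hω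
          intro _ _
          exact hω
        · exact Filter.Eventually.of_forall fun ω h1 h2 => absurd h2 htT
      · exact Filter.Eventually.of_forall fun ω h1 h2 => absurd h1 hrt
    have hYtm : ∀ t, r ≤ t → t ≤ T + 1 → AEStronglyMeasurable (Ystar (k + 1) t (jT t)) μ :=
      fun t h1 h2 => aestronglyMeasurable_of_tendsto_ae Filter.atTop
        (fun n => (hesm t n h1 h2).aestronglyMeasurable) (he2 t h1 h2)
    have hYtb : ∀ᵐ ω ∂μ, ∀ t, r ≤ t → t ≤ T + 1 →
        |Ystar (k + 1) t (jT t) ω| ≤ (μ[M|ℱ t]) ω := by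
      rw [ae_all_iff]
      intro t
      by_cases hrt : r ≤ t
      · by_cases htT : t ≤ T + 1
        · obtain ⟨f₀, hf₀⟩ := RedAux.snell_nonempty (μ := μ) (ℱ := ℱ) (X := X)
            (k' := k + 1) (j' := jT t) (r' := t) htT
          have h1 : Ystar (k + 1) t (jT t) ≤ᵐ[μ] μ[M|ℱ t] := by
            refine (hSfam t hrt htT).2 _ fun f hf => ?_
            filter_upwards [RedAux.snell_abs_le hXdep hX (hjTdet t hrt htT)
              (fun p hp1 hp2 => hjTle t hrt p hp1 hp2) hkL2 f hf] with ω hω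
            exact (le_abs_self _).trans hω
          have h2 := (hSfam t hrt htT).1 f₀ hf₀
          have h3 := RedAux.snell_abs_le hXdep hX (hjTdet t hrt htT)
            (fun p hp1 hp2 => hjTle t hrt p hp1 hp2) hkL2 f₀ hf₀
          filter_upwards [h1, h2, h3] with ω e1 e2 e3 _ _
          rw [abs_le]
          constructor
          · have := neg_abs_le (f₀ ω)
            linarith
          · exact e1
        · exact Filter.Eventually.of_forall fun ω h1 h2 => absurd h2 htT
      · exact Filter.Eventually.of_forall fun ω h1 h2 => absurd h1 hrt
    set D : Ω → ℝ := fun ω => ∑ t ∈ Finset.Icc r (T + 1), |(μ[M|ℱ t]) ω| with hDdef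
    have hDint : Integrable D μ := integrable_finset_sum _ fun t _ => integrable_condExp.abs
    have hDle : ∀ t, r ≤ t → t ≤ T + 1 → ∀ x : ℝ, ∀ ω : Ω,
        |x| ≤ (μ[M|ℱ t]) ω → |x| ≤ D ω := by
      intro t h1 h2 x ω hx
      refine hx.trans ((le_abs_self _).trans ?_)
      exact Finset.single_le_sum (f := fun t => |(μ[M|ℱ t]) ω|) (fun _ _ => abs_nonneg _)
        (Finset.mem_Icc.2 ⟨h1, h2⟩)
    constructor
    · rintro g ⟨τ, hτst, hτmem, rfl⟩
      show μ[(fun ω => Ystar (k + 1) (τ ω) (jT (τ ω)) ω)|ℱ r] ≤ᵐ[μ] Ystar k r j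
      set W : Ω → ℝ := fun ω => Ystar (k + 1) (τ ω) (jT (τ ω)) ω with hWdef
      have hAmeas : ∀ t : ℕ, MeasurableSet {ω | τ ω = t} :=
        fun t => ℱ.le t _ (RedAuxB.nst_meas_eq hτst t)
      have hwit : ∀ t, r ≤ t → t ≤ T + 1 → ∀ n, ∃ σc : ℕ → Ω → ℕ,
          (∀ p, IsStoppingTime ℱ (fun ω => ((σc p ω : ℕ) : WithTop ℕ))) ∧ (∀ ω, t ≤ σc (k + 1) ω) ∧
          (∀ p, k + 1 ≤ p → p < L → ∀ ω, σc p ω ≤ σc (p + 1) ω) ∧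
          (∀ ω, σc L ω ≤ T + 1) ∧
          e t n = μ[(fun ω => X (fun p => if p < k + 1 then jT t p else σc p ω) ω)|ℱ t] :=
        fun t h1 h2 n => he1 t h1 h2 n
      choose! σc hc1 hc2 hc3 hc4 hc5 using hwit
      have hcge : ∀ t, r ≤ t → t ≤ T + 1 → ∀ n p, k + 1 ≤ p → p ≤ L → ∀ ω, t ≤ σc t n p ω :=
        fun t h1 h2 n p hp1 hp2 ω => (hc2 t h1 h2 n ω).trans
          (RedAux.chain_mono (i := fun q => σc t n q ω)
            (fun q hq1 hq2 => hc3 t h1 h2 n q hq1 hq2 ω) (k + 1) p le_rfl hp1 hp2)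
      set ρ : ℕ → ℕ → Ω → ℕ := fun n p ω => if k + 1 ≤ p ∧ p ≤ L then σc (τ ω) n p ω
        else if p ≤ k then τ ω else T + 1 with hρdef
      have hρval : ∀ n p ω, ρ n p ω = if k + 1 ≤ p ∧ p ≤ L then σc (τ ω) n p ω
          else if p ≤ k then τ ω else T + 1 := fun n p ω => rfl
      have hρ1 : ∀ n p, IsStoppingTime ℱ (fun ω => ((ρ n p ω : ℕ) : WithTop ℕ)) := by
        intro n p
        by_cases h1 : k + 1 ≤ p ∧ p ≤ L
        · have heq : ρ n p = fun ω => σc (τ ω) n p ω :=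
            funext fun ω => by rw [hρval, if_pos h1]
          rw [heq]
          exact RedAuxB.pasted_isStoppingTime hτst hτmem (fun t ht1 ht2 => hc1 t ht1 ht2 n p)
            (fun t ht1 ht2 ω => hcge t ht1 ht2 n p h1.1 h1.2 ω)
        · by_cases h2 : p ≤ k
          · have heq : ρ n p = τ := funext fun ω => by rw [hρval, if_neg h1, if_pos h2]
            rw [heq]
            exact hτst
          · have heq : ρ n p = fun _ => T + 1 :=
              funext fun ω => by rw [hρval, if_neg h1, if_neg h2]
            rw [heq]
            exact isStoppingTime_const ℱ (T + 1)
      have hρ2 : ∀ n ω, r ≤ ρ n k ω := fun n ω => by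
        rw [hρval, if_neg (by omega), if_pos le_rfl]
        exact (hτmem ω).1
      have hρ3 : ∀ n p, k ≤ p → p < L → ∀ ω, ρ n p ω ≤ ρ n (p + 1) ω := by
        intro n p hp1 hp2 ω
        rcases Nat.eq_or_lt_of_le hp1 with he' | hlt
        · rw [hρval, hρval, if_neg (by omega), if_pos (by omega),
            if_pos (show k + 1 ≤ p + 1 ∧ p + 1 ≤ L by omega)]
          have : p = k := by omega
          rw [this]
          exact hc2 (τ ω) (hτmem ω).1 (hτmem ω).2 n ω
        · rw [hρval, hρval, if_pos (by omega : k + 1 ≤ p ∧ p ≤ L),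
            if_pos (by omega : k + 1 ≤ p + 1 ∧ p + 1 ≤ L)]
          exact hc3 (τ ω) (hτmem ω).1 (hτmem ω).2 n p (by omega) hp2 ω
      have hρ4 : ∀ n ω, ρ n L ω ≤ T + 1 := fun n ω => by
        rw [hρval, if_pos (by omega : k + 1 ≤ L ∧ L ≤ L)]
        exact hc4 (τ ω) (hτmem ω).1 (hτmem ω).2 n ω
      set Fρ : ℕ → Ω → ℝ := fun n ω => X (fun p => if p < k then j p else ρ n p ω) ω with hFρdef
      have hgn_le : ∀ n, μ[Fρ n|ℱ r] ≤ᵐ[μ] Ystar k r j :=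
        fun n => hYkr.1 _ ⟨ρ n, hρ1 n, hρ2 n, hρ3 n, hρ4 n, rfl⟩
      have hFρint : ∀ n, Integrable (Fρ n) μ :=
        fun n => RedAux.member_integrable hXdep hX hj hjr hkL (hρ1 n) (hρ2 n) (hρ3 n) (hρ4 n)
      set h : ℕ → Ω → ℝ := fun n ω => e (τ ω) n ω with hhdef
      have hler : ℱ r ≤ hτst.measurableSpace := by
        rw [← IsStoppingTime.measurableSpace_const ℱ r]
        exact IsStoppingTime.measurableSpace_mono _ hτst fun ω => by simpa using (hτmem ω).1
      have hhcond : ∀ n, h n =ᵐ[μ] μ[Fρ n|hτst.measurableSpace] := by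
        intro n
        refine RedAuxB.ae_of_ae_restrict_finset (Finset.Icc r (T + 1)) (fun t _ => hAmeas t)
          (fun ω => ⟨τ ω, Finset.mem_Icc.2 ⟨(hτmem ω).1, (hτmem ω).2⟩, rfl⟩) ?_
        intro t ht
        obtain ⟨ht1, ht2⟩ := Finset.mem_Icc.mp ht
        have hFtint : Integrable
            (fun ω => X (fun p => if p < k + 1 then jT t p else σc t n p ω) ω) μ :=
          RedAux.member_integrable hXdep hX (hjTdet t ht1 ht2)
            (fun p hp1 hp2 => hjTle t ht1 p hp1 hp2) hkL2 (hc1 t ht1 ht2 n)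
            (hc2 t ht1 ht2 n) (hc3 t ht1 ht2 n) (hc4 t ht1 ht2 n)
        have q1 := RedAuxB.nst_condexp
          (μ := μ) (f := Fρ n) hτst t
        have q2 : μ[Fρ n|ℱ t] =ᵐ[μ.restrict {ω | τ ω = t}]
            μ[(fun ω => X (fun p => if p < k + 1 then jT t p else σc t n p ω) ω)|ℱ t] := by
          refine RedAuxB.condexp_restrict_congr (ℱ.le t)
            (RedAuxB.nst_meas_eq hτst t) (hFρint n) hFtint ?_
          intro ω hω
          have hωt : τ ω = t := hω
          refine congrFun (hXdep _ _ fun p hp1 hp2 => ?_) ω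
          show (if p < k then j p else ρ n p ω) = (if p < k + 1 then jT t p else σc t n p ω)
          by_cases hpk : p < k
          · rw [if_pos hpk, if_pos (by omega)]
            show j p = (if p = k then t else j p)
            rw [if_neg (by omega)]
          · by_cases hpk2 : p = k
            · rw [if_neg hpk, if_pos (by omega), hρval, if_neg (by omega),
                if_pos (by omega), hωt]
              show t = (if p = k then t else j p)
              rw [if_pos hpk2]
            · rw [if_neg hpk, if_neg (by omega), hρval,
                if_pos (show k + 1 ≤ p ∧ p ≤ L by omega), hωt]
        filter_upwards [q1, q2, ae_restrict_mem (hAmeas t)] with ω e1 e2 e3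
        show e (τ ω) n ω = (μ[Fρ n|hτst.measurableSpace]) ω
        have hωt : τ ω = t := e3
        rw [hωt, hc5 t ht1 ht2 n, e1, e2]
      have hμh_le : ∀ n, μ[h n|ℱ r] ≤ᵐ[μ] Ystar k r j := by
        intro n
        have t1 := condExp_congr_ae (μ := μ) (m := ℱ r) (hhcond n)
        have t2 := condExp_condExp_of_le (μ := μ) (f := Fρ n) hler
          hτst.measurableSpace_le
        filter_upwards [t1, t2, hgn_le n] with ω a1 a2 a3
        rw [a1, a2]
        exact a3
      have hhb : ∀ n, ∀ᵐ ω ∂μ, |h n ω| ≤ D ω := by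
        intro n
        filter_upwards [heb n] with ω hω
        exact hDle (τ ω) (hτmem ω).1 (hτmem ω).2 _ ω (hω (τ ω) (hτmem ω).1 (hτmem ω).2)
      have hWb : ∀ᵐ ω ∂μ, |W ω| ≤ D ω := by
        filter_upwards [hYtb] with ω hω
        exact hDle (τ ω) (hτmem ω).1 (hτmem ω).2 _ ω (hω (τ ω) (hτmem ω).1 (hτmem ω).2)
      have hconv : ∀ᵐ ω ∂μ, Filter.Tendsto (fun n => h n ω) Filter.atTop (nhds (W ω)) := by
        have hallt : ∀ᵐ ω ∂μ, ∀ t, r ≤ t → t ≤ T + 1 →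
            Filter.Tendsto (fun n => e t n ω) Filter.atTop
              (nhds (Ystar (k + 1) t (jT t) ω)) := by
          rw [ae_all_iff]
          intro t
          by_cases h1 : r ≤ t
          · by_cases h2 : t ≤ T + 1
            · filter_upwards [he2 t h1 h2] with ω hω _ _
              exact hω
            · exact Filter.Eventually.of_forall fun ω hx hy => absurd hy h2
          · exact Filter.Eventually.of_forall fun ω hx hy => absurd hx h1
        filter_upwards [hallt] with ω hω
        exact hω (τ ω) (hτmem ω).1 (hτmem ω).2
      have hhsm : ∀ n, StronglyMeasurable (h n) := by
        intro n
        have hpaste := RedAuxB.paste_eq (fun t => e t n) τ r (T + 1) hτmem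
        rw [show h n = (fun ω => ∑ t ∈ Finset.Icc r (T + 1),
          Set.indicator {ω' | τ ω' = t} (e t n) ω) from hpaste]
        refine Finset.stronglyMeasurable_fun_sum _ fun t ht => ?_
        obtain ⟨ht1, ht2⟩ := Finset.mem_Icc.mp ht
        exact (hesm t n ht1 ht2).indicator (hAmeas t)
      have hWsm : AEStronglyMeasurable W μ := by
        have hpaste := RedAuxB.paste_eq (fun t => Ystar (k + 1) t (jT t)) τ r (T + 1) hτmem
        rw [show W = (fun ω => ∑ t ∈ Finset.Icc r (T + 1),
          Set.indicator {ω' | τ ω' = t} (Ystar (k + 1) t (jT t)) ω) from hpaste]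
        refine Finset.aestronglyMeasurable_fun_sum _ fun t ht => ?_
        obtain ⟨ht1, ht2⟩ := Finset.mem_Icc.mp ht
        exact (hYtm t ht1 ht2).indicator (hAmeas t)
      have hhint : ∀ n, Integrable (h n) μ := fun n =>
        Integrable.mono' hDint (hhsm n).aestronglyMeasurable
          (by filter_upwards [hhb n] with ω hω; simpa [Real.norm_eq_abs] using hω)
      have hWint : Integrable W μ :=
        Integrable.mono' hDint hWsm
          (by filter_upwards [hWb] with ω hω; simpa [Real.norm_eq_abs] using hω)
      have hlp : Filter.Tendsto (fun n => eLpNorm (h n - W) 1 μ) Filter.atTop (nhds 0) := by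
        have hFm : ∀ n, AEMeasurable (fun ω => (‖h n ω - W ω‖₊ : ENNReal)) μ :=
          fun n => ((hhsm n).aestronglyMeasurable.sub hWsm).enorm
        have hbound : ∀ n, (fun ω => (‖h n ω - W ω‖₊ : ENNReal)) ≤ᵐ[μ]
            fun ω => ENNReal.ofReal (2 * D ω) := by
          intro n
          filter_upwards [hhb n, hWb] with ω h1 h2
          rw [← enorm_eq_nnnorm, ← ofReal_norm]
          refine ENNReal.ofReal_le_ofReal ?_
          rw [Real.norm_eq_abs]
          calc |h n ω - W ω| ≤ |h n ω| + |W ω| := abs_sub _ _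
            _ ≤ 2 * D ω := by linarith
        have hfin : ∫⁻ ω, ENNReal.ofReal (2 * D ω) ∂μ ≠ ⊤ := by
          have h2D : Integrable (fun ω => 2 * D ω) μ := hDint.const_mul 2
          refine ne_of_lt (lt_of_le_of_lt (lintegral_mono fun ω => ?_) h2D.2)
          rw [← ofReal_norm]
          exact ENNReal.ofReal_le_ofReal (le_abs_self _)
        have hlim : ∀ᵐ ω ∂μ, Filter.Tendsto (fun n => (‖h n ω - W ω‖₊ : ENNReal))
            Filter.atTop (nhds 0) := by
          filter_upwards [hconv] with ω hω
          have h0 : Filter.Tendsto (fun n => h n ω - W ω) Filter.atTop (nhds 0) := by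
            simpa using hω.sub (tendsto_const_nhds (x := W ω))
          have h1 : Filter.Tendsto (fun n => ‖h n ω - W ω‖₊) Filter.atTop (nhds 0) := by
            have := (continuous_nnnorm.tendsto (0 : ℝ)).comp h0
            simpa [Function.comp_def] using this
          have := ENNReal.tendsto_coe.mpr h1
          simpa using this
        have hmain := tendsto_lintegral_of_dominated_convergence'
          (f := fun _ : Ω => (0 : ENNReal)) _ hFm hbound hfin hlim
        rw [lintegral_zero] at hmain
        have heq : ∀ n, eLpNorm (h n - W) 1 μ = ∫⁻ ω, (‖h n ω - W ω‖₊ : ENNReal) ∂μ := by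
          intro n
          rw [eLpNorm_one_eq_lintegral_enorm]
          rfl
        simp only [heq]
        exact hmain
      have hlp2 : Filter.Tendsto (fun n => eLpNorm (μ[h n|ℱ r] - μ[W|ℱ r]) 1 μ)
          Filter.atTop (nhds 0) := by
        have hle : ∀ n, eLpNorm (μ[h n|ℱ r] - μ[W|ℱ r]) 1 μ ≤ eLpNorm (h n - W) 1 μ := by
          intro n
          have e1 : μ[h n|ℱ r] - μ[W|ℱ r] =ᵐ[μ] μ[h n - W|ℱ r] :=
            (condExp_sub (hhint n) hWint _).symm
          rw [eLpNorm_congr_ae e1]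
          exact eLpNorm_one_condExp_le_eLpNorm _
        exact tendsto_of_tendsto_of_tendsto_of_le_of_le tendsto_const_nhds hlp
          (fun n => by simp) hle
      have htim : TendstoInMeasure μ (fun n => μ[h n|ℱ r]) Filter.atTop (μ[W|ℱ r]) :=
        tendstoInMeasure_of_tendsto_eLpNorm one_ne_zero
          (fun n => (stronglyMeasurable_condExp.mono (ℱ.le r)).aestronglyMeasurable)
          (stronglyMeasurable_condExp.mono (ℱ.le r)).aestronglyMeasurable hlp2
      obtain ⟨ns, -, hns⟩ := htim.exists_seq_tendsto_ae
      have hall : ∀ᵐ ω ∂μ, ∀ n, (μ[h n|ℱ r]) ω ≤ Ystar k r j ω := ae_all_iff.2 hμh_le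
      filter_upwards [hns, hall] with ω h1 h2
      exact le_of_tendsto h1 (Filter.Eventually.of_forall fun i => h2 (ns i))
    · intro Z hZ
      refine hYkr.2 Z ?_
      rintro f ⟨τ, hτ1, hτ2, hτ3, hτ4, rfl⟩
      set σ : Ω → ℕ := τ k with hσdef
      have hσst : IsStoppingTime ℱ (fun ω => ((σ ω : ℕ) : WithTop ℕ)) := hτ1 k
      have hτge : ∀ p, k ≤ p → p ≤ L → ∀ ω, σ ω ≤ τ p ω := fun p h1 h2 ω =>
        RedAux.chain_mono (i := fun q => τ q ω) (fun q hq1 hq2 => hτ3 q hq1 hq2 ω)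
          k p le_rfl h1 h2
      have hσle : ∀ ω, σ ω ≤ T + 1 := fun ω => (hτge L hkL le_rfl ω).trans (hτ4 ω)
      have hσmem : ∀ ω, r ≤ σ ω ∧ σ ω ≤ T + 1 := fun ω => ⟨hτ2 ω, hσle ω⟩
      set W : Ω → ℝ := fun ω => Ystar (k + 1) (σ ω) (jT (σ ω)) ω with hWdef
      have hZW : μ[W|ℱ r] ≤ᵐ[μ] Z := hZ _ ⟨σ, hσst, hσmem, rfl⟩
      set F : Ω → ℝ := fun ω => X (fun p => if p < k then j p else τ p ω) ω with hFdef
      have hFint : Integrable F μ :=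
        RedAux.member_integrable hXdep hX hj hjr hkL hτ1 hτ2 hτ3 hτ4
      have hAmeas : ∀ t : ℕ, MeasurableSet {ω | σ ω = t} :=
        fun t => ℱ.le t _ (RedAuxB.nst_meas_eq hσst t)
      have hWsm : AEStronglyMeasurable W μ := by
        have hpaste := RedAuxB.paste_eq (fun t => Ystar (k + 1) t (jT t)) σ r (T + 1) hσmem
        rw [show W = (fun ω => ∑ t ∈ Finset.Icc r (T + 1),
          Set.indicator {ω' | σ ω' = t} (Ystar (k + 1) t (jT t)) ω) from hpaste]
        refine Finset.aestronglyMeasurable_fun_sum _ fun t ht => ?_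
        obtain ⟨ht1, ht2⟩ := Finset.mem_Icc.mp ht
        exact (hYtm t ht1 ht2).indicator (hAmeas t)
      have hWb : ∀ᵐ ω ∂μ, |W ω| ≤ D ω := by
        filter_upwards [hYtb] with ω hω
        exact hDle (σ ω) (hτ2 ω) (hσle ω) _ ω (hω (σ ω) (hτ2 ω) (hσle ω))
      have hWint : Integrable W μ :=
        Integrable.mono' hDint hWsm
          (by filter_upwards [hWb] with ω hω; simpa [Real.norm_eq_abs] using hω)
      have hler : ℱ r ≤ hσst.measurableSpace := by
        rw [← IsStoppingTime.measurableSpace_const ℱ r]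
        exact IsStoppingTime.measurableSpace_mono _ hσst fun ω => by simpa using hτ2 ω
      have htower := condExp_condExp_of_le (μ := μ) (f := F) hler
        hσst.measurableSpace_le
      have hcl : μ[F|hσst.measurableSpace] ≤ᵐ[μ] W := by
        refine RedAuxB.ae_of_ae_restrict_finset (Finset.Icc r (T + 1)) (fun t _ => hAmeas t)
          (fun ω => ⟨σ ω, Finset.mem_Icc.2 ⟨hτ2 ω, hσle ω⟩, rfl⟩) ?_
        intro t ht
        obtain ⟨ht1, ht2⟩ := Finset.mem_Icc.mp ht
        set τm : ℕ → Ω → ℕ := fun p ω => if k + 1 ≤ p ∧ p ≤ L then max (τ p ω) t else T + 1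
          with hτmdef
        have hm1 : ∀ p, IsStoppingTime ℱ (fun ω => ((τm p ω : ℕ) : WithTop ℕ)) := by
          intro p
          by_cases h1 : k + 1 ≤ p ∧ p ≤ L
          · have heq : τm p = fun ω => max (τ p ω) t := funext fun ω => if_pos h1
            rw [heq]
            intro i
            have := (hτ1 p).max_const t i
            simpa using this
          · have heq : τm p = fun _ => T + 1 := funext fun ω => if_neg h1
            rw [heq]
            exact isStoppingTime_const ℱ (T + 1)
        have hm2 : ∀ ω, t ≤ τm (k + 1) ω := fun ω => by
          show t ≤ if k + 1 ≤ k + 1 ∧ k + 1 ≤ L then max (τ (k + 1) ω) t else T + 1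
          rw [if_pos ⟨le_rfl, hkL2⟩]
          exact le_max_right _ _
        have hm3 : ∀ p, k + 1 ≤ p → p < L → ∀ ω, τm p ω ≤ τm (p + 1) ω := by
          intro p h1 h2 ω
          show (if k + 1 ≤ p ∧ p ≤ L then max (τ p ω) t else T + 1) ≤
            (if k + 1 ≤ p + 1 ∧ p + 1 ≤ L then max (τ (p + 1) ω) t else T + 1)
          rw [if_pos ⟨h1, by omega⟩, if_pos (by omega : k + 1 ≤ p + 1 ∧ p + 1 ≤ L)]
          exact max_le_max (hτ3 p (by omega) h2 ω) le_rfl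
        have hm4 : ∀ ω, τm L ω ≤ T + 1 := fun ω => by
          show (if k + 1 ≤ L ∧ L ≤ L then max (τ L ω) t else T + 1) ≤ T + 1
          rw [if_pos ⟨hkL2, le_rfl⟩]
          exact max_le (hτ4 ω) ht2
        set Ft : Ω → ℝ := fun ω => X (fun p => if p < k + 1 then jT t p else τm p ω) ω
          with hFtdef
        have hFtint : Integrable Ft μ := RedAux.member_integrable hXdep hX (hjTdet t ht1 ht2)
          (fun p hp1 hp2 => hjTle t ht1 p hp1 hp2) hkL2 hm1 hm2 hm3 hm4
        have hFt_le : μ[Ft|ℱ t] ≤ᵐ[μ] Ystar (k + 1) t (jT t) :=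
          (hSfam t ht1 ht2).1 _ ⟨τm, hm1, hm2, hm3, hm4, rfl⟩
        have q1 := RedAuxB.nst_condexp
          (μ := μ) (f := F) hσst t
        have q2 : μ[F|ℱ t] =ᵐ[μ.restrict {ω | σ ω = t}] μ[Ft|ℱ t] := by
          refine RedAuxB.condexp_restrict_congr (ℱ.le t)
            (RedAuxB.nst_meas_eq hσst t) hFint hFtint ?_
          intro ω hω
          have hωt : σ ω = t := hω
          refine congrFun (hXdep _ _ fun p hp1 hp2 => ?_) ω
          show (if p < k then j p else τ p ω) = (if p < k + 1 then jT t p else τm p ω)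
          by_cases hpk : p < k
          · rw [if_pos hpk, if_pos (by omega)]
            show j p = (if p = k then t else j p)
            rw [if_neg (by omega)]
          · by_cases hpk2 : p = k
            · rw [if_neg hpk, if_pos (by omega)]
              show τ p ω = (if p = k then t else j p)
              rw [if_pos hpk2, hpk2]
              exact hωt
            · rw [if_neg hpk, if_neg (by omega)]
              show τ p ω = (if k + 1 ≤ p ∧ p ≤ L then max (τ p ω) t else T + 1)
              rw [if_pos (show k + 1 ≤ p ∧ p ≤ L by omega)]
              have hge : t ≤ τ p ω := by
                rw [← hωt]
                exact hτge p (by omega) hp2 ω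
              exact (max_eq_left hge).symm
        filter_upwards [q1, q2, ae_restrict_of_ae hFt_le, ae_restrict_mem (hAmeas t)]
          with ω e1 e2 e3 e4
        show (μ[F|hσst.measurableSpace]) ω ≤ W ω
        have hωt : σ ω = t := e4
        have hWω : W ω = Ystar (k + 1) t (jT t) ω := by
          show Ystar (k + 1) (σ ω) (jT (σ ω)) ω = _
          rw [hωt]
        rw [e1, e2, hWω]
        exact e3
      have hmono := condExp_mono (μ := μ) (m := ℱ r) integrable_condExp hWint hcl
      refine Filter.EventuallyLE.trans ?_ hZW
      filter_upwards [hmono, htower] with ω h1 h2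
      rw [← h2]
      exact h1
end
end

section
/- Telescoping optional-sampling identity: for any family of martingales (M_r^{L−k+1, j_1,…,j_{k−1}})_{r ≥ j_{k−1}} indexed by 1 ≤ k ≤ L and chains i =: j_0 ≤ j_1 ≤ … ≤ j_{k−1} ≤ ∂, and for any chain of stopping times i ≤ τ^1 ≤ … ≤ τ^L ≤ ∂ with τ^0 := i, one has E[ Σ_{k=1}^{L} ( M_{τ^{k−1}}^{L−k+1, τ^1,…,τ^{k−1}} − M_{τ^k}^{L−k+1, τ^1,…,τ^{k−1}} ) | F_i ] = 0 almost surely. -/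
open MeasureTheory

noncomputable section

variable {Ω : Type*} [m0 : MeasurableSpace Ω]

/-- `M` is a martingale w.r.t. the filtration `ℱ` from time `p` on. -/
def IsMartingaleFrom (μ : Measure Ω) (ℱ : Filtration ℕ m0) (p : ℕ) (M : ℕ → Ω → ℝ) : Prop :=
  (∀ r, p ≤ r → StronglyMeasurable[ℱ r] (M r)) ∧
  (∀ r, p ≤ r → Integrable (M r) μ) ∧
  ∀ r, p ≤ r → μ[M (r + 1)|ℱ r] =ᵐ[μ] M r

/-- The chain `i = j 0 ≤ j 1 ≤ ... ≤ j m ≤ d`, normalized by `j p = 0` for `p > m`. -/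
def PrefChain (i m d : ℕ) (j : ℕ → ℕ) : Prop :=
  j 0 = i ∧ (∀ p, p < m → j p ≤ j (p + 1)) ∧ j m ≤ d ∧ ∀ p, m < p → j p = 0

set_option linter.unusedSectionVars false

namespace TOSaux

variable {μ : Measure Ω} [IsProbabilityMeasure μ] {ℱ : Filtration ℕ m0}

lemma setIntegral_mart {p : ℕ} {M : ℕ → Ω → ℝ} (hM : IsMartingaleFrom μ ℱ p M)
    {r : ℕ} (hpr : p ≤ r) {s : Set Ω} (hs : MeasurableSet[ℱ r] s) :
    ∀ d, r ≤ d → ∫ ω in s, M d ω ∂μ = ∫ ω in s, M r ω ∂μ := by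
  intro d hrd
  induction d, hrd using Nat.le_induction with
  | base => rfl
  | succ d hd ih =>
    have hsd : MeasurableSet[ℱ d] s := ℱ.mono hd _ hs
    have h1 : ∫ ω in s, M (d + 1) ω ∂μ = ∫ ω in s, (μ[M (d + 1)|ℱ d]) ω ∂μ :=
      (setIntegral_condExp (ℱ.le d) (hM.2.1 (d + 1) (by omega)) hsd).symm
    have h2 : ∫ ω in s, (μ[M (d + 1)|ℱ d]) ω ∂μ = ∫ ω in s, M d ω ∂μ :=
      setIntegral_congr_ae (ℱ.le d s hsd)
        ((hM.2.2 d (hpr.trans hd)).mono fun ω hω _ => hω)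
    rw [h1, h2, ih]

lemma sum_indicator_stopped {p d : ℕ} {σ : Ω → ℕ} (hp : ∀ ω, p ≤ σ ω) (hd : ∀ ω, σ ω ≤ d)
    (g : ℕ → Ω → ℝ) (ω : Ω) :
    ∑ r ∈ Finset.Icc p d, Set.indicator {ω' | σ ω' = r} (g r) ω = g (σ ω) ω := by
  rw [Finset.sum_eq_single_of_mem (σ ω) (Finset.mem_Icc.2 ⟨hp ω, hd ω⟩)
    (fun r _ hne => Set.indicator_of_notMem
      (show ω ∉ {ω' | σ ω' = r} from fun h => hne (Eq.symm h)) (g r))]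
  exact Set.indicator_of_mem (show ω ∈ {ω' | σ ω' = σ ω} from rfl) (g (σ ω))

lemma stopped_integrable {p d : ℕ} {M : ℕ → Ω → ℝ} (hM : IsMartingaleFrom μ ℱ p M)
    {σ : Ω → ℕ} (hσ : IsStoppingTime ℱ (fun ω => ((σ ω : ℕ) : WithTop ℕ))) (hp : ∀ ω, p ≤ σ ω) (hd : ∀ ω, σ ω ≤ d) :
    Integrable (fun ω => M (σ ω) ω) μ := by
  have heq : (fun ω => M (σ ω) ω)
      = fun ω => ∑ r ∈ Finset.Icc p d, Set.indicator {ω' | σ ω' = r} (M r) ω := by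
    funext ω; rw [sum_indicator_stopped hp hd]
  rw [heq]
  refine integrable_finset_sum _ fun r hr => ?_
  exact (hM.2.1 r (Finset.mem_Icc.1 hr).1).indicator (ℱ.le r _ (by simpa using hσ.measurableSet_eq r))

lemma setIntegral_stopped {p d : ℕ} {M : ℕ → Ω → ℝ} (hM : IsMartingaleFrom μ ℱ p M)
    {σ : Ω → ℕ} (hσ : IsStoppingTime ℱ (fun ω => ((σ ω : ℕ) : WithTop ℕ))) (hp : ∀ ω, p ≤ σ ω) (hd : ∀ ω, σ ω ≤ d)
    (hpd : p ≤ d) {C : Set Ω} (hC : MeasurableSet[ℱ p] C) :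
    ∫ ω in C, M (σ ω) ω ∂μ = ∫ ω in C, M p ω ∂μ := by
  have hCm : MeasurableSet C := ℱ.le p _ hC
  have heq : (fun ω => M (σ ω) ω)
      = fun ω => ∑ r ∈ Finset.Icc p d, Set.indicator {ω' | σ ω' = r} (M r) ω := by
    funext ω; rw [sum_indicator_stopped hp hd]
  have heq' : (fun ω => M (σ ω) ω) =ᵐ[μ.restrict C]
      fun ω => ∑ r ∈ Finset.Icc p d, Set.indicator {ω' | σ ω' = r} (M r) ω :=
    Filter.EventuallyEq.of_eq heq
  rw [integral_congr_ae heq']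
  have hσr : ∀ r, MeasurableSet {ω' | σ ω' = r} := fun r => ℱ.le r _ (by simpa using hσ.measurableSet_eq r)
  rw [integral_finset_sum _ (fun r hr =>
    (((hM.2.1 r (Finset.mem_Icc.1 hr).1).indicator (hσr r)).restrict))]
  have step : ∀ r ∈ Finset.Icc p d,
      ∫ ω in C, Set.indicator {ω' | σ ω' = r} (M r) ω ∂μ
        = ∫ ω in C, Set.indicator {ω' | σ ω' = r} (M d) ω ∂μ := by
    intro r hr
    obtain ⟨hpr, hrd⟩ := Finset.mem_Icc.1 hr
    rw [setIntegral_indicator (hσr r), setIntegral_indicator (hσr r)]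
    exact (setIntegral_mart hM hpr
      ((ℱ.mono hpr _ hC).inter (by simpa using hσ.measurableSet_eq r)) d hrd).symm
  rw [Finset.sum_congr rfl step, ← integral_finset_sum _ (fun r hr =>
    (((hM.2.1 d hpd).indicator (hσr r)).restrict))]
  · have hMd : (fun ω => ∑ r ∈ Finset.Icc p d, Set.indicator {ω' | σ ω' = r} (M d) ω)
        = fun ω => M d ω := by
      funext ω
      rw [sum_indicator_stopped hp hd (fun _ => M d) ω]
    rw [hMd]
    exact setIntegral_mart hM le_rfl hC d hpd

end TOSaux

/-- **Telescoping optional-sampling identity.** For any family of martingales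
`(M k j r)_{r ≥ j (k-1)}` indexed by `1 ≤ k ≤ L` and chains `i = j 0 ≤ j 1 ≤ ... ≤ j (k-1) ≤ T+1`,
and any chain of stopping times `i ≤ τ 1 ≤ ... ≤ τ L ≤ T + 1` (with `τ 0 := i`),
`E[ ∑_{k=1}^{L} ( M_{τ (k-1)}^{k, τ 1, ..., τ (k-1)} - M_{τ k}^{k, τ 1, ..., τ (k-1)} ) | ℱ i ] = 0`
almost surely. -/
theorem telescoping_optional_sampling
    (T L i : ℕ) (μ : Measure Ω) [IsProbabilityMeasure μ] (ℱ : Filtration ℕ m0)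
    (M : ℕ → (ℕ → ℕ) → ℕ → Ω → ℝ)
    (hM : ∀ k, 1 ≤ k → k ≤ L → ∀ j : ℕ → ℕ, PrefChain i (k - 1) (T + 1) j →
      IsMartingaleFrom μ ℱ (j (k - 1)) (M k j))
    (τ : ℕ → Ω → ℕ)
    (hτ0 : ∀ ω, τ 0 ω = i)
    (hτst : ∀ p, 1 ≤ p → p ≤ L → IsStoppingTime ℱ (fun ω => ((τ p ω : ℕ) : WithTop ℕ)))
    (hτi : ∀ ω, i ≤ τ 1 ω)
    (hτmono : ∀ p, 1 ≤ p → p < L → ∀ ω, τ p ω ≤ τ (p + 1) ω)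
    (hτd : ∀ ω, τ L ω ≤ T + 1) :
    μ[(fun ω => ∑ k ∈ Finset.Icc 1 L,
        (M k (fun p => if p < k then τ p ω else 0) (τ (k - 1) ω) ω
          - M k (fun p => if p < k then τ p ω else 0) (τ k ω) ω))|ℱ i]
      =ᵐ[μ] 0 := by
  classical
  have hmono : ∀ p q, p ≤ q → q ≤ L → ∀ ω, τ p ω ≤ τ q ω := by
    intro p q hpq
    induction q, hpq using Nat.le_induction with
    | base => exact fun _ ω => le_rfl
    | succ q hq ih =>
      intro hqL ω
      refine (ih (by omega) ω).trans ?_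
      rcases Nat.eq_zero_or_pos q with h0 | h1
      · subst h0; rw [hτ0]; exact hτi ω
      · exact hτmono q h1 (by omega) ω
  have hbound : ∀ p, p ≤ L → ∀ ω, τ p ω ≤ T + 1 :=
    fun p hp ω => (hmono p L hp le_rfl ω).trans (hτd ω)
  have key : ∀ k ∈ Finset.Icc 1 L,
      Integrable (fun ω => M k (fun p => if p < k then τ p ω else 0) (τ (k - 1) ω) ω
          - M k (fun p => if p < k then τ p ω else 0) (τ k ω) ω) μ
      ∧ ∀ A : Set Ω, MeasurableSet[ℱ i] A →
        ∫ ω in A, (M k (fun p => if p < k then τ p ω else 0) (τ (k - 1) ω) ω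
          - M k (fun p => if p < k then τ p ω else 0) (τ k ω) ω) ∂μ = 0 := by
    intro k hk
    obtain ⟨hk1, hkL⟩ := Finset.mem_Icc.1 hk
    set Φ : Ω → (ℕ → ℕ) := fun ω p => if p < k then τ p ω else 0 with hΦ
    set J : Finset (ℕ → ℕ) :=
      (Finset.univ : Finset (Fin k → Fin (T + 2))).image
        (fun f p => if h : p < k then (f ⟨p, h⟩ : ℕ) else 0) with hJ
    have hΦmem : ∀ ω, Φ ω ∈ J := by
      intro ω
      refine Finset.mem_image.2 ⟨fun q => ⟨τ (q : ℕ) ω,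
        Nat.lt_succ_of_le (hbound q (le_of_lt (lt_of_lt_of_le q.2 hkL)) ω)⟩,
        Finset.mem_univ _, ?_⟩
      funext p
      by_cases h : p < k
      · simp [hΦ, h]
      · simp [hΦ, h]
    have hτk : IsStoppingTime ℱ (fun ω => ((τ k ω : ℕ) : WithTop ℕ)) := hτst k hk1 hkL
    have perj : ∀ j ∈ J, Integrable (Set.indicator (Φ ⁻¹' {j})
          (fun ω => M k j (j (k - 1)) ω - M k j (max (τ k ω) (j (k - 1))) ω)) μ
        ∧ ∀ A : Set Ω, MeasurableSet[ℱ i] A →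
          ∫ ω in A, Set.indicator (Φ ⁻¹' {j})
            (fun ω' => M k j (j (k - 1)) ω' - M k j (max (τ k ω') (j (k - 1))) ω') ω ∂μ = 0 := by
      intro j hjJ
      by_cases hB : Φ ⁻¹' {j} = ∅
      · rw [hB]
        simp only [Set.indicator_empty]
        exact ⟨integrable_zero _ _ _, fun A _ => by simp⟩
      · obtain ⟨ω₀, hω₀⟩ := Set.nonempty_iff_ne_empty.2 hB
        have hω₀' : Φ ω₀ = j := hω₀
        have hjval : ∀ p, p < k → j p = τ p ω₀ := fun p hp => by
          rw [← hω₀']; simp [hΦ, hp]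
        have hj0 : ∀ p, k ≤ p → j p = 0 := fun p hp => by
          rw [← hω₀']; simp [hΦ, Nat.not_lt.2 hp]
        have hchain : PrefChain i (k - 1) (T + 1) j := by
          refine ⟨?_, ?_, ?_, ?_⟩
          · rw [hjval 0 (by omega), hτ0]
          · intro p hp
            rw [hjval p (by omega), hjval (p + 1) (by omega)]
            exact hmono p (p + 1) (by omega) (by omega) ω₀
          · rw [hjval (k - 1) (by omega)]; exact hbound (k - 1) (by omega) ω₀
          · intro p hp; exact hj0 p (by omega)
        have mart := hM k hk1 hkL j hchain
        have hjmono : ∀ p, p ≤ k - 1 → j p ≤ j (k - 1) := by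
          intro p hp
          rw [hjval p (by omega), hjval (k - 1) (by omega)]
          exact hmono p (k - 1) hp (by omega) ω₀
        have hij : i ≤ j (k - 1) := by rw [← hchain.1]; exact hjmono 0 (Nat.zero_le _)
        have hBeq : Φ ⁻¹' {j} = ⋂ p ∈ Finset.range k, {ω | τ p ω = j p} := by
          ext ω
          simp only [Set.mem_preimage, Set.mem_singleton_iff, Set.mem_iInter,
            Set.mem_setOf_eq, Finset.mem_range]
          constructor
          · intro h p hp
            rw [← h]; simp [hΦ, hp]
          · intro h
            funext p
            by_cases hp : p < k
            · show (if p < k then τ p ω else 0) = j p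
              rw [if_pos hp, h p hp]
            · show (if p < k then τ p ω else 0) = j p
              rw [if_neg hp, hj0 p (Nat.not_lt.1 hp)]
        have hBF : MeasurableSet[ℱ (j (k - 1))] (Φ ⁻¹' {j}) := by
          rw [hBeq]
          refine Finset.measurableSet_biInter _ (fun p hp => ?_)
          have hpk : p < k := Finset.mem_range.1 hp
          rcases Nat.eq_zero_or_pos p with h0 | h1
          · subst h0
            have huniv : {ω | τ 0 ω = j 0} = Set.univ := by
              ext ω; simp [hτ0, hchain.1]
            rw [huniv]; exact MeasurableSet.univ
          · exact ℱ.mono (hjmono p (by omega)) _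
              (by simpa using (hτst p h1 (by omega)).measurableSet_eq (j p))
        have hBm : MeasurableSet (Φ ⁻¹' {j}) := ℱ.le _ _ hBF
        have hσ : IsStoppingTime ℱ (fun ω => ((max (τ k ω) (j (k - 1)) : ℕ) : WithTop ℕ)) := by
            intro r; convert hτk.max_const (j (k - 1)) r using 2; ext ω; simp
        have hσp : ∀ ω, j (k - 1) ≤ max (τ k ω) (j (k - 1)) := fun ω => le_max_right _ _
        have hσd : ∀ ω, max (τ k ω) (j (k - 1)) ≤ T + 1 :=
          fun ω => max_le (hbound k hkL ω) hchain.2.2.1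
        have hint1 : Integrable (fun ω => M k j (j (k - 1)) ω) μ := mart.2.1 _ le_rfl
        have hint2 : Integrable (fun ω => M k j (max (τ k ω) (j (k - 1))) ω) μ :=
          TOSaux.stopped_integrable mart hσ hσp hσd
        refine ⟨(hint1.sub hint2).indicator hBm, fun A hA => ?_⟩
        rw [setIntegral_indicator hBm]
        have hCF : MeasurableSet[ℱ (j (k - 1))] (A ∩ Φ ⁻¹' {j}) :=
          ((ℱ.mono hij) _ hA).inter hBF
        rw [integral_sub hint1.restrict hint2.restrict,
          TOSaux.setIntegral_stopped mart hσ hσp hσd hchain.2.2.1 hCF]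
        exact sub_self _
    have hXeq : (fun ω => M k (fun p => if p < k then τ p ω else 0) (τ (k - 1) ω) ω
          - M k (fun p => if p < k then τ p ω else 0) (τ k ω) ω)
        = fun ω => ∑ j ∈ J, Set.indicator (Φ ⁻¹' {j})
            (fun ω' => M k j (j (k - 1)) ω' - M k j (max (τ k ω') (j (k - 1))) ω') ω := by
      funext ω
      rw [Finset.sum_eq_single_of_mem (Φ ω) (hΦmem ω) (fun j _ hne =>
        Set.indicator_of_notMem
          (show ω ∉ Φ ⁻¹' {j} from fun h => hne (Eq.symm h)) _)]
      rw [Set.indicator_of_mem (show ω ∈ Φ ⁻¹' {Φ ω} from rfl)]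
      have hΦω : (fun p => if p < k then τ p ω else 0) = Φ ω := rfl
      have hΦk : Φ ω (k - 1) = τ (k - 1) ω := if_pos (by omega)
      have hmax : max (τ k ω) (τ (k - 1) ω) = τ k ω :=
        max_eq_left (hmono (k - 1) k (by omega) hkL ω)
      rw [hΦω, hΦk, hmax]
    refine ⟨?_, ?_⟩
    · rw [hXeq]
      exact integrable_finset_sum _ (fun j hj => (perj j hj).1)
    · intro A hA
      rw [hXeq, integral_finset_sum _ (fun j hj => ((perj j hj).1).restrict)]
      exact Finset.sum_eq_zero (fun j hj => (perj j hj).2 A hA)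
  have hFint : Integrable (fun ω => ∑ k ∈ Finset.Icc 1 L,
      (M k (fun p => if p < k then τ p ω else 0) (τ (k - 1) ω) ω
        - M k (fun p => if p < k then τ p ω else 0) (τ k ω) ω)) μ :=
    integrable_finset_sum _ (fun k hk => (key k hk).1)
  have hFset : ∀ A : Set Ω, MeasurableSet[ℱ i] A →
      ∫ ω in A, (∑ k ∈ Finset.Icc 1 L,
        (M k (fun p => if p < k then τ p ω else 0) (τ (k - 1) ω) ω
          - M k (fun p => if p < k then τ p ω else 0) (τ k ω) ω)) ∂μ = 0 := by
    intro A hA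
    rw [integral_finset_sum _ (fun k hk => ((key k hk).1).restrict)]
    exact Finset.sum_eq_zero (fun k hk => (key k hk).2 A hA)
  refine (ae_eq_condExp_of_forall_setIntegral_eq (ℱ.le i) hFint
    (fun s _ _ => integrableOn_zero)
    (fun s hs hμs => by simpa using (hFset s hs).symm)
    (StronglyMeasurable.aestronglyMeasurable
      (stronglyMeasurable_const : StronglyMeasurable[ℱ i] (fun _ : Ω => (0 : ℝ))))).symm
end
end

section
/- Weak duality for general multiple stopping: for any 0 ≤ i ≤ ∂ and any family of martingales (M_r^{L−k+1, j_1,…,j_{k−1}})_{r ≥ j_{k−1}}, indexed by 1 ≤ k ≤ L and chains i =: j_0 ≤ j_1 ≤ … ≤ j_{k−1}, it holds almost surely that Y*_i^{L} ≤ E[ max over chains i ≤ j_1 ≤ … ≤ j_L ≤ ∂ of ( X_{j_1,…,j_L} + Σ_{k=1}^{L} ( M_{j_{k−1}}^{L−k+1, j_1,…,j_{k−1}} − M_{j_k}^{L−k+1, j_1,…,j_{k−1}} ) ) | F_i ]. -/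
open MeasureTheory

noncomputable section

variable {Ω : Type*} [m0 : MeasurableSpace Ω]

/- ### Auxiliary lemmas -/

lemma prefChain_mono {i m d : ℕ} {j : ℕ → ℕ} (h : PrefChain i m d j) :
    ∀ p q, p ≤ q → q ≤ m → j p ≤ j q := by
  intro p q hpq hqm
  induction q with
  | zero => cases Nat.le_zero.mp hpq; exact le_rfl
  | succ n ih =>
    rcases Nat.eq_or_lt_of_le hpq with rfl | h'
    · exact le_rfl
    · exact le_trans (ih (by omega) (by omega)) (h.2.1 n (by omega))

lemma prefChain_le_d {i m d : ℕ} {j : ℕ → ℕ} (h : PrefChain i m d j) {p : ℕ} (hp : p ≤ m) :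
    j p ≤ d :=
  le_trans (prefChain_mono h p m hp le_rfl) h.2.2.1

lemma prefChain_finite (i m d : ℕ) : {j : ℕ → ℕ | PrefChain i m d j}.Finite := by
  classical
  apply Set.Finite.of_finite_image
    (f := fun j (p : Fin (m + 1)) => (⟨min (j p) d, by omega⟩ : Fin (d + 1)))
  · exact Set.toFinite _
  · intro j hj j' hj' hfe
    funext p
    by_cases hp : p ≤ m
    · have := congrFun hfe ⟨p, by omega⟩
      simp only [Fin.mk.injEq] at this
      have h1 : j p ≤ d := prefChain_le_d hj hp
      have h2 : j' p ≤ d := prefChain_le_d hj' hp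
      omega
    · rw [hj.2.2.2 p (by omega), hj'.2.2.2 p (by omega)]

lemma prefChain_const {i m d : ℕ} (hi : i ≤ d) :
    PrefChain i m d (fun p => if p ≤ m then i else 0) := by
  refine ⟨by simp, fun p hp => ?_, by simp [hi], fun p hp => by simp [Nat.not_le.mpr hp]⟩
  by_cases h : p + 1 ≤ m <;> simp [Nat.le_of_lt hp, h] <;> omega

lemma telescope_Ico (f : ℕ → ℝ) {a b : ℕ} (h : a ≤ b) :
    ∑ r ∈ Finset.Ico a b, (f (r + 1) - f r) = f b - f a := by
  rw [Finset.sum_Ico_eq_sub _ h, Finset.sum_range_sub, Finset.sum_range_sub]; ring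

lemma sup'_integrable {ι : Type*} {μ : Measure Ω} (s : Finset ι) (hs : s.Nonempty) (f : ι → Ω → ℝ)
    (hf : ∀ j ∈ s, Integrable (f j) μ) :
    Integrable (fun ω => s.sup' hs fun j => f j ω) μ := by
  classical
  revert hf
  induction hs using Finset.Nonempty.cons_induction with
  | singleton j => intro hf; simpa using hf j (by simp)
  | cons j t hjt ht ih =>
    intro hf
    have hih := ih (fun a ha => hf a (by simp [ha]))
    have heq : (fun ω => (Finset.cons j t hjt).sup' (Finset.cons_nonempty hjt) fun a => f a ω)
        = fun ω => f j ω ⊔ t.sup' ht fun a => f a ω := by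
      funext ω; exact Finset.sup'_cons (f := fun a => f a ω) ht
    rw [heq]
    exact (hf j (by simp)).sup hih

/- ### Main theorem -/

/-- **Weak duality for general multiple stopping.** For any family of martingales
`(M k j r)_{r ≥ j (k-1)}` indexed by `1 ≤ k ≤ L` and chains `i = j 0 ≤ j 1 ≤ ... ≤ j (k-1)`,
almost surely
`Y*_i^L ≤ E[ max over chains i ≤ j 1 ≤ ... ≤ j L ≤ T+1 of
  ( X_{j 1, ..., j L} + ∑_{k=1}^{L} ( M_{j (k-1)}^{k, j 1, ..., j (k-1)} - M_{j k}^{k, j 1, ..., j (k-1)} ) ) | ℱ i ]`. -/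
theorem weak_duality_general_multiple_stopping
    (T L i : ℕ) (μ : Measure Ω) [IsProbabilityMeasure μ] (ℱ : Filtration ℕ m0)
    (hi : i ≤ T + 1)
    (X : (ℕ → ℕ) → Ω → ℝ)
    (hXdep : ∀ j j' : ℕ → ℕ, (∀ p, 1 ≤ p → p ≤ L → j p = j' p) → X j = X j')
    (hX : ∀ j : ℕ → ℕ, DetChain L (T + 1) j →
      StronglyMeasurable[ℱ (j L)] (X j) ∧ Integrable (X j) μ)
    -- `Ystar` is the value `Y*_i^L` of the multiple stopping problem at time `i`
    (Ystar : Ω → ℝ)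
    (hY : IsEssSupFamily μ (snellFamily T L μ ℱ X 1 i (fun _ => i)) Ystar)
    (M : ℕ → (ℕ → ℕ) → ℕ → Ω → ℝ)
    (hM : ∀ k, 1 ≤ k → k ≤ L → ∀ j : ℕ → ℕ, PrefChain i (k - 1) (T + 1) j →
      IsMartingaleFrom μ ℱ (j (k - 1)) (M k j)) :
    Ystar ≤ᵐ[μ]
      μ[(fun ω => sSup { x : ℝ | ∃ j : ℕ → ℕ, PrefChain i L (T + 1) j ∧
          x = X j ω + ∑ k ∈ Finset.Icc 1 L,
            (M k (fun p => if p < k then j p else 0) (j (k - 1)) ω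
              - M k (fun p => if p < k then j p else 0) (j k) ω) })|ℱ i] := by
  classical
  obtain ⟨hub, hlub⟩ := hY
  -- the finite set of deterministic chains
  have hCfin : {j : ℕ → ℕ | PrefChain i L (T + 1) j}.Finite := prefChain_finite i L (T + 1)
  set Fc : Finset (ℕ → ℕ) := hCfin.toFinset with hFcdef
  have hFmem : ∀ j, j ∈ Fc ↔ PrefChain i L (T + 1) j := fun j => by
    simp [hFcdef, Set.Finite.mem_toFinset]
  have hFne : Fc.Nonempty := ⟨_, (hFmem _).mpr (prefChain_const hi)⟩
  -- the pathwise objective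
  set val : (ℕ → ℕ) → Ω → ℝ := fun j ω => X j ω + ∑ k ∈ Finset.Icc 1 L,
      (M k (fun p => if p < k then j p else 0) (j (k - 1)) ω
        - M k (fun p => if p < k then j p else 0) (j k) ω) with hvaldef
  -- cut chains are prefix chains
  have hcut : ∀ j : ℕ → ℕ, PrefChain i L (T + 1) j → ∀ k, 1 ≤ k → k ≤ L →
      PrefChain i (k - 1) (T + 1) (fun p => if p < k then j p else 0) := by
    intro j hj k hk1 hkL
    refine ⟨?_, fun p hp => ?_, ?_, fun p hp => ?_⟩
    · simp only [if_pos (by omega : 0 < k)]; exact hj.1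
    · simp only [if_pos (by omega : p < k), if_pos (by omega : p + 1 < k)]
      exact hj.2.1 p (by omega)
    · simp only [if_pos (by omega : k - 1 < k)]
      exact prefChain_le_d hj (by omega)
    · simp only [if_neg (by omega : ¬ p < k)]
  -- the martingale property along cut chains
  have hMart : ∀ j : ℕ → ℕ, PrefChain i L (T + 1) j → ∀ k, 1 ≤ k → k ≤ L →
      IsMartingaleFrom μ ℱ (j (k - 1)) (M k (fun p => if p < k then j p else 0)) := by
    intro j hj k hk1 hkL
    have h := hM k hk1 hkL _ (hcut j hj k hk1 hkL)
    simpa only [if_pos (by omega : k - 1 < k)] using h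
  -- integrability of the pathwise objective
  have hvalInt : ∀ j ∈ Fc, Integrable (val j) μ := by
    intro j hjF
    have hj := (hFmem j).mp hjF
    have hDet : DetChain L (T + 1) j :=
      ⟨fun p _ hpL => hj.2.1 p hpL, fun p _ hpL => prefChain_le_d hj hpL⟩
    refine (hX j hDet).2.add (integrable_finset_sum _ ?_)
    intro k hk
    rw [Finset.mem_Icc] at hk
    obtain ⟨_, hint, _⟩ := hMart j hj k hk.1 hk.2
    have h1 : j (k - 1) ≤ j k := prefChain_mono hj (k - 1) k (by omega) hk.2
    exact (hint _ le_rfl).sub (hint _ h1)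
  -- the finite-max form of the dual payoff
  set Gs : Ω → ℝ := fun ω => Fc.sup' hFne fun j => val j ω with hGsdef
  have hGsInt : Integrable Gs μ := sup'_integrable Fc hFne val hvalInt
  have hGsup : (fun ω => sSup { x : ℝ | ∃ j : ℕ → ℕ, PrefChain i L (T + 1) j ∧
          x = X j ω + ∑ k ∈ Finset.Icc 1 L,
            (M k (fun p => if p < k then j p else 0) (j (k - 1)) ω
              - M k (fun p => if p < k then j p else 0) (j k) ω) }) = Gs := by
    funext ω
    show _ = Fc.sup' hFne fun j => val j ω
    rw [Finset.sup'_eq_csSup_image]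
    congr 1
    ext x
    simp only [Set.mem_setOf_eq, Finset.coe_sort_coe, Set.mem_image, Finset.mem_coe]
    constructor
    · rintro ⟨j, hj, rfl⟩
      exact ⟨j, (hFmem j).mpr hj, rfl⟩
    · rintro ⟨j, hj, rfl⟩
      exact ⟨j, (hFmem j).mp hj, rfl⟩
  rw [hGsup]
  refine hlub _ ?_
  intro g hg
  simp only [snellFamily, Set.mem_setOf_eq] at hg
  obtain ⟨τ, hτ, hτ1, hτmono, hτL, rfl⟩ := hg
  -- the augmented chain of stopping times, `σ 0 = i`
  set σ : ℕ → Ω → ℕ := fun p ω => if p = 0 then i else τ p ω with hσdef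
  have hσle : ∀ ω p q, p ≤ q → q ≤ L → σ p ω ≤ σ q ω := by
    intro ω p q hpq hq
    induction q with
    | zero => cases Nat.le_zero.mp hpq; exact le_rfl
    | succ n ih =>
      rcases Nat.eq_or_lt_of_le hpq with rfl | h'
      · exact le_rfl
      · refine le_trans (ih (by omega) (by omega)) ?_
        rcases Nat.eq_zero_or_pos n with rfl | hn
        · simpa [hσdef] using hτ1 ω
        · simp only [hσdef, if_neg (by omega : ¬ n = 0), if_neg (by omega : ¬ n + 1 = 0)]
          exact hτmono n hn (by omega) ω
  have hσT : ∀ ω p, p ≤ L → σ p ω ≤ T + 1 := by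
    intro ω p hp
    refine le_trans (hσle ω p L hp le_rfl) ?_
    rcases Nat.eq_zero_or_pos L with rfl | hL
    · simpa [hσdef] using hi
    · simp only [hσdef]
      rw [if_neg (by omega : ¬ L = 0)]
      exact hτL ω
  -- the random chain
  set Jf : Ω → ℕ → ℕ := fun ω p => if p ≤ L then σ p ω else 0 with hJfdef
  have hJchain : ∀ ω, PrefChain i L (T + 1) (Jf ω) := by
    intro ω
    refine ⟨by simp [hJfdef, hσdef], fun p hp => ?_, ?_, fun p hp => ?_⟩
    · simp only [hJfdef, if_pos (by omega : p ≤ L), if_pos (by omega : p + 1 ≤ L)]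
      exact hσle ω p (p + 1) (by omega) (by omega)
    · simp only [hJfdef, if_pos (le_refl L)]
      exact hσT ω L le_rfl
    · simp only [hJfdef, if_neg (by omega : ¬ p ≤ L)]
  have hJmem : ∀ ω, Jf ω ∈ Fc := fun ω => (hFmem _).mpr (hJchain ω)
  -- A is dominated by Gs pathwise
  have hA_le : ∀ ω, val (Jf ω) ω ≤ Gs ω := fun ω =>
    Finset.le_sup' (fun j => val j ω) (hJmem ω)
  -- the martingale increments at the random times
  set Dk : ℕ → Ω → ℝ := fun k ω =>
      M k (fun p => if p < k then Jf ω p else 0) (Jf ω k) ω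
        - M k (fun p => if p < k then Jf ω p else 0) (Jf ω (k - 1)) ω with hDkdef
  -- pointwise decomposition of the payoff
  have hdecomp : ∀ ω, X (fun p => if p < 1 then (fun _ => i) p else τ p ω) ω
      = val (Jf ω) ω + ∑ k ∈ Finset.Icc 1 L, Dk k ω := by
    intro ω
    have hXeq : X (fun p => if p < 1 then (fun _ => i) p else τ p ω) = X (Jf ω) := by
      refine hXdep _ _ (fun p hp1 hpL => ?_)
      simp only [hJfdef, hσdef, if_neg (by omega : ¬ p < 1), if_pos hpL,
        if_neg (by omega : ¬ p = 0)]
    rw [hXeq]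
    simp only [hvaldef, hDkdef]
    rw [add_assoc, ← Finset.sum_add_distrib]
    have hz : ∑ k ∈ Finset.Icc 1 L,
        ((M k (fun p => if p < k then Jf ω p else 0) (Jf ω (k - 1)) ω
            - M k (fun p => if p < k then Jf ω p else 0) (Jf ω k) ω)
          + (M k (fun p => if p < k then Jf ω p else 0) (Jf ω k) ω
            - M k (fun p => if p < k then Jf ω p else 0) (Jf ω (k - 1)) ω)) = 0 :=
      Finset.sum_eq_zero fun k _ => by ring
    rw [hz, add_zero]
  -- key: each increment is integrable with zero conditional expectation
  have hkey : ∀ k, 1 ≤ k → k ≤ L → Integrable (Dk k) μ ∧ μ[Dk k|ℱ i] =ᵐ[μ] 0 := by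
    intro k hk1 hkL
    have hPfin : {c : ℕ → ℕ | PrefChain i (k - 1) (T + 1) c}.Finite :=
      prefChain_finite i (k - 1) (T + 1)
    set Fk : Finset (ℕ → ℕ) := hPfin.toFinset with hFkdef
    have hFkmem : ∀ c, c ∈ Fk ↔ PrefChain i (k - 1) (T + 1) c := fun c => by
      simp [hFkdef, Set.Finite.mem_toFinset]
    -- the cut of the random chain
    set cJ : Ω → ℕ → ℕ := fun ω p => if p < k then σ p ω else 0 with hcJdef
    have hcJchain : ∀ ω, PrefChain i (k - 1) (T + 1) (cJ ω) := by
      intro ω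
      refine ⟨?_, fun p hp => ?_, ?_, fun p hp => ?_⟩
      · simp [hcJdef, hσdef, (by omega : 0 < k)]
      · simp only [hcJdef, if_pos (by omega : p < k), if_pos (by omega : p + 1 < k)]
        exact hσle ω p (p + 1) (by omega) (by omega)
      · simp only [hcJdef, if_pos (by omega : k - 1 < k)]
        exact hσT ω (k - 1) (by omega)
      · simp only [hcJdef, if_neg (by omega : ¬ p < k)]
    -- the elementary summands
    set F : (ℕ → ℕ) → ℕ → Ω → ℝ := fun c r =>
        ({ω | cJ ω = c} ∩ {ω | r < τ k ω}).indicator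
          (fun ω => M k c (r + 1) ω - M k c r ω) with hFdef
    -- pointwise decomposition of the increment
    have hDsum : Dk k = ∑ c ∈ Fk, ∑ r ∈ Finset.Ico (c (k - 1)) (T + 1), F c r := by
      funext ω
      simp only [Finset.sum_apply]
      set c0 : ℕ → ℕ := cJ ω with hc0def
      have hc0 : PrefChain i (k - 1) (T + 1) c0 := hcJchain ω
      have hc0mem : c0 ∈ Fk := (hFkmem _).mpr hc0
      have hother : ∀ c ∈ Fk, c ≠ c0 →
          (∑ r ∈ Finset.Ico (c (k - 1)) (T + 1), F c r ω) = 0 := by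
        intro c hc hne
        refine Finset.sum_eq_zero fun r _ => ?_
        apply Set.indicator_of_notMem
        rintro ⟨h1, -⟩
        exact hne (by rw [← h1])
      rw [Finset.sum_eq_single_of_mem c0 hc0mem hother]
      -- inner sum at `c0`
      have hck : c0 (k - 1) = σ (k - 1) ω := by
        simp [hc0def, hcJdef, (by omega : k - 1 < k)]
      have ht1 : c0 (k - 1) ≤ σ k ω := by
        rw [hck]; exact hσle ω (k - 1) k (by omega) hkL
      have ht2 : σ k ω ≤ T + 1 := hσT ω k hkL
      have hτσ : τ k ω = σ k ω := by
        simp only [hσdef]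
        rw [if_neg (by omega : ¬ k = 0)]
      rw [← Finset.sum_Ico_consecutive _ ht1 ht2]
      have hpart1 : ∑ r ∈ Finset.Ico (c0 (k - 1)) (σ k ω), F c0 r ω
          = M k c0 (σ k ω) ω - M k c0 (c0 (k - 1)) ω := by
        have hcong : ∀ r ∈ Finset.Ico (c0 (k - 1)) (σ k ω),
            F c0 r ω = M k c0 (r + 1) ω - M k c0 r ω := by
          intro r hr
          rw [Finset.mem_Ico] at hr
          have hmem : ω ∈ {ω' | cJ ω' = c0} ∩ {ω' | r < τ k ω'} := by
            refine ⟨hc0def.symm, ?_⟩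
            rw [Set.mem_setOf_eq, hτσ]
            exact hr.2
          simp only [hFdef]
          exact Set.indicator_of_mem hmem _
        rw [Finset.sum_congr rfl hcong]
        exact telescope_Ico (fun r => M k c0 r ω) ht1
      have hpart2 : ∑ r ∈ Finset.Ico (σ k ω) (T + 1), F c0 r ω = 0 := by
        refine Finset.sum_eq_zero fun r hr => ?_
        rw [Finset.mem_Ico] at hr
        simp only [hFdef]
        apply Set.indicator_of_notMem
        rintro ⟨-, h2⟩
        rw [Set.mem_setOf_eq, hτσ] at h2
        omega
      rw [hpart1, hpart2, add_zero]
      -- identify with `Dk k ω`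
      have hJk : Jf ω k = σ k ω := by simp [hJfdef, hkL]
      have hJk1 : Jf ω (k - 1) = σ (k - 1) ω := by simp [hJfdef, (by omega : k - 1 ≤ L)]
      have hcutJ : (fun p => if p < k then Jf ω p else 0) = c0 := by
        funext p
        by_cases hp : p < k
        · simp [hJfdef, hc0def, hcJdef, hp, (by omega : p ≤ L)]
        · simp [hc0def, hcJdef, hp]
      simp only [hDkdef, hcutJ, hJk, hJk1, hck]
    -- each summand has the required properties
    have hprop : ∀ c ∈ Fk, ∀ r ∈ Finset.Ico (c (k - 1)) (T + 1),
        Integrable (F c r) μ ∧ μ[F c r|ℱ i] =ᵐ[μ] 0 := by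
      intro c hcF r hr
      rw [Finset.mem_Ico] at hr
      have hc : PrefChain i (k - 1) (T + 1) c := (hFkmem _).mp hcF
      obtain ⟨hmS, hmI, hmM⟩ := hM k hk1 hkL c hc
      have hir : i ≤ r := by
        have h0 : c 0 = i := hc.1
        have hle : c 0 ≤ c (k - 1) := prefChain_mono hc 0 (k - 1) (by omega) le_rfl
        omega
      -- measurability of the indicator set w.r.t. `ℱ r`
      have hsr : MeasurableSet[ℱ r] ({ω | cJ ω = c} ∩ {ω | r < τ k ω}) := by
        have he1 : {ω | cJ ω = c} = ⋂ p ∈ Finset.range k, {ω | σ p ω = c p} := by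
          ext ω
          simp only [Set.mem_setOf_eq, Set.mem_iInter, Finset.mem_range, funext_iff, hcJdef]
          constructor
          · intro h p hp
            have := h p
            rwa [if_pos hp] at this
          · intro h p
            by_cases hp : p < k
            · rw [if_pos hp]; exact h p hp
            · rw [if_neg hp, hc.2.2.2 p (by omega)]
        have he2 : MeasurableSet[ℱ r] {ω | cJ ω = c} := by
          rw [he1]
          refine MeasurableSet.biInter (Set.to_countable _) fun p hp => ?_
          have hpk : p < k := Finset.mem_range.mp hp
          rcases Nat.eq_zero_or_pos p with rfl | hp1
          · have : {ω : Ω | σ 0 ω = c 0} = Set.univ := by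
              ext ω; simp [hσdef, hc.1]
            rw [this]; exact MeasurableSet.univ
          · have hset : {ω : Ω | σ p ω = c p} = {ω | τ p ω = c p} := by
              ext ω
              simp only [Set.mem_setOf_eq, hσdef]
              rw [if_neg (by omega : ¬ p = 0)]
            rw [hset]
            have hcp : c p ≤ r :=
              le_trans (prefChain_mono hc p (k - 1) (by omega) le_rfl) hr.1
            exact ℱ.mono hcp _ (by simpa using (hτ p).measurableSet_eq (c p))
        have he3 : MeasurableSet[ℱ r] {ω | r < τ k ω} := by
          have : {ω : Ω | r < τ k ω} = {ω | τ k ω ≤ r}ᶜ := by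
            ext ω; simp only [Set.mem_setOf_eq, Set.mem_compl_iff, not_le]
          rw [this]
          exact (by simpa using hτ k r : MeasurableSet[ℱ r] {ω | τ k ω ≤ r}).compl
        exact he2.inter he3
      have hdiffInt : Integrable (fun ω => M k c (r + 1) ω - M k c r ω) μ :=
        (hmI (r + 1) (by omega)).sub (hmI r hr.1)
      constructor
      · exact hdiffInt.indicator (ℱ.le r _ hsr)
      · -- conditional expectation is zero
        have h1 : μ[(fun ω => M k c (r + 1) ω - M k c r ω)|ℱ r] =ᵐ[μ] 0 := by
          have hsub : μ[(fun ω => M k c (r + 1) ω - M k c r ω)|ℱ r]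
              =ᵐ[μ] μ[M k c (r + 1)|ℱ r] - μ[M k c r|ℱ r] :=
            condExp_sub (hmI (r + 1) (by omega)) (hmI r hr.1) _
          have h2 : μ[M k c (r + 1)|ℱ r] =ᵐ[μ] M k c r := hmM r hr.1
          have h3 : μ[M k c r|ℱ r] = M k c r :=
            condExp_of_stronglyMeasurable (ℱ.le r) (hmS r hr.1) (hmI r hr.1)
          filter_upwards [hsub, h2] with ω hω h2ω
          rw [hω, Pi.sub_apply, h2ω, h3, Pi.zero_apply, sub_self]
        have h4 : μ[F c r|ℱ r] =ᵐ[μ] 0 := by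
          have h5 := condExp_indicator (μ := μ) (m := ℱ r) hdiffInt hsr
          refine (h5.trans ?_)
          filter_upwards [h1] with ω hω
          rw [Pi.zero_apply]
          by_cases hmem : ω ∈ {ω | cJ ω = c} ∩ {ω | r < τ k ω}
          · rw [Set.indicator_of_mem hmem, hω, Pi.zero_apply]
          · rw [Set.indicator_of_notMem hmem]
        have h6 : μ[μ[F c r|ℱ r]|ℱ i] =ᵐ[μ] μ[F c r|ℱ i] :=
          condExp_condExp_of_le (ℱ.mono hir) (ℱ.le r)
        refine h6.symm.trans ?_
        refine (condExp_congr_ae h4).trans ?_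
        rw [condExp_zero]
    -- assemble
    constructor
    · rw [hDsum]
      exact integrable_finset_sum' _ fun c hc =>
        integrable_finset_sum' _ fun r hr => (hprop c hc r hr).1
    · rw [hDsum]
      have houter := condExp_finset_sum (μ := μ) (m := ℱ i)
        (f := fun c => ∑ r ∈ Finset.Ico (c (k - 1)) (T + 1), F c r) (s := Fk)
        (fun c hc => integrable_finset_sum' _ fun r hr => (hprop c hc r hr).1)
      refine houter.trans ?_
      have hinner : ∀ c ∈ Fk,
          μ[∑ r ∈ Finset.Ico (c (k - 1)) (T + 1), F c r|ℱ i] =ᵐ[μ] 0 := by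
        intro c hc
        have h := condExp_finset_sum (μ := μ) (m := ℱ i)
          (f := fun r => F c r) (s := Finset.Ico (c (k - 1)) (T + 1))
          (fun r hr => (hprop c hc r hr).1)
        refine h.trans ?_
        have : ∀ r ∈ Finset.Ico (c (k - 1)) (T + 1), μ[F c r|ℱ i] =ᵐ[μ] (0 : Ω → ℝ) :=
          fun r hr => (hprop c hc r hr).2
        calc ∑ r ∈ Finset.Ico (c (k - 1)) (T + 1), μ[F c r|ℱ i]
            =ᵐ[μ] ∑ r ∈ Finset.Ico (c (k - 1)) (T + 1), (0 : Ω → ℝ) := by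
              exact eventuallyEq_sum this
          _ = 0 := by simp
      calc ∑ c ∈ Fk, μ[∑ r ∈ Finset.Ico (c (k - 1)) (T + 1), F c r|ℱ i]
          =ᵐ[μ] ∑ c ∈ Fk, (0 : Ω → ℝ) := by
            exact eventuallyEq_sum hinner
        _ = 0 := by simp
  -- integrability of the pathwise optimum along the random chain
  set eL : (ℕ → ℕ) → Set Ω := fun c => {ω | Jf ω = c} with heLdef
  have heLmeas : ∀ c ∈ Fc, MeasurableSet (eL c) := by
    intro c hcF
    have hc := (hFmem c).mp hcF
    have he1 : eL c = ⋂ p ∈ Finset.range (L + 1), {ω | σ p ω = c p} := by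
      ext ω
      simp only [heLdef, Set.mem_setOf_eq, Set.mem_iInter, Finset.mem_range, funext_iff, hJfdef]
      constructor
      · intro h p hp
        have := h p
        rwa [if_pos (by omega : p ≤ L)] at this
      · intro h p
        by_cases hp : p ≤ L
        · rw [if_pos hp]; exact h p (by omega)
        · rw [if_neg hp, hc.2.2.2 p (by omega)]
    rw [he1]
    refine MeasurableSet.biInter (Set.to_countable _) fun p hp => ?_
    rcases Nat.eq_zero_or_pos p with rfl | hp1
    · have huniv : {ω : Ω | σ 0 ω = c 0} = Set.univ := by
        ext ω; simp [hσdef, hc.1]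
      rw [huniv]; exact MeasurableSet.univ
    · have hset : {ω : Ω | σ p ω = c p} = {ω | τ p ω = c p} := by
        ext ω
        simp only [Set.mem_setOf_eq, hσdef]
        rw [if_neg (by omega : ¬ p = 0)]
      rw [hset]
      exact ℱ.le (c p) _ (by simpa using (hτ p).measurableSet_eq (c p))
  have hAdecomp : (fun ω => val (Jf ω) ω) = ∑ c ∈ Fc, (eL c).indicator (val c) := by
    funext ω
    rw [Finset.sum_apply]
    have hother : ∀ c ∈ Fc, c ≠ Jf ω → (eL c).indicator (val c) ω = 0 := by
      intro c hc hne
      apply Set.indicator_of_notMem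
      intro h
      simp only [heLdef, Set.mem_setOf_eq] at h
      exact hne h.symm
    rw [Finset.sum_eq_single_of_mem (Jf ω) (hJmem ω) hother]
    exact (Set.indicator_of_mem (show ω ∈ eL (Jf ω) from rfl) _).symm
  have hAint : Integrable (fun ω => val (Jf ω) ω) μ := by
    rw [hAdecomp]
    exact integrable_finset_sum' _ fun c hc => (hvalInt c hc).indicator (heLmeas c hc)
  have hDint : ∀ k ∈ Finset.Icc 1 L, Integrable (Dk k) μ := fun k hk => by
    rw [Finset.mem_Icc] at hk; exact (hkey k hk.1 hk.2).1
  -- final assembly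
  have hXg : (fun ω => X (fun p => if p < 1 then (fun _ => i) p else τ p ω) ω)
      = (fun ω => val (Jf ω) ω) + ∑ k ∈ Finset.Icc 1 L, Dk k := by
    funext ω
    rw [Pi.add_apply, Finset.sum_apply]
    exact hdecomp ω
  rw [hXg]
  have h1 : μ[(fun ω => val (Jf ω) ω) + ∑ k ∈ Finset.Icc 1 L, Dk k|ℱ i]
      =ᵐ[μ] μ[(fun ω => val (Jf ω) ω)|ℱ i] + μ[∑ k ∈ Finset.Icc 1 L, Dk k|ℱ i] :=
    condExp_add hAint (integrable_finset_sum' _ hDint) _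
  have h2 : μ[∑ k ∈ Finset.Icc 1 L, Dk k|ℱ i] =ᵐ[μ] 0 := by
    refine (condExp_finset_sum hDint _).trans ?_
    calc ∑ k ∈ Finset.Icc 1 L, μ[Dk k|ℱ i]
        =ᵐ[μ] ∑ k ∈ Finset.Icc 1 L, (0 : Ω → ℝ) :=
          eventuallyEq_sum fun k hk => by
            rw [Finset.mem_Icc] at hk; exact (hkey k hk.1 hk.2).2
      _ = 0 := by simp
  have h3 : μ[(fun ω => val (Jf ω) ω)|ℱ i] ≤ᵐ[μ] μ[Gs|ℱ i] :=
    condExp_mono hAint hGsInt (Filter.Eventually.of_forall hA_le)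
  filter_upwards [h1, h2, h3] with ω h1ω h2ω h3ω
  rw [h1ω, Pi.add_apply, h2ω, Pi.zero_apply, add_zero]
  exact h3ω
end
end

section
/- Interchange of essential supremum and conditional expectation across the refraction time: for 1 ≤ k ≤ L, 0 ≤ n ≤ L−k, a time r with stopping time ρ^r ∈ {r+1,…,∂}, it holds almost surely that ess sup over stopping times ρ^r ≤ τ^{k+n} ≤ … ≤ τ^L ≤ ∂ with C_{L−k−n+1}(τ^{k+n},…,τ^L) = 1 of E[ Σ_{p=k+n}^{L} U_{τ^p}^{p} ∏_{l=k+n}^{p−1} V_{τ^l}^{l} | F_r ] = E[ Y*_{ρ^r}^{L−k−n+1} | F_r ]. -/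
open MeasureTheory Filter Topology

noncomputable section

variable {Ω : Type*} [m0 : MeasurableSpace Ω]

/-- `ECount a l j` is the number of indices `r ∈ [a, l]` with `j r = j l`, i.e. the number
of rights exercised at time `j l` in the non-decreasing chain `j a ≤ ... ≤ j l`. -/
def ECount (a l : ℕ) (j : ℕ → ℕ) : ℕ :=
  ((Finset.Icc a l).filter fun r => j r = j l).card

/-- The volume constraint (given by `v`) and the refraction period constraint (given by the
stopping times `ρ`) hold at `ω` for the non-decreasing chain `j a ≤ ... ≤ j b` of exercise
dates; this is the event `C(j a, ..., j b) = 1`. -/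
def SatCons (v ρ : ℕ → Ω → ℕ) (a b : ℕ) (j : ℕ → ℕ) (ω : Ω) : Prop :=
  (∀ l, a ≤ l → l ≤ b → ECount a l j ≤ v (j l) ω) ∧
  ∀ l, a < l → l ≤ b → j (l - 1) < j l → ρ (j (l - 1)) ω ≤ j l

/-- The family of conditional payoffs whose essential supremum is the auxiliary Snell
envelope `Y*_r^{L-k+1}` of the constrained generic multiple stopping problem. -/
def auxFamily (T L : ℕ) (μ : Measure Ω) (ℱ : Filtration ℕ m0)
    (U V : ℕ → ℕ → Ω → ℝ) (v ρ : ℕ → Ω → ℕ) (k r : ℕ) : Set (Ω → ℝ) :=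
  { g | ∃ τ : ℕ → Ω → ℕ,
      (∀ p, IsStoppingTime ℱ (fun ω => (τ p ω : WithTop ℕ))) ∧
      (∀ ω, r ≤ τ k ω) ∧
      (∀ p, k ≤ p → p < L → ∀ ω, τ p ω ≤ τ (p + 1) ω) ∧
      (∀ ω, τ L ω ≤ T + 1) ∧
      (∀ ω, SatCons v ρ k L (fun p => τ p ω) ω) ∧
      g = μ[(fun ω => ∑ p ∈ Finset.Icc k L,
          U p (τ p ω) ω * ∏ l ∈ Finset.Ico k p, V l (τ l ω) ω)|ℱ r] }

/- ### Auxiliary lemmas -/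

section AuxLemmas

variable {μ : Measure Ω}

lemma isEssSupFamily_congr {S : Set (Ω → ℝ)} {Y Y' : Ω → ℝ} (h : Y =ᵐ[μ] Y')
    (hY : IsEssSupFamily μ S Y') : IsEssSupFamily μ S Y := by
  constructor
  · intro f hf
    filter_upwards [hY.1 f hf, h] with ω h1 h2
    rw [h2]; exact h1
  · intro Z hZ
    filter_upwards [hY.2 Z hZ, h] with ω h1 h2
    rw [h2]; exact h1

lemma ECount_congr {a l : ℕ} {j j' : ℕ → ℕ} (h : ∀ x, a ≤ x → x ≤ l → j x = j' x)
    (hal : a ≤ l) : ECount a l j = ECount a l j' := by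
  unfold ECount
  congr 1
  apply Finset.filter_congr
  intro x hx
  simp only [Finset.mem_Icc] at hx
  rw [h x hx.1 hx.2, h l hal le_rfl]

lemma SatCons_congr {v ρ : ℕ → Ω → ℕ} {a b : ℕ} {j j' : ℕ → ℕ} {ω : Ω}
    (h : ∀ x, a ≤ x → x ≤ b → j x = j' x) (hs : SatCons v ρ a b j ω) :
    SatCons v ρ a b j' ω := by
  obtain ⟨h1, h2⟩ := hs
  constructor
  · intro l hal hlb
    rw [← ECount_congr (fun x hx1 hx2 => h x hx1 (le_trans hx2 hlb)) hal, ← h l hal hlb]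
    exact h1 l hal hlb
  · intro l hal hlb
    rw [← h (l - 1) (by omega) (by omega), ← h l (by omega) hlb]
    exact h2 l hal hlb

lemma SatCons_const {v ρ : ℕ → Ω → ℕ} {T L a : ℕ} {ω : Ω} (ha : 1 ≤ a)
    (hvT : v (T + 1) ω = L) : SatCons v ρ a L (fun _ => T + 1) ω := by
  constructor
  · intro l hal hlL
    have hc : ECount a l (fun _ => T + 1) = l + 1 - a := by
      unfold ECount
      rw [Finset.filter_true_of_mem (fun x _ => rfl), Nat.card_Icc]
    simp only [hc, hvT]
    omega
  · intro l _ _ hlt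
    simp at hlt

lemma chain_mono' {L a : ℕ} {τ : ℕ → Ω → ℕ}
    (h : ∀ p, a ≤ p → p < L → ∀ ω, τ p ω ≤ τ (p + 1) ω) :
    ∀ p q (ω : Ω), a ≤ p → p ≤ q → q ≤ L → τ p ω ≤ τ q ω := by
  intro p q ω hap
  induction q with
  | zero =>
    intro hpq _
    have hp0 : p = 0 := Nat.le_zero.1 hpq
    exact hp0 ▸ le_rfl
  | succ m ih =>
    intro hpq hqL
    rcases Nat.lt_or_ge p (m + 1) with hlt | hge
    · have hpm : p ≤ m := by omega
      exact le_trans (ih hpm (by omega)) (h m (by omega) (by omega) ω)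
    · have hpe : p = m + 1 := by omega
      exact hpe ▸ le_rfl

lemma exists_monotone_limit [IsFiniteMeasure μ] {F : Set (Ω → ℝ)} {B : Ω → ℝ}
    (hne : F.Nonempty) (hint : ∀ f ∈ F, Integrable f μ) (hB : Integrable B μ)
    (hFB : ∀ f ∈ F, f ≤ᵐ[μ] B)
    (hdir : ∀ f ∈ F, ∀ g ∈ F, ∃ h ∈ F, h =ᵐ[μ] fun ω => max (f ω) (g ω)) :
    ∃ (Y : Ω → ℝ) (u : ℕ → Ω → ℝ), (∀ i, u i ∈ F) ∧
      (∀ᵐ ω ∂μ, Monotone fun i => u i ω) ∧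
      (∀ᵐ ω ∂μ, Tendsto (fun i => u i ω) atTop (𝓝 (Y ω))) ∧
      Integrable Y μ ∧ (∀ i, u i ≤ᵐ[μ] Y) ∧ (∀ f ∈ F, f ≤ᵐ[μ] Y) := by
  classical
  set I : Set ℝ := (fun f : Ω → ℝ => ∫ ω, f ω ∂μ) '' F with hI
  have hIne : I.Nonempty := hne.image _
  have hIbdd : BddAbove I := by
    refine ⟨∫ ω, B ω ∂μ, ?_⟩
    rintro x ⟨f, hf, rfl⟩
    exact integral_mono_ae (hint f hf) hB (hFB f hf)
  set s : ℝ := sSup I with hs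
  have hsel : ∀ i : ℕ, ∃ f, f ∈ F ∧ s - 1 / (i + 1) < ∫ ω, f ω ∂μ := by
    intro i
    obtain ⟨y, hy, hy2⟩ := exists_lt_of_lt_csSup hIne
      (show s - 1 / (i + 1 : ℝ) < s by
        have : (0:ℝ) < 1 / (i + 1) := by positivity
        linarith)
    obtain ⟨f, hf, rfl⟩ := hy
    exact ⟨f, hf, hy2⟩
  choose f0 hf0 hf0' using hsel
  -- recursive construction of an increasing sequence
  let u' : ℕ → {g : Ω → ℝ // g ∈ F} := fun i =>
    Nat.rec ⟨f0 0, hf0 0⟩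
      (fun i prev =>
        ⟨(hdir prev.1 prev.2 (f0 (i + 1)) (hf0 (i + 1))).choose,
          (hdir prev.1 prev.2 (f0 (i + 1)) (hf0 (i + 1))).choose_spec.1⟩) i
  set u : ℕ → Ω → ℝ := fun i => (u' i).1 with hu_def
  have hu : ∀ i, u i ∈ F := fun i => (u' i).2
  have hu_succ : ∀ i, u (i + 1) =ᵐ[μ] fun ω => max (u i ω) (f0 (i + 1) ω) := fun i =>
    (hdir (u' i).1 (u' i).2 (f0 (i + 1)) (hf0 (i + 1))).choose_spec.2
  have hle_succ : ∀ i, u i ≤ᵐ[μ] u (i + 1) := by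
    intro i
    filter_upwards [hu_succ i] with ω h
    rw [h]; exact le_max_left _ _
  have hf0_le : ∀ i, f0 i ≤ᵐ[μ] u i := by
    intro i
    cases i with
    | zero => exact Eventually.of_forall fun ω => le_rfl
    | succ i =>
      filter_upwards [hu_succ i] with ω h
      rw [h]; exact le_max_right _ _
  have hint_u : ∀ i, Integrable (u i) μ := fun i => hint _ (hu i)
  have hint_lb : ∀ i : ℕ, s - 1 / (i + 1) ≤ ∫ ω, u i ω ∂μ := fun i =>
    le_trans (le_of_lt (hf0' i)) (integral_mono_ae (hint _ (hf0 i)) (hint_u i) (hf0_le i))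
  have hall : ∀ᵐ ω ∂μ, (∀ i, u i ω ≤ u (i + 1) ω) ∧ ∀ i, u i ω ≤ B ω := by
    refine Eventually.and ?_ ?_
    · exact (ae_all_iff).2 fun i => hle_succ i
    · exact (ae_all_iff).2 fun i => hFB _ (hu i)
  set Y : Ω → ℝ := fun ω => ⨆ i, u i ω with hYdef
  have hgood : ∀ᵐ ω ∂μ, Monotone (fun i => u i ω) ∧
      Tendsto (fun i => u i ω) atTop (𝓝 (Y ω)) ∧ (∀ i, u i ω ≤ Y ω) ∧ Y ω ≤ B ω := by
    filter_upwards [hall] with ω hω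
    have hmono : Monotone fun i => u i ω := monotone_nat_of_le_succ hω.1
    have hbdd : BddAbove (Set.range fun i => u i ω) := by
      refine ⟨B ω, ?_⟩
      rintro x ⟨i, rfl⟩
      exact hω.2 i
    refine ⟨hmono, tendsto_atTop_ciSup hmono hbdd, fun i => le_ciSup hbdd i, ?_⟩
    exact ciSup_le fun i => hω.2 i
  have hmono_ae : ∀ᵐ ω ∂μ, Monotone fun i => u i ω := by
    filter_upwards [hgood] with ω h using h.1
  have htds : ∀ᵐ ω ∂μ, Tendsto (fun i => u i ω) atTop (𝓝 (Y ω)) := by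
    filter_upwards [hgood] with ω h using h.2.1
  have huY : ∀ i, u i ≤ᵐ[μ] Y := by
    intro i
    filter_upwards [hgood] with ω h using h.2.2.1 i
  have hYint : Integrable Y μ := by
    have hsm : AEStronglyMeasurable Y μ :=
      aestronglyMeasurable_of_tendsto_ae atTop (fun i => (hint_u i).1) htds
    refine Integrable.mono' (((hint_u 0).abs).add hB.abs) hsm ?_
    filter_upwards [hgood] with ω h
    have h1 : u 0 ω ≤ Y ω := h.2.2.1 0
    have h2 : Y ω ≤ B ω := h.2.2.2
    simp only [Pi.add_apply]
    rw [Real.norm_eq_abs, abs_le]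
    constructor
    · have := neg_abs_le (u 0 ω)
      have := abs_nonneg (B ω)
      linarith
    · have := le_abs_self (B ω)
      have := abs_nonneg (u 0 ω)
      linarith
  have hsY : s ≤ ∫ ω, Y ω ∂μ := by
    have hlim : Tendsto (fun i : ℕ => s - 1 / (i + 1 : ℝ)) atTop (𝓝 s) := by
      have := tendsto_one_div_add_atTop_nhds_zero_nat (𝕜 := ℝ)
      have h2 := tendsto_const_nhds (x := s) (f := atTop (α := ℕ))
      simpa using h2.sub this
    refine le_of_tendsto hlim (Eventually.of_forall fun i => ?_)
    exact le_trans (hint_lb i) (integral_mono_ae (hint_u i) hYint (huY i))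
  refine ⟨Y, u, hu, hmono_ae, htds, hYint, huY, ?_⟩
  intro f hf
  have hmi_int : ∀ i, Integrable (fun ω => max (f ω) (u i ω)) μ := fun i =>
    (hint f hf).sup (hint_u i)
  have hminf_int : Integrable (fun ω => max (f ω) (Y ω)) μ := (hint f hf).sup hYint
  have hmi_le : ∀ i, ∫ ω, max (f ω) (u i ω) ∂μ ≤ s := by
    intro i
    obtain ⟨w, hw, hweq⟩ := hdir f hf (u i) (hu i)
    rw [← integral_congr_ae hweq]
    exact le_csSup hIbdd ⟨w, hw, rfl⟩
  have htd2 : Tendsto (fun i => ∫ ω, max (f ω) (u i ω) ∂μ) atTop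
      (𝓝 (∫ ω, max (f ω) (Y ω) ∂μ)) := by
    refine integral_tendsto_of_tendsto_of_monotone hmi_int hminf_int ?_ ?_
    · filter_upwards [hmono_ae] with ω h i j hij
      exact max_le_max le_rfl (h hij)
    · filter_upwards [htds] with ω h
      exact (tendsto_const_nhds (x := f ω)).max h
  have hfin : ∫ ω, max (f ω) (Y ω) ∂μ ≤ ∫ ω, Y ω ∂μ :=
    le_trans (le_of_tendsto htd2 (Eventually.of_forall hmi_le)) hsY
  have hnonneg : 0 ≤ᵐ[μ] fun ω => max (f ω) (Y ω) - Y ω :=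
    Eventually.of_forall fun ω => by simp [le_max_right]
  have hzero : (fun ω => max (f ω) (Y ω) - Y ω) =ᵐ[μ] 0 := by
    rw [← integral_eq_zero_iff_of_nonneg_ae hnonneg (hminf_int.sub hYint)]
    refine le_antisymm ?_ ?_
    · rw [integral_sub hminf_int hYint]; linarith
    · rw [← integral_zero Ω ℝ (μ := μ)]
      exact integral_mono_ae (integrable_zero _ _ _) (hminf_int.sub hYint) hnonneg
  filter_upwards [hzero] with ω h
  have hmax : max (f ω) (Y ω) = Y ω := by
    have : max (f ω) (Y ω) - Y ω = 0 := h
    linarith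
  calc f ω ≤ max (f ω) (Y ω) := le_max_left _ _
    _ = Y ω := hmax

lemma ist_of {ℱ : Filtration ℕ m0} {σ : Ω → ℕ}
    (h : ∀ t : ℕ, MeasurableSet[ℱ t] {ω | σ ω ≤ t}) :
    IsStoppingTime ℱ (fun ω => (σ ω : WithTop ℕ)) := fun t => by simpa using h t

lemma st_le {ℱ : Filtration ℕ m0} {σ : Ω → ℕ}
    (h : IsStoppingTime ℱ (fun ω => (σ ω : WithTop ℕ))) (t : ℕ) :
    MeasurableSet[ℱ t] {ω | σ ω ≤ t} := by simpa using h t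

lemma mseq {ℱ : Filtration ℕ m0} {σ : Ω → ℕ}
    (h : IsStoppingTime ℱ (fun ω => (σ ω : WithTop ℕ))) (i : ℕ) :
    MeasurableSet[ℱ i] {ω | σ ω = i} := by simpa using h.measurableSet_eq i

end AuxLemmas

/-- **Interchange of essential supremum and conditional expectation across the refraction
time.** For `1 ≤ k ≤ L`, `0 ≤ n ≤ L - k` and a time `r ≤ T` with refraction stopping time
`ρ r ∈ {r+1, ..., T+1}`, the essential supremum over stopping chains
`ρ r ≤ τ (k+n) ≤ ... ≤ τ L ≤ T+1` satisfying the constraints of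
`E[ ∑_{p=k+n}^{L} U p (τ p) ∏_{l=k+n}^{p-1} V l (τ l) | ℱ r ]`
equals `E[ Y*_{ρ r}^{L-k-n+1} | ℱ r ]` almost surely. -/
theorem esssup_condexp_interchange_refraction
    (T L : ℕ) (μ : Measure Ω) [IsProbabilityMeasure μ] (ℱ : Filtration ℕ m0)
    (U V : ℕ → ℕ → Ω → ℝ) (v ρ : ℕ → Ω → ℕ)
    (hL : 1 ≤ L)
    (hU : ∀ p i, 1 ≤ p → p ≤ L → i ≤ T + 1 →
      StronglyMeasurable[ℱ i] (U p i) ∧ Integrable (U p i) μ)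
    (hV : ∀ l i, 1 ≤ l → l ≤ L - 1 → i ≤ T + 1 →
      StronglyMeasurable[ℱ i] (V l i) ∧ (∀ ω, 0 < V l i ω) ∧ ∃ c : ℝ, ∀ ω, V l i ω ≤ c)
    (hvad : ∀ i, i ≤ T + 1 → Measurable[ℱ i] (v i))
    (hvb : ∀ i ω, i ≤ T + 1 → 1 ≤ v i ω ∧ v i ω ≤ L)
    (hvT : ∀ ω, v (T + 1) ω = L)
    (hρ : ∀ i, i ≤ T → IsStoppingTime ℱ (fun ω => (ρ i ω : WithTop ℕ)) ∧ ∀ ω, i + 1 ≤ ρ i ω ∧ ρ i ω ≤ T + 1)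
    -- `Ystar k r` is the auxiliary Snell envelope `Y*_r^{L-k+1}`
    (Ystar : ℕ → ℕ → Ω → ℝ)
    (hY : ∀ k r, 1 ≤ k → k ≤ L → r ≤ T + 1 →
      IsEssSupFamily μ (auxFamily T L μ ℱ U V v ρ k r) (Ystar k r))
    (hY0 : ∀ r, Ystar (L + 1) r = 0)
    (k n r : ℕ) (hk1 : 1 ≤ k) (hkL : k ≤ L) (hn : n ≤ L - k) (hr : r ≤ T) :
    IsEssSupFamily μ
      { g | ∃ τ : ℕ → Ω → ℕ,
          (∀ p, IsStoppingTime ℱ (fun ω => (τ p ω : WithTop ℕ))) ∧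
          (∀ ω, ρ r ω ≤ τ (k + n) ω) ∧
          (∀ p, k + n ≤ p → p < L → ∀ ω, τ p ω ≤ τ (p + 1) ω) ∧
          (∀ ω, τ L ω ≤ T + 1) ∧
          (∀ ω, SatCons v ρ (k + n) L (fun p => τ p ω) ω) ∧
          g = μ[(fun ω => ∑ p ∈ Finset.Icc (k + n) L,
              U p (τ p ω) ω * ∏ l ∈ Finset.Ico (k + n) p, V l (τ l ω) ω)|ℱ r] }
      (μ[(fun ω => Ystar (k + n) (ρ r ω) ω)|ℱ r]) := by
  classical
  set κ := k + n with hκdef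
  have hκ1 : 1 ≤ κ := by omega
  have hκL : κ ≤ L := by omega
  obtain ⟨hρst, hρbd⟩ := hρ r hr
  set M : Finset ℕ := Finset.Icc (r + 1) (T + 1) with hMdef
  have hρmem : ∀ ω, ρ r ω ∈ M := fun ω => Finset.mem_Icc.2 ⟨(hρbd ω).1, (hρbd ω).2⟩
  have hMT : ∀ m ∈ M, m ≤ T + 1 := fun m hm => (Finset.mem_Icc.1 hm).2
  have hMr : ∀ m ∈ M, r ≤ m := fun m hm => by
    have := (Finset.mem_Icc.1 hm).1; omega
  set A : ℕ → Set Ω := fun m => {ω | ρ r ω = m} with hAdef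
  have hAmeas : ∀ m, MeasurableSet[ℱ m] (A m) := fun m => mseq hρst m
  have hAmeas0 : ∀ m, MeasurableSet (A m) := fun m => (ℱ.le m) _ (hAmeas m)
  have hsplit : ∀ (f : ℕ → Ω → ℝ) (ω : Ω),
      ∑ m ∈ M, (A m).indicator (f m) ω = f (ρ r ω) ω := by
    intro f ω
    have hz : ∀ m ∈ M, m ≠ ρ r ω → (A m).indicator (f m) ω = 0 := by
      intro m _ hne
      have hnm : ω ∉ A m := by
        intro hωA
        simp only [hAdef, Set.mem_setOf_eq] at hωA
        exact hne hωA.symm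
      exact Set.indicator_of_notMem hnm _
    rw [Finset.sum_eq_single_of_mem (ρ r ω) (hρmem ω) hz]
    exact Set.indicator_of_mem (show ω ∈ A (ρ r ω) from rfl) (f (ρ r ω))
  -- ### payoff machinery
  set X : (ℕ → Ω → ℕ) → Ω → ℝ := fun τ ω => ∑ p ∈ Finset.Icc κ L,
      U p (τ p ω) ω * ∏ l ∈ Finset.Ico κ p, V l (τ l ω) ω with hXdef
  -- bounds for V
  set Cl : ℕ → ℕ → ℝ := fun l i =>
    if h : 1 ≤ l ∧ l ≤ L - 1 ∧ i ≤ T + 1 then (hV l i h.1 h.2.1 h.2.2).2.2.choose else 1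
    with hCldef
  have hCl : ∀ l i (ω : Ω), 1 ≤ l → l ≤ L - 1 → i ≤ T + 1 → V l i ω ≤ Cl l i := by
    intro l i ω h1 h2 h3
    have : Cl l i = (hV l i h1 h2 h3).2.2.choose := by
      simp only [hCldef]
      rw [dif_pos (⟨h1, h2, h3⟩ : 1 ≤ l ∧ l ≤ L - 1 ∧ i ≤ T + 1)]
    rw [this]
    exact (hV l i h1 h2 h3).2.2.choose_spec ω
  set Ml : ℕ → ℝ := fun l => 1 + ∑ i ∈ Finset.range (T + 2), |Cl l i| with hMldef
  have hMl1 : ∀ l, 1 ≤ Ml l := by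
    intro l
    have : (0:ℝ) ≤ ∑ i ∈ Finset.range (T + 2), |Cl l i| :=
      Finset.sum_nonneg fun i _ => abs_nonneg _
    simp only [hMldef]; linarith
  have hVle : ∀ l i (ω : Ω), 1 ≤ l → l ≤ L - 1 → i ≤ T + 1 → V l i ω ≤ Ml l := by
    intro l i ω h1 h2 h3
    refine le_trans (hCl l i ω h1 h2 h3) (le_trans (le_abs_self _) ?_)
    have hmem : i ∈ Finset.range (T + 2) := Finset.mem_range.2 (by omega)
    have := Finset.single_le_sum (f := fun j => |Cl l j|)
      (fun j _ => abs_nonneg _) hmem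
    simp only [hMldef]; linarith
  have hone_le_prod : ∀ s : Finset ℕ, (1:ℝ) ≤ ∏ l ∈ s, Ml l := by
    intro s
    have := Finset.prod_le_prod (s := s) (f := fun _ => (1:ℝ)) (g := Ml)
      (fun i _ => zero_le_one) (fun i _ => hMl1 i)
    simpa using this
  set CC : ℝ := ∏ l ∈ Finset.Ico κ L, Ml l with hCCdef
  have hCC1 : 1 ≤ CC := hone_le_prod _
  -- the dominating integrable function
  set W : Ω → ℝ := fun ω => ∑ p ∈ Finset.Icc κ L,
      (∑ i ∈ Finset.range (T + 2), |U p i ω|) * CC with hWdef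
  have hUfact : ∀ p i, p ∈ Finset.Icc κ L → i ∈ Finset.range (T + 2) →
      StronglyMeasurable[ℱ i] (U p i) ∧ Integrable (U p i) μ := by
    intro p i hp hi
    simp only [Finset.mem_Icc] at hp
    simp only [Finset.mem_range] at hi
    exact hU p i (by omega) hp.2 (by omega)
  have hWint : Integrable W μ := by
    refine integrable_finset_sum _ fun p hp => ?_
    refine Integrable.mul_const ?_ _
    exact integrable_finset_sum _ fun i hi => ((hUfact p i hp hi).2).abs
  -- pointwise facts about payoffs for admissible chains
  have hprod_bd : ∀ (τ : ℕ → Ω → ℕ) (ω : Ω), (∀ p, κ ≤ p → p ≤ L → τ p ω ≤ T + 1) →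
      ∀ p ∈ Finset.Icc κ L, 0 ≤ (∏ l ∈ Finset.Ico κ p, V l (τ l ω) ω) ∧
        (∏ l ∈ Finset.Ico κ p, V l (τ l ω) ω) ≤ CC := by
    intro τ ω hbd p hp
    simp only [Finset.mem_Icc] at hp
    have hfac : ∀ l ∈ Finset.Ico κ p, 0 ≤ V l (τ l ω) ω ∧ V l (τ l ω) ω ≤ Ml l := by
      intro l hl
      simp only [Finset.mem_Ico] at hl
      have h1 : 1 ≤ l := le_trans hκ1 hl.1
      have h2 : l ≤ L - 1 := by omega
      have h3 : τ l ω ≤ T + 1 := hbd l hl.1 (by omega)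
      exact ⟨le_of_lt ((hV l (τ l ω) h1 h2 h3).2.1 ω), hVle l (τ l ω) ω h1 h2 h3⟩
    constructor
    · exact Finset.prod_nonneg fun l hl => (hfac l hl).1
    · refine le_trans (Finset.prod_le_prod (fun l hl => (hfac l hl).1)
        (fun l hl => (hfac l hl).2)) ?_
      have hsplit2 : (∏ l ∈ Finset.Ico κ p, Ml l) * ∏ l ∈ Finset.Ico p L, Ml l = CC :=
        Finset.prod_Ico_consecutive _ hp.1 hp.2
      rw [← hsplit2]
      refine le_mul_of_one_le_right ?_ (hone_le_prod _)
      exact Finset.prod_nonneg fun l _ => le_trans zero_le_one (hMl1 l)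
  have hXle : ∀ (τ : ℕ → Ω → ℕ) (ω : Ω), (∀ p, κ ≤ p → p ≤ L → τ p ω ≤ T + 1) →
      |X τ ω| ≤ W ω := by
    intro τ ω hbd
    refine le_trans (Finset.abs_sum_le_sum_abs _ _) (Finset.sum_le_sum fun p hp => ?_)
    rw [abs_mul]
    obtain ⟨hpr0, hprC⟩ := hprod_bd τ ω hbd p hp
    rw [abs_of_nonneg hpr0]
    simp only [Finset.mem_Icc] at hp
    have hUb : |U p (τ p ω) ω| ≤ ∑ i ∈ Finset.range (T + 2), |U p i ω| := by
      have hmem : τ p ω ∈ Finset.range (T + 2) := Finset.mem_range.2 (by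
        have := hbd p hp.1 hp.2; omega)
      exact Finset.single_le_sum (f := fun i => |U p i ω|) (fun i _ => abs_nonneg _) hmem
    exact mul_le_mul hUb hprC hpr0 (Finset.sum_nonneg fun i _ => abs_nonneg _)
  have hUcompmeas : ∀ (σ : Ω → ℕ) (p : ℕ), p ∈ Finset.Icc κ L → IsStoppingTime ℱ (fun ω => (σ ω : WithTop ℕ)) →
      (∀ ω, σ ω ≤ T + 1) → Integrable (fun ω => U p (σ ω) ω) μ := by
    intro σ p hp hst hbd
    have heq : (fun ω => U p (σ ω) ω) =
        fun ω => ∑ i ∈ Finset.range (T + 2), ({ω' | σ ω' = i}).indicator (U p i) ω := by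
      funext ω
      rw [Finset.sum_eq_single_of_mem (σ ω) (Finset.mem_range.2 (by have := hbd ω; omega))
        (fun i _ hne => Set.indicator_of_notMem
          (fun hm => hne (show σ ω = i by simpa using hm).symm) _)]
      exact (Set.indicator_of_mem (show ω ∈ {ω' | σ ω' = σ ω} from rfl) _).symm
    rw [heq]
    refine integrable_finset_sum _ fun i hi => ?_
    exact ((hUfact p i hp hi).2).indicator ((ℱ.le i) _ (mseq hst i))
  have hVcompmeas : ∀ (σ : Ω → ℕ) (l : ℕ), IsStoppingTime ℱ (fun ω => (σ ω : WithTop ℕ)) →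
      (∀ ω, σ ω ≤ T + 1) → (1 ≤ l) → (l ≤ L - 1) →
      Measurable (fun ω => V l (σ ω) ω) := by
    intro σ l hst hbd h1 h2
    have heq : (fun ω => V l (σ ω) ω) =
        fun ω => ∑ i ∈ Finset.range (T + 2), ({ω' | σ ω' = i}).indicator (V l i) ω := by
      funext ω
      rw [Finset.sum_eq_single_of_mem (σ ω) (Finset.mem_range.2 (by have := hbd ω; omega))
        (fun i _ hne => Set.indicator_of_notMem
          (fun hm => hne (show σ ω = i by simpa using hm).symm) _)]
      exact (Set.indicator_of_mem (show ω ∈ {ω' | σ ω' = σ ω} from rfl) _).symm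
    rw [heq]
    refine Finset.measurable_sum _ fun i hi => ?_
    have hVm : Measurable (V l i) :=
      ((hV l i h1 h2 (by simp only [Finset.mem_range] at hi; omega)).1.measurable).mono
        (ℱ.le i) le_rfl
    exact hVm.indicator ((ℱ.le i) _ (mseq hst i))
  have hXint : ∀ (τ : ℕ → Ω → ℕ), (∀ p, IsStoppingTime ℱ (fun ω => (τ p ω : WithTop ℕ))) →
      (∀ p ω, κ ≤ p → p ≤ L → τ p ω ≤ T + 1) → Integrable (X τ) μ := by
    intro τ hst hbd
    refine integrable_finset_sum _ fun p hp => ?_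
    simp only [Finset.mem_Icc] at hp
    have hUi : Integrable (fun ω => U p (τ p ω) ω) μ :=
      hUcompmeas (τ p) p (Finset.mem_Icc.2 hp) (hst p) (fun ω => hbd p ω hp.1 hp.2)
    have hVm : Measurable (fun ω => ∏ l ∈ Finset.Ico κ p, V l (τ l ω) ω) := by
      refine Finset.measurable_prod _ fun l hl => ?_
      simp only [Finset.mem_Ico] at hl
      exact hVcompmeas (τ l) l (hst l) (fun ω => hbd l ω hl.1 (by omega))
        (le_trans hκ1 hl.1) (by omega)
    have hbdd : ∃ C : ℝ, ∀ ω, ‖∏ l ∈ Finset.Ico κ p, V l (τ l ω) ω‖ ≤ C := by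
      refine ⟨CC, fun ω => ?_⟩
      obtain ⟨h0, hC⟩ := hprod_bd τ ω (fun q hq1 hq2 => hbd q ω hq1 hq2) p (Finset.mem_Icc.2 hp)
      rw [Real.norm_eq_abs, abs_of_nonneg h0]
      exact hC
    have := Integrable.bdd_mul hUi hVm.aestronglyMeasurable (Eventually.of_forall hbdd.choose_spec)
    refine this.congr (Eventually.of_forall fun ω => mul_comm _ _)
  have hXcongr : ∀ (τ σ : ℕ → Ω → ℕ) (ω : Ω), (∀ p, κ ≤ p → p ≤ L → τ p ω = σ p ω) →
      X τ ω = X σ ω := by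
    intro τ σ ω h
    refine Finset.sum_congr rfl fun p hp => ?_
    simp only [Finset.mem_Icc] at hp
    rw [h p hp.1 hp.2]
    congr 1
    refine Finset.prod_congr rfl fun l hl => ?_
    simp only [Finset.mem_Ico] at hl
    rw [h l hl.1 (by omega)]
  -- chains
  set Chain : ℕ → (ℕ → Ω → ℕ) → Prop := fun m τ =>
    (∀ p, IsStoppingTime ℱ (fun ω => (τ p ω : WithTop ℕ))) ∧ (∀ ω, m ≤ τ κ ω) ∧
    (∀ p, κ ≤ p → p < L → ∀ ω, τ p ω ≤ τ (p + 1) ω) ∧ (∀ ω, τ L ω ≤ T + 1) ∧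
    (∀ ω, SatCons v ρ κ L (fun p => τ p ω) ω) with hChaindef
  have hchain_bd : ∀ m τ, Chain m τ → ∀ p (ω : Ω), κ ≤ p → p ≤ L → τ p ω ≤ T + 1 := by
    intro m τ hc p ω h1 h2
    exact le_trans (chain_mono' hc.2.2.1 p L ω h1 h2 le_rfl) (hc.2.2.2.1 ω)
  have hchain_lb : ∀ m τ, Chain m τ → ∀ p (ω : Ω), κ ≤ p → p ≤ L → m ≤ τ p ω := by
    intro m τ hc p ω h1 h2
    exact le_trans (hc.2.1 ω) (chain_mono' hc.2.2.1 κ p ω le_rfl h1 h2)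
  have hmem_aux : ∀ m (g : Ω → ℝ),
      g ∈ auxFamily T L μ ℱ U V v ρ κ m ↔ ∃ τ, Chain m τ ∧ g = μ[X τ|ℱ m] := by
    intro m g
    constructor
    · rintro ⟨τ, h1, h2, h3, h4, h5, h6⟩
      exact ⟨τ, ⟨h1, h2, h3, h4, h5⟩, h6⟩
    · rintro ⟨τ, ⟨h1, h2, h3, h4, h5⟩, h6⟩
      exact ⟨τ, h1, h2, h3, h4, h5, h6⟩
  have hXint' : ∀ m τ, Chain m τ → Integrable (X τ) μ := fun m τ hc =>
    hXint τ hc.1 (fun p ω h1 h2 => hchain_bd m τ hc p ω h1 h2)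
  -- the constant chain
  have hconst_chain : ∀ m, m ≤ T + 1 → Chain m (fun _ _ => T + 1) := by
    intro m hm
    refine ⟨fun p => isStoppingTime_const ℱ (T + 1), fun ω => hm, ?_, fun ω => le_rfl, ?_⟩
    · intro p _ _ ω; exact le_rfl
    · intro ω; exact SatCons_const hκ1 (hvT ω)
  -- members of auxFamily κ m : nonempty, integrable, bounded, directed
  have hFne : ∀ m, m ≤ T + 1 → (auxFamily T L μ ℱ U V v ρ κ m).Nonempty := by
    intro m hm
    exact ⟨_, (hmem_aux m _).2 ⟨_, hconst_chain m hm, rfl⟩⟩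
  have hFint : ∀ m, ∀ g ∈ auxFamily T L μ ℱ U V v ρ κ m, Integrable g μ := by
    intro m g hg
    obtain ⟨τ, hc, rfl⟩ := (hmem_aux m g).1 hg
    exact integrable_condExp
  have hFbdd : ∀ m, ∀ g ∈ auxFamily T L μ ℱ U V v ρ κ m, g ≤ᵐ[μ] μ[W|ℱ m] := by
    intro m g hg
    obtain ⟨τ, hc, rfl⟩ := (hmem_aux m g).1 hg
    refine condExp_mono (hXint' m τ hc) hWint (Eventually.of_forall fun ω => ?_)
    exact le_trans (le_abs_self _) (hXle τ ω (fun p h1 h2 => hchain_bd m τ hc p ω h1 h2))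
  -- directedness via gluing along an ℱ m-measurable set
  have hFdir : ∀ m, m ≤ T + 1 → ∀ g ∈ auxFamily T L μ ℱ U V v ρ κ m,
      ∀ g' ∈ auxFamily T L μ ℱ U V v ρ κ m, ∃ h ∈ auxFamily T L μ ℱ U V v ρ κ m,
        h =ᵐ[μ] fun ω => max (g ω) (g' ω) := by
    intro m hm g hg g' hg'
    obtain ⟨τ, hcτ, rfl⟩ := (hmem_aux m g).1 hg
    obtain ⟨σ, hcσ, rfl⟩ := (hmem_aux m g').1 hg'
    set D : Set Ω := {ω | (μ[X σ|ℱ m]) ω < (μ[X τ|ℱ m]) ω} with hDdef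
    have hDmeas : MeasurableSet[ℱ m] D :=
      measurableSet_lt stronglyMeasurable_condExp.measurable
        stronglyMeasurable_condExp.measurable
    have hDmeas0 : MeasurableSet D := (ℱ.le m) _ hDmeas
    set π : ℕ → Ω → ℕ := fun p ω =>
      if κ ≤ p ∧ p ≤ L then (if ω ∈ D then τ p ω else σ p ω) else T + 1 with hπdef
    have hπeq : ∀ ω p, κ ≤ p → p ≤ L → π p ω = if ω ∈ D then τ p ω else σ p ω := by
      intro ω p h1 h2
      simp only [hπdef, if_pos (⟨h1, h2⟩ : κ ≤ p ∧ p ≤ L)]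
    have hcπ : Chain m π := by
      refine ⟨?_, ?_, ?_, ?_, ?_⟩
      · intro p; refine ist_of fun t => ?_
        by_cases hp : κ ≤ p ∧ p ≤ L
        · by_cases hmt : m ≤ t
          · have : {ω | π p ω ≤ t} =
                (D ∩ {ω | τ p ω ≤ t}) ∪ (Dᶜ ∩ {ω | σ p ω ≤ t}) := by
              ext ω
              by_cases hD : ω ∈ D <;>
                simp [hπeq ω p hp.1 hp.2, hD]
            rw [this]
            exact ((ℱ.mono hmt _ hDmeas).inter (st_le (hcτ.1 p) t)).union
              ((ℱ.mono hmt _ hDmeas.compl).inter (st_le (hcσ.1 p) t))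
          · have : {ω | π p ω ≤ t} = ∅ := by
              ext ω
              simp only [Set.mem_setOf_eq, Set.mem_empty_iff_false, iff_false, not_le]
              rw [hπeq ω p hp.1 hp.2]
              by_cases hD : ω ∈ D
              · simp only [if_pos hD]
                have := hchain_lb m τ hcτ p ω hp.1 hp.2; omega
              · simp only [if_neg hD]
                have := hchain_lb m σ hcσ p ω hp.1 hp.2; omega
            rw [this]
            exact @MeasurableSet.empty _ (ℱ t)
        · have : {ω | π p ω ≤ t} = if T + 1 ≤ t then Set.univ else ∅ := by
            ext ω
            simp only [hπdef, if_neg hp, Set.mem_setOf_eq]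
            by_cases ht : T + 1 ≤ t <;> simp [ht]
          rw [this]
          by_cases ht : T + 1 ≤ t
          · rw [if_pos ht]; exact MeasurableSet.univ
          · rw [if_neg ht]; exact @MeasurableSet.empty _ (ℱ t)
      · intro ω
        rw [hπeq ω κ le_rfl hκL]
        by_cases hD : ω ∈ D
        · rw [if_pos hD]; exact hcτ.2.1 ω
        · rw [if_neg hD]; exact hcσ.2.1 ω
      · intro p h1 h2 ω
        rw [hπeq ω p h1 (by omega), hπeq ω (p + 1) (by omega) (by omega)]
        by_cases hD : ω ∈ D
        · simp only [if_pos hD]; exact hcτ.2.2.1 p h1 h2 ω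
        · simp only [if_neg hD]; exact hcσ.2.2.1 p h1 h2 ω
      · intro ω
        rw [hπeq ω L hκL le_rfl]
        by_cases hD : ω ∈ D
        · rw [if_pos hD]; exact hcτ.2.2.2.1 ω
        · rw [if_neg hD]; exact hcσ.2.2.2.1 ω
      · intro ω
        by_cases hD : ω ∈ D
        · refine SatCons_congr (fun p h1 h2 => ?_) (hcτ.2.2.2.2 ω)
          rw [hπeq ω p h1 h2, if_pos hD]
        · refine SatCons_congr (fun p h1 h2 => ?_) (hcσ.2.2.2.2 ω)
          rw [hπeq ω p h1 h2, if_neg hD]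
    refine ⟨μ[X π|ℱ m], (hmem_aux m _).2 ⟨π, hcπ, rfl⟩, ?_⟩
    have hXπ : X π = fun ω => D.indicator (X τ) ω + Dᶜ.indicator (X σ) ω := by
      funext ω
      by_cases hD : ω ∈ D
      · rw [Set.indicator_of_mem hD, Set.indicator_of_notMem (by simpa using hD)]
        rw [add_zero]
        exact hXcongr π τ ω fun p h1 h2 => by rw [hπeq ω p h1 h2, if_pos hD]
      · rw [Set.indicator_of_notMem hD, Set.indicator_of_mem (by simpa using hD)]
        rw [zero_add]
        exact hXcongr π σ ω fun p h1 h2 => by rw [hπeq ω p h1 h2, if_neg hD]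
    have h1 : μ[X π|ℱ m] =ᵐ[μ] fun ω =>
        D.indicator (μ[X τ|ℱ m]) ω + Dᶜ.indicator (μ[X σ|ℱ m]) ω := by
      rw [hXπ]
      have hadd := condExp_add (μ := μ) (m := ℱ m)
        ((hXint' m τ hcτ).indicator hDmeas0)
        ((hXint' m σ hcσ).indicator hDmeas0.compl)
      refine hadd.trans ?_
      have hiτ := condExp_indicator (μ := μ) (m := ℱ m) (hXint' m τ hcτ) hDmeas
      have hiσ := condExp_indicator (μ := μ) (m := ℱ m) (hXint' m σ hcσ) hDmeas.compl
      filter_upwards [hiτ, hiσ] with ω e1 e2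
      simp only [Pi.add_apply, e1, e2]
    refine h1.trans (Eventually.of_forall fun ω => ?_)
    show D.indicator (μ[X τ|ℱ m]) ω + Dᶜ.indicator (μ[X σ|ℱ m]) ω
      = max ((μ[X τ|ℱ m]) ω) ((μ[X σ|ℱ m]) ω)
    by_cases hD : ω ∈ D
    · rw [Set.indicator_of_mem hD, Set.indicator_of_notMem (by simpa using hD), add_zero]
      have : (μ[X σ|ℱ m]) ω < (μ[X τ|ℱ m]) ω := hD
      rw [max_eq_left (le_of_lt this)]
    · rw [Set.indicator_of_notMem hD, Set.indicator_of_mem (by simpa using hD), zero_add]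
      have : ¬ (μ[X σ|ℱ m]) ω < (μ[X τ|ℱ m]) ω := hD
      rw [max_eq_right (not_lt.1 this)]
  -- key step: extract monotone approximating sequences for each m ∈ M
  have hkey : ∀ m : ℕ, ∃ (Y0 : Ω → ℝ) (u : ℕ → Ω → ℝ), m ∈ M →
      (∀ i, u i ∈ auxFamily T L μ ℱ U V v ρ κ m) ∧
      (∀ᵐ ω ∂μ, Monotone fun i => u i ω) ∧
      (∀ᵐ ω ∂μ, Tendsto (fun i => u i ω) atTop (𝓝 (Y0 ω))) ∧
      Integrable Y0 μ ∧ (∀ i, u i ≤ᵐ[μ] Y0) ∧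
      (∀ f ∈ auxFamily T L μ ℱ U V v ρ κ m, f ≤ᵐ[μ] Y0) ∧
      Ystar κ m =ᵐ[μ] Y0 := by
    intro m
    by_cases hm : m ∈ M
    · have hmT := hMT m hm
      obtain ⟨Y0, u, hu, hmono, htds, hint, huY, hdom⟩ :=
        exists_monotone_limit (hFne m hmT) (hFint m) integrable_condExp (hFbdd m)
          (hFdir m hmT)
      refine ⟨Y0, u, fun _ => ⟨hu, hmono, htds, hint, huY, hdom, ?_⟩⟩
      -- Ystar κ m =ᵐ Y0
      have h1 : Ystar κ m ≤ᵐ[μ] Y0 := (hY κ m hκ1 hκL hmT).2 Y0 hdom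
      have h2 : Y0 ≤ᵐ[μ] Ystar κ m := by
        have hall : ∀ᵐ ω ∂μ, ∀ i, u i ω ≤ Ystar κ m ω :=
          (ae_all_iff).2 fun i => (hY κ m hκ1 hκL hmT).1 (u i) (hu i)
        filter_upwards [htds, hall] with ω htd hle
        exact le_of_tendsto htd (Eventually.of_forall hle)
      filter_upwards [h1, h2] with ω e1 e2
      exact le_antisymm e1 e2
    · exact ⟨0, fun _ => 0, fun h => absurd h hm⟩
  choose Y0 u hkey' using hkey
  -- chains realizing u m i
  have hchains : ∀ m i, ∃ c, m ∈ M → Chain m c ∧ u m i = μ[X c|ℱ m] := by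
    intro m i
    by_cases hm : m ∈ M
    · obtain ⟨c, hc, heq⟩ := (hmem_aux m (u m i)).1 ((hkey' m hm).1 i)
      exact ⟨c, fun _ => ⟨hc, heq⟩⟩
    · exact ⟨fun _ _ => T + 1, fun h => absurd h hm⟩
  choose c hc using hchains
  -- the limit random variable
  set Z0 : Ω → ℝ := fun ω => ∑ m ∈ M, (A m).indicator (Y0 m) ω with hZ0def
  have hZ0int : Integrable Z0 μ := by
    refine integrable_finset_sum _ fun m hm => ?_
    exact ((hkey' m hm).2.2.2.1).indicator (hAmeas0 m)
  have hZeq : (fun ω => Ystar κ (ρ r ω) ω) =ᵐ[μ] Z0 := by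
    have hae : ∀ᵐ ω ∂μ, ∀ m ∈ M, Ystar κ m ω = Y0 m ω := by
      rw [eventually_all_finset]
      intro m hm
      exact (hkey' m hm).2.2.2.2.2.2
    filter_upwards [hae] with ω h
    simp only [hZ0def, hsplit]
    exact h (ρ r ω) (hρmem ω)
  -- it suffices to treat μ[Z0|ℱ r]
  refine isEssSupFamily_congr (condExp_congr_ae hZeq) ?_
  -- the tower/indicator identity
  have htower : ∀ m ∈ M, ∀ h : Ω → ℝ, Integrable h μ →
      μ[(A m).indicator h|ℱ r] =ᵐ[μ] μ[(A m).indicator (μ[h|ℱ m])|ℱ r] := by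
    intro m hm h hint
    have h1 : μ[(A m).indicator h|ℱ r]
        =ᵐ[μ] μ[(μ[(A m).indicator h|ℱ m])|ℱ r] :=
      (condExp_condExp_of_le (ℱ.mono (hMr m hm)) (ℱ.le m)).symm
    refine h1.trans (condExp_congr_ae ?_)
    exact condExp_indicator hint (hAmeas m)
  constructor
  · -- upper bound: every member of the family is ≤ᵐ μ[Z0|ℱ r]
    rintro f ⟨τ, h1, h2, h3, h4, h5, rfl⟩
    have hcS : ∀ p (ω : Ω), κ ≤ p → p ≤ L → τ p ω ≤ T + 1 := by
      intro p ω hp1 hp2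
      exact le_trans (chain_mono' h3 p L ω hp1 hp2 le_rfl) (h4 ω)
    set τm : ℕ → ℕ → Ω → ℕ := fun m p ω =>
      if κ ≤ p ∧ p ≤ L then (if ρ r ω = m then τ p ω else T + 1) else T + 1 with hτmdef
    have hτmeq : ∀ m (ω : Ω) p, κ ≤ p → p ≤ L →
        τm m p ω = if ρ r ω = m then τ p ω else T + 1 := by
      intro m ω p hp1 hp2
      simp only [hτmdef, if_pos (⟨hp1, hp2⟩ : κ ≤ p ∧ p ≤ L)]
    have hτm_chain : ∀ m ∈ M, Chain m (τm m) := by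
      intro m hm
      have hmT := hMT m hm
      refine ⟨?_, ?_, ?_, ?_, ?_⟩
      · intro p; refine ist_of fun t => ?_
        by_cases hp : κ ≤ p ∧ p ≤ L
        · by_cases hmt : m ≤ t
          · have : {ω | τm m p ω ≤ t} =
                (A m ∩ {ω | τ p ω ≤ t}) ∪ ((A m)ᶜ ∩ {ω | (T+1:ℕ) ≤ t}) := by
              ext ω
              by_cases hA : ρ r ω = m <;>
                simp [hτmeq m ω p hp.1 hp.2, hA, hAdef]
            rw [this]
            refine ((ℱ.mono hmt _ (hAmeas m)).inter (st_le (h1 p) t)).union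
              ((ℱ.mono hmt _ (hAmeas m).compl).inter ?_)
            by_cases ht : T + 1 ≤ t
            · have : {ω : Ω | (T+1:ℕ) ≤ t} = Set.univ := by
                ext ω; simp [ht]
              rw [this]; exact MeasurableSet.univ
            · have : {ω : Ω | (T+1:ℕ) ≤ t} = ∅ := by
                ext ω; simp [ht]
              rw [this]; exact @MeasurableSet.empty _ (ℱ t)
          · have : {ω | τm m p ω ≤ t} = ∅ := by
              ext ω
              simp only [Set.mem_setOf_eq, Set.mem_empty_iff_false, iff_false, not_le]
              rw [hτmeq m ω p hp.1 hp.2]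
              by_cases hA : ρ r ω = m
              · simp only [if_pos hA]
                have h2' := h2 ω
                have := chain_mono' h3 κ p ω le_rfl hp.1 hp.2
                omega
              · simp only [if_neg hA]
                omega
            rw [this]
            exact @MeasurableSet.empty _ (ℱ t)
        · have : {ω | τm m p ω ≤ t} = if T + 1 ≤ t then Set.univ else ∅ := by
            ext ω
            simp only [hτmdef, if_neg hp, Set.mem_setOf_eq]
            by_cases ht : T + 1 ≤ t <;> simp [ht]
          rw [this]
          by_cases ht : T + 1 ≤ t
          · rw [if_pos ht]; exact MeasurableSet.univ
          · rw [if_neg ht]; exact @MeasurableSet.empty _ (ℱ t)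
      · intro ω
        rw [hτmeq m ω κ le_rfl hκL]
        by_cases hA : ρ r ω = m
        · rw [if_pos hA, ← hA]; exact h2 ω
        · rw [if_neg hA]; exact hmT
      · intro p hp1 hp2 ω
        rw [hτmeq m ω p hp1 (by omega), hτmeq m ω (p + 1) (by omega) (by omega)]
        by_cases hA : ρ r ω = m
        · simp only [if_pos hA]; exact h3 p hp1 hp2 ω
        · simp only [if_neg hA]; exact le_rfl
      · intro ω
        rw [hτmeq m ω L hκL le_rfl]
        by_cases hA : ρ r ω = m
        · rw [if_pos hA]; exact h4 ω
        · rw [if_neg hA]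
      · intro ω
        by_cases hA : ρ r ω = m
        · refine SatCons_congr (fun p hp1 hp2 => ?_) (h5 ω)
          rw [hτmeq m ω p hp1 hp2, if_pos hA]
        · refine SatCons_congr (fun p hp1 hp2 => ?_)
            (SatCons_const hκ1 (hvT ω))
          rw [hτmeq m ω p hp1 hp2, if_neg hA]
    have hτmint : ∀ m ∈ M, Integrable (X (τm m)) μ := fun m hm =>
      hXint' m (τm m) (hτm_chain m hm)
    -- decomposition of the payoff
    have hdecomp : X τ = fun ω => ∑ m ∈ M, (A m).indicator (X (τm m)) ω := by
      funext ω
      simp only [hsplit]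
      refine (hXcongr τ (τm (ρ r ω)) ω fun p hp1 hp2 => ?_)
      rw [hτmeq (ρ r ω) ω p hp1 hp2, if_pos rfl]
    -- bound each conditional piece by Y0 m
    have hgm_le : ∀ m ∈ M, μ[X (τm m)|ℱ m] ≤ᵐ[μ] Y0 m := by
      intro m hm
      exact (hkey' m hm).2.2.2.2.2.1 _ ((hmem_aux m _).2 ⟨τm m, hτm_chain m hm, rfl⟩)
    have e1 : μ[X τ|ℱ r] =ᵐ[μ] ∑ m ∈ M, μ[(A m).indicator (X (τm m))|ℱ r] := by
      rw [hdecomp]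
      have := condExp_finset_sum (μ := μ) (m := ℱ r)
        (f := fun m => (A m).indicator (X (τm m))) (s := M)
        (fun m hm => (hτmint m hm).indicator (hAmeas0 m))
      refine EventuallyEq.trans ?_ this
      apply condExp_congr_ae
      exact Eventually.of_forall fun ω => by simp [Finset.sum_apply]
    have e2 : (∑ m ∈ M, μ[(A m).indicator (X (τm m))|ℱ r]) =ᵐ[μ]
        ∑ m ∈ M, μ[(A m).indicator (μ[X (τm m)|ℱ m])|ℱ r] := by
      have : ∀ᵐ ω ∂μ, ∀ m ∈ M,
          (μ[(A m).indicator (X (τm m))|ℱ r]) ω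
            = (μ[(A m).indicator (μ[X (τm m)|ℱ m])|ℱ r]) ω := by
        rw [eventually_all_finset]
        intro m hm
        exact htower m hm _ (hτmint m hm)
      filter_upwards [this] with ω h
      simp only [Finset.sum_apply]
      exact Finset.sum_congr rfl fun m hm => h m hm
    have e3 : (∑ m ∈ M, μ[(A m).indicator (μ[X (τm m)|ℱ m])|ℱ r]) =ᵐ[μ]
        μ[fun ω => ∑ m ∈ M, (A m).indicator (μ[X (τm m)|ℱ m]) ω|ℱ r] := by
      have := condExp_finset_sum (μ := μ) (m := ℱ r)
        (f := fun m => (A m).indicator (μ[X (τm m)|ℱ m])) (s := M)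
        (fun m hm => integrable_condExp.indicator (hAmeas0 m))
      refine EventuallyEq.trans this.symm ?_
      apply condExp_congr_ae
      exact Eventually.of_forall fun ω => by simp [Finset.sum_apply]
    have e4 : μ[fun ω => ∑ m ∈ M, (A m).indicator (μ[X (τm m)|ℱ m]) ω|ℱ r]
        ≤ᵐ[μ] μ[Z0|ℱ r] := by
      refine condExp_mono ?_ hZ0int ?_
      · refine integrable_finset_sum _ fun m hm => ?_
        exact integrable_condExp.indicator (hAmeas0 m)
      · have : ∀ᵐ ω ∂μ, ∀ m ∈ M, (μ[X (τm m)|ℱ m]) ω ≤ Y0 m ω := by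
          rw [eventually_all_finset]
          intro m hm
          exact hgm_le m hm
        filter_upwards [this] with ω h
        refine Finset.sum_le_sum fun m hm => ?_
        by_cases hA : ω ∈ A m
        · rw [Set.indicator_of_mem hA, Set.indicator_of_mem hA]
          exact h m hm
        · rw [Set.indicator_of_notMem hA, Set.indicator_of_notMem hA]
    calc μ[X τ|ℱ r] =ᵐ[μ] _ := e1
      _ =ᵐ[μ] _ := e2
      _ =ᵐ[μ] _ := e3
      _ ≤ᵐ[μ] μ[Z0|ℱ r] := e4
  · -- minimality
    intro Z' hZ'
    -- glued chains
    set πg : ℕ → ℕ → Ω → ℕ := fun i p ω =>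
      if κ ≤ p ∧ p ≤ L then c (ρ r ω) i p ω else T + 1 with hπgdef
    have hπgeq : ∀ i (ω : Ω) p, κ ≤ p → p ≤ L → πg i p ω = c (ρ r ω) i p ω := by
      intro i ω p hp1 hp2
      simp only [hπgdef, if_pos (⟨hp1, hp2⟩ : κ ≤ p ∧ p ≤ L)]
    have hcc : ∀ m ∈ M, ∀ i, Chain m (c m i) := fun m hm i => ((hc m i) hm).1
    have hπg_st : ∀ i p, IsStoppingTime ℱ (fun ω => (πg i p ω : WithTop ℕ)) := by
      intro i p; refine ist_of fun t => ?_
      by_cases hp : κ ≤ p ∧ p ≤ L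
      · have : {ω | πg i p ω ≤ t} =
            ⋃ m ∈ M, (A m ∩ {ω | c m i p ω ≤ t}) := by
          ext ω
          simp only [Set.mem_setOf_eq, Set.mem_iUnion, Set.mem_inter_iff]
          constructor
          · intro h
            refine ⟨ρ r ω, hρmem ω, rfl, ?_⟩
            rw [← hπgeq i ω p hp.1 hp.2]; exact h
          · rintro ⟨m, hm, hA, hle⟩
            rw [hπgeq i ω p hp.1 hp.2, (show ρ r ω = m from hA)]
            exact hle
        rw [this]
        refine Finset.measurableSet_biUnion _ fun m hm => ?_
        by_cases hmt : m ≤ t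
        · exact (ℱ.mono hmt _ (hAmeas m)).inter (st_le ((hcc m hm i).1 p) t)
        · have : A m ∩ {ω | c m i p ω ≤ t} = ∅ := by
            ext ω
            simp only [Set.mem_inter_iff, Set.mem_empty_iff_false, iff_false]
            rintro ⟨hA, hle⟩
            have := hchain_lb m (c m i) (hcc m hm i) p ω hp.1 hp.2
            simp only [Set.mem_setOf_eq] at hle
            omega
          rw [this]
          exact @MeasurableSet.empty _ (ℱ t)
      · have : {ω | πg i p ω ≤ t} = if T + 1 ≤ t then Set.univ else ∅ := by
          ext ω
          simp only [hπgdef, if_neg hp, Set.mem_setOf_eq]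
          by_cases ht : T + 1 ≤ t <;> simp [ht]
        rw [this]
        by_cases ht : T + 1 ≤ t
        · rw [if_pos ht]; exact MeasurableSet.univ
        · rw [if_neg ht]; exact @MeasurableSet.empty _ (ℱ t)
    have hgmem : ∀ i, μ[X (πg i)|ℱ r] ∈
        { g | ∃ τ : ℕ → Ω → ℕ,
          (∀ p, IsStoppingTime ℱ (fun ω => (τ p ω : WithTop ℕ))) ∧
          (∀ ω, ρ r ω ≤ τ κ ω) ∧
          (∀ p, κ ≤ p → p < L → ∀ ω, τ p ω ≤ τ (p + 1) ω) ∧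
          (∀ ω, τ L ω ≤ T + 1) ∧
          (∀ ω, SatCons v ρ κ L (fun p => τ p ω) ω) ∧
          g = μ[(fun ω => ∑ p ∈ Finset.Icc κ L,
              U p (τ p ω) ω * ∏ l ∈ Finset.Ico κ p, V l (τ l ω) ω)|ℱ r] } := by
      intro i
      refine ⟨πg i, hπg_st i, ?_, ?_, ?_, ?_, rfl⟩
      · intro ω
        rw [hπgeq i ω κ le_rfl hκL]
        exact (hcc (ρ r ω) (hρmem ω) i).2.1 ω
      · intro p hp1 hp2 ω
        rw [hπgeq i ω p hp1 (by omega), hπgeq i ω (p + 1) (by omega) (by omega)]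
        exact (hcc (ρ r ω) (hρmem ω) i).2.2.1 p hp1 hp2 ω
      · intro ω
        rw [hπgeq i ω L hκL le_rfl]
        exact (hcc (ρ r ω) (hρmem ω) i).2.2.2.1 ω
      · intro ω
        refine SatCons_congr (fun p hp1 hp2 => ?_)
          ((hcc (ρ r ω) (hρmem ω) i).2.2.2.2 ω)
        rw [hπgeq i ω p hp1 hp2]
    have hπg_chainbd : ∀ i p (ω : Ω), κ ≤ p → p ≤ L → πg i p ω ≤ T + 1 := by
      intro i p ω hp1 hp2
      rw [hπgeq i ω p hp1 hp2]
      exact hchain_bd (ρ r ω) (c (ρ r ω) i) (hcc (ρ r ω) (hρmem ω) i) p ω hp1 hp2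
    have hπgint : ∀ i, Integrable (X (πg i)) μ :=
      fun i => hXint (πg i) (hπg_st i) (fun p ω h1 h2 => hπg_chainbd i p ω h1 h2)
    -- h i = the glued conditional payoffs at the refraction time
    set h : ℕ → Ω → ℝ := fun i ω => ∑ m ∈ M, (A m).indicator (u m i) ω with hhdef
    have humint : ∀ m ∈ M, ∀ i, Integrable (u m i) μ := fun m hm i =>
      hFint m _ ((hkey' m hm).1 i)
    have hhint : ∀ i, Integrable (h i) μ := by
      intro i
      refine integrable_finset_sum _ fun m hm => ?_
      exact (humint m hm i).indicator (hAmeas0 m)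
    have hXdecomp : ∀ i, X (πg i) = fun ω => ∑ m ∈ M, (A m).indicator (X (c m i)) ω := by
      intro i
      funext ω
      simp only [hsplit]
      refine hXcongr (πg i) (c (ρ r ω) i) ω fun p hp1 hp2 => ?_
      rw [hπgeq i ω p hp1 hp2]
    have hXcint : ∀ m ∈ M, ∀ i, Integrable (X (c m i)) μ := fun m hm i =>
      hXint' m _ (hcc m hm i)
    have hgi_eq : ∀ i, μ[X (πg i)|ℱ r] =ᵐ[μ] μ[h i|ℱ r] := by
      intro i
      have e1 : μ[X (πg i)|ℱ r] =ᵐ[μ] ∑ m ∈ M, μ[(A m).indicator (X (c m i))|ℱ r] := by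
        rw [hXdecomp i]
        have := condExp_finset_sum (μ := μ) (m := ℱ r)
          (f := fun m => (A m).indicator (X (c m i))) (s := M)
          (fun m hm => (hXcint m hm i).indicator (hAmeas0 m))
        refine EventuallyEq.trans ?_ this
        apply condExp_congr_ae
        exact Eventually.of_forall fun ω => by simp [Finset.sum_apply]
      have e2 : (∑ m ∈ M, μ[(A m).indicator (X (c m i))|ℱ r]) =ᵐ[μ]
          ∑ m ∈ M, μ[(A m).indicator (u m i)|ℱ r] := by
        have : ∀ᵐ ω ∂μ, ∀ m ∈ M,
            (μ[(A m).indicator (X (c m i))|ℱ r]) ω = (μ[(A m).indicator (u m i)|ℱ r]) ω := by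
          rw [eventually_all_finset]
          intro m hm
          have := htower m hm (X (c m i)) (hXcint m hm i)
          rw [← ((hc m i) hm).2] at this
          exact this
        filter_upwards [this] with ω hω
        simp only [Finset.sum_apply]
        exact Finset.sum_congr rfl fun m hm => hω m hm
      have e3 : (∑ m ∈ M, μ[(A m).indicator (u m i)|ℱ r]) =ᵐ[μ] μ[h i|ℱ r] := by
        have := condExp_finset_sum (μ := μ) (m := ℱ r)
          (f := fun m => (A m).indicator (u m i)) (s := M)
          (fun m hm => (humint m hm i).indicator (hAmeas0 m))
        refine EventuallyEq.trans this.symm ?_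
        apply condExp_congr_ae
        exact Eventually.of_forall fun ω => by simp [hhdef, Finset.sum_apply]
      exact (e1.trans e2).trans e3
    -- a.e. monotone convergence of h i to Z0
    have hMae : ∀ᵐ ω ∂μ, ∀ m ∈ M, (Monotone fun i => u m i ω) ∧
        Tendsto (fun i => u m i ω) atTop (𝓝 (Y0 m ω)) ∧ ∀ i, u m i ω ≤ Y0 m ω := by
      rw [eventually_all_finset]
      intro m hm
      have e1 := (hkey' m hm).2.1
      have e2 := (hkey' m hm).2.2.1
      have e3 : ∀ᵐ ω ∂μ, ∀ i, u m i ω ≤ Y0 m ω :=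
        (ae_all_iff).2 fun i => (hkey' m hm).2.2.2.2.1 i
      filter_upwards [e1, e2, e3] with ω a1 a2 a3
      exact ⟨a1, a2, a3⟩
    have hhmono : ∀ᵐ ω ∂μ, Monotone fun i => h i ω := by
      filter_upwards [hMae] with ω hω
      intro i j hij
      simp only [hhdef, hsplit]
      exact (hω (ρ r ω) (hρmem ω)).1 hij
    have hhtds : ∀ᵐ ω ∂μ, Tendsto (fun i => h i ω) atTop (𝓝 (Z0 ω)) := by
      filter_upwards [hMae] with ω hω
      simp only [hhdef, hZ0def, hsplit]
      exact (hω (ρ r ω) (hρmem ω)).2.1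
    have hhle : ∀ᵐ ω ∂μ, ∀ i, h i ω ≤ Z0 ω := by
      filter_upwards [hMae] with ω hω i
      simp only [hhdef, hZ0def, hsplit]
      exact (hω (ρ r ω) (hρmem ω)).2.2 i
    -- integrals converge
    have hhint_tendsto : Tendsto (fun i => ∫ ω, h i ω ∂μ) atTop (𝓝 (∫ ω, Z0 ω ∂μ)) :=
      integral_tendsto_of_tendsto_of_monotone hhint hZ0int hhmono hhtds
    -- conditional expectations converge a.e.
    have hce_int : ∀ i, Integrable (μ[h i|ℱ r]) μ := fun i => integrable_condExp
    have hce_mono : ∀ᵐ ω ∂μ, Monotone fun i => (μ[h i|ℱ r]) ω := by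
      have : ∀ i, μ[h i|ℱ r] ≤ᵐ[μ] μ[h (i + 1)|ℱ r] := by
        intro i
        refine condExp_mono (hhint i) (hhint (i + 1)) ?_
        filter_upwards [hhmono] with ω hω
        exact hω (Nat.le_succ i)
      have := (ae_all_iff).2 this
      filter_upwards [this] with ω hω
      exact monotone_nat_of_le_succ hω
    have hce_le : ∀ᵐ ω ∂μ, ∀ i, (μ[h i|ℱ r]) ω ≤ (μ[Z0|ℱ r]) ω := by
      refine (ae_all_iff).2 fun i => ?_
      refine condExp_mono (hhint i) hZ0int ?_
      filter_upwards [hhle] with ω hω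
      exact hω i
    have hce_int_tendsto : Tendsto (fun i => ∫ ω, (μ[h i|ℱ r]) ω ∂μ) atTop
        (𝓝 (∫ ω, (μ[Z0|ℱ r]) ω ∂μ)) := by
      have h1 : ∀ i, ∫ ω, (μ[h i|ℱ r]) ω ∂μ = ∫ ω, h i ω ∂μ :=
        fun i => integral_condExp (ℱ.le r)
      have h2 : ∫ ω, (μ[Z0|ℱ r]) ω ∂μ = ∫ ω, Z0 ω ∂μ := integral_condExp (ℱ.le r)
      simp only [h1, h2]
      exact hhint_tendsto
    have hce_tendsto : ∀ᵐ ω ∂μ, Tendsto (fun i => (μ[h i|ℱ r]) ω) atTop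
        (𝓝 ((μ[Z0|ℱ r]) ω)) :=
      tendsto_of_integral_tendsto_of_monotone hce_int integrable_condExp
        hce_int_tendsto hce_mono hce_le
    -- conclude
    have hgle : ∀ᵐ ω ∂μ, ∀ i, (μ[h i|ℱ r]) ω ≤ Z' ω := by
      refine (ae_all_iff).2 fun i => ?_
      have := hZ' _ (hgmem i)
      filter_upwards [this, hgi_eq i] with ω a1 a2
      rw [← a2]; exact a1
    filter_upwards [hce_tendsto, hgle] with ω a1 a2
    exact le_of_tendsto a1 (Eventually.of_forall a2)
end
end
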